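/- arXiv:1309.6213 — 9 statements merged into one kernel-verified Lean document; each statement's English description precedes it below -/
import Mathlib

section
/- Suppose each τ_i is non-decreasing, p : [t_0,∞) → [0,∞) is continuous with p_i(t) ≥ p(t) for all t ≥ t_0 and each i = 1,…,m, and limsup_{t→∞} ∏_{j=1}^m ∫_{τ_j(t)}^{t} p(s) ds > 1/m^m. Then every solution of the equation x'(t) + ∑_{i=1}^m p_i(t) x(τ_i(t)) = 0 is oscillatory. -/
open Real Filter MeasureTheory

lemma amgm_aux (m : ℕ) (hm : 1 ≤ m) (z : Fin m → ℝ) (hz : ∀ i, 0 ≤ z i) :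
    ∏ i, z i ≤ ((∑ i, z i) / m) ^ m := by
  have hm' : (0:ℝ) < m := by exact_mod_cast hm
  have h := Real.geom_mean_le_arith_mean_weighted Finset.univ (fun _ => (m:ℝ)⁻¹) z
    (fun i _ => by positivity) (by simp [Finset.card_univ]; field_simp) (fun i _ => hz i)
  have h2 : (∑ i, (m:ℝ)⁻¹ * z i) = (∑ i, z i) / m := by
    rw [← Finset.mul_sum]; ring
  rw [h2] at h
  have hL : 0 ≤ ∏ i, z i ^ ((m:ℝ)⁻¹) :=
    Finset.prod_nonneg fun i _ => Real.rpow_nonneg (hz i) _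
  have h3 := pow_le_pow_left₀ hL h m
  rw [← Finset.prod_pow] at h3
  calc ∏ i, z i = ∏ i, (z i ^ ((m:ℝ)⁻¹)) ^ m := by
        refine Finset.prod_congr rfl fun i _ => ?_
        rw [← Real.rpow_natCast (z i ^ ((m:ℝ)⁻¹)) m, ← Real.rpow_mul (hz i),
          inv_mul_cancel₀ (by positivity), Real.rpow_one]
    _ ≤ _ := h3

lemma key_ineq (m : ℕ) (hm : 1 ≤ m) (a y : Fin m → ℝ) (c : ℝ) (hc : 0 < c)
    (ha : ∀ i, 0 ≤ a i) (hy : ∀ i, 0 < y i)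
    (h : ∀ i, a i * (∑ k, y k) ≤ y i - c) :
    ∏ i, a i < 1 / (m:ℝ) ^ m := by
  set S := ∑ k, y k with hS
  have hm' : (0:ℝ) < m := by exact_mod_cast hm
  have hSpos : 0 < S := Finset.sum_pos (fun i _ => hy i) ⟨⟨0, hm⟩, Finset.mem_univ _⟩
  have hz : ∀ i, 0 ≤ (y i - c) / S := by
    intro i
    have := (h i)
    have h0 : 0 ≤ y i - c := le_trans (mul_nonneg (ha i) hSpos.le) this
    positivity
  have h1 : ∏ i, a i ≤ ∏ i, (y i - c) / S := by
    refine Finset.prod_le_prod (fun i _ => ha i) fun i _ => ?_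
    rw [le_div_iff₀ hSpos]; exact h i
  have h2 : ∏ i, (y i - c) / S ≤ ((∑ i, (y i - c) / S) / m) ^ m := amgm_aux m hm _ hz
  have h3 : (∑ i, (y i - c) / S) = (S - m * c) / S := by
    rw [← Finset.sum_div]
    congr 1
    rw [Finset.sum_sub_distrib]
    simp [Finset.card_univ, mul_comm, hS]
  have h4 : ((S - m * c) / S / m) ^ m < (1 / m) ^ m := by
    apply pow_lt_pow_left₀ _ _ (by omega)
    · rw [div_div, div_lt_div_iff₀ (by positivity) hm', one_mul]
      nlinarith [mul_pos hm' (mul_pos hm' hc)]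
    · have h5 : 0 ≤ S - m * c := by
        have : S - m * c = ∑ i, (y i - c) := by
          rw [Finset.sum_sub_distrib]; simp [Finset.card_univ, mul_comm, hS]
        rw [this]
        exact Finset.sum_nonneg fun i _ =>
          le_trans (mul_nonneg (ha i) hSpos.le) (h i)
      positivity
  rw [h3] at h2
  calc ∏ i, a i ≤ _ := h1
    _ ≤ _ := h2
    _ < (1/m)^m := h4
    _ = 1 / (m:ℝ)^m := by rw [div_pow, one_pow]

lemma osc_aux (m : ℕ) (hm : 1 ≤ m) (t0 : ℝ)
    (p : Fin m → ℝ → ℝ) (τ : Fin m → ℝ → ℝ)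
    (hp_cont : ∀ i, ContinuousOn (p i) (Set.Ici t0))
    (hp_nonneg : ∀ i t, t0 ≤ t → 0 ≤ p i t)
    (hτ_cont : ∀ i, ContinuousOn (τ i) (Set.Ici t0))
    (hτ_le : ∀ i t, t0 ≤ t → τ i t ≤ t)
    (hτ_tendsto : ∀ i, Tendsto (τ i) atTop atTop)
    (hτ_mono : ∀ i, MonotoneOn (τ i) (Set.Ici t0))
    (p₀ : ℝ → ℝ)
    (hp₀_cont : ContinuousOn p₀ (Set.Ici t0))
    (hp₀_nonneg : ∀ t, t0 ≤ t → 0 ≤ p₀ t)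
    (hp₀_le : ∀ i t, t0 ≤ t → p₀ t ≤ p i t)
    (hlimsup : Filter.limsup (fun t : ℝ =>
        ∏ j : Fin m, ∫ s in τ j t..t, p₀ s) atTop > 1 / (m : ℝ) ^ m)
    (x : ℝ → ℝ) (hx_cont : Continuous x)
    (T : ℝ) (hTt0 : t0 ≤ T)
    (hder : ∀ t, T ≤ t → HasDerivAt x (-(∑ i : Fin m, p i t * x (τ i t))) t)
    (T1 : ℝ) (hT1 : ∀ t, T1 ≤ t → 0 < x t) : False := by
  classical
  set A := max T T1 with hA
  have hAt0 : t0 ≤ A := hTt0.trans (le_max_left _ _)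
  have hAT : T ≤ A := le_max_left _ _
  have hAT1 : T1 ≤ A := le_max_right _ _
  -- step: find thresholds beyond which all delays exceed a given bound
  have step : ∀ r : ℝ, ∃ s, r ≤ s ∧ ∀ t, s ≤ t → ∀ i, r ≤ τ i t := by
    intro r
    have h1 : ∀ᶠ t in atTop, ∀ i, r ≤ τ i t :=
      eventually_all.2 fun i => (hτ_tendsto i).eventually_ge_atTop r
    obtain ⟨s0, hs0⟩ := eventually_atTop.1 h1
    exact ⟨max s0 r, le_max_right _ _,
      fun t ht i => hs0 t ((le_max_left _ _).trans ht) i⟩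
  obtain ⟨B, hAB, hB⟩ := step A
  obtain ⟨C, hBC, hC⟩ := step B
  obtain ⟨D, hCD, hD⟩ := step C
  have hBt0 : t0 ≤ B := hAt0.trans hAB
  have hCt0 : t0 ≤ C := hBt0.trans hBC
  -- x is antitone on [B, ∞)
  have hanti : AntitoneOn x (Set.Ici B) := by
    apply antitoneOn_of_deriv_nonpos (convex_Ici B) hx_cont.continuousOn
    · intro t ht
      rw [interior_Ici] at ht
      exact ((hder t (hAT.trans (hAB.trans ht.le))).differentiableAt).differentiableWithinAt
    intro t ht
    rw [interior_Ici] at ht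
    have htB : B ≤ t := le_of_lt ht
    have htA : A ≤ t := hAB.trans htB
    rw [(hder t (hAT.trans htA)).deriv, neg_nonpos]
    apply Finset.sum_nonneg
    intro i _
    exact mul_nonneg (hp_nonneg i t (hAt0.trans htA))
      (hT1 _ (hAT1.trans (hB t htB i))).le
  set F : ℝ → ℝ := fun t => ∏ j : Fin m, ∫ s in τ j t..t, p₀ s with hF
  have main : ∀ t, D ≤ t → 0 ≤ F t ∧ F t < 1 / (m : ℝ) ^ m := by
    intro t htD
    have htC : C ≤ t := hCD.trans htD
    have htB : B ≤ t := hBC.trans htC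
    have htt0 : t0 ≤ t := hBt0.trans htB
    have hτC : ∀ i, C ≤ τ i t := hD t htD
    have hτB : ∀ i, B ≤ τ i t := fun i => hBC.trans (hτC i)
    set a : Fin m → ℝ := fun i => ∫ s in τ i t..t, p₀ s with ha
    set y : Fin m → ℝ := fun i => x (τ i t) with hy
    have hτle : ∀ i, τ i t ≤ t := fun i => hτ_le i t htt0
    have hτt0 : ∀ i, t0 ≤ τ i t := fun i => hCt0.trans (hτC i)
    have hIcc : ∀ i, Set.Icc (τ i t) t ⊆ Set.Ici t0 := fun i s hs =>
      (hτt0 i).trans hs.1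
    have ha_nonneg : ∀ i, 0 ≤ a i := fun i =>
      intervalIntegral.integral_nonneg (hτle i)
        (fun s hs => hp₀_nonneg s (hIcc i hs))
    have hy_pos : ∀ i, 0 < y i := fun i =>
      hT1 _ (hAT1.trans (hAB.trans (hτB i)))
    have hxt : 0 < x t := hT1 t (hAT1.trans (hAB.trans htB))
    -- key inequality for each i
    have hkey : ∀ i, a i * (∑ k, y k) ≤ y i - x t := by
      intro i
      have hIccI := hIcc i
      -- continuity of the integrand
      have hg_cont : ContinuousOn (fun s => ∑ k : Fin m, p k s * x (τ k s))
          (Set.Ici t0) := by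
        apply continuousOn_finset_sum
        intro k _
        exact (hp_cont k).mul (hx_cont.comp_continuousOn (hτ_cont k))
      have hint : ∀ k : Fin m, IntervalIntegrable
          (fun s => p k s * x (τ k s)) volume (τ i t) t := fun k =>
        (ContinuousOn.intervalIntegrable_of_Icc (hτle i)
          (((hp_cont k).mul (hx_cont.comp_continuousOn (hτ_cont k))).mono hIccI))
      have hftc : ∫ s in τ i t..t, -(∑ k : Fin m, p k s * x (τ k s))
          = x t - x (τ i t) := by
        apply intervalIntegral.integral_eq_sub_of_hasDerivAt
        · intro s hs
          rw [Set.uIcc_of_le (hτle i)] at hs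
          exact hder s (hAT.trans (hAB.trans ((hτB i).trans hs.1)))
        · exact (ContinuousOn.intervalIntegrable_of_Icc (hτle i)
            ((hg_cont.mono hIccI).neg))
      rw [intervalIntegral.integral_neg, neg_eq_iff_eq_neg] at hftc
      have hsum : ∫ s in τ i t..t, (∑ k : Fin m, p k s * x (τ k s))
          = ∑ k : Fin m, ∫ s in τ i t..t, p k s * x (τ k s) :=
        intervalIntegral.integral_finset_sum (fun k _ => hint k)
      -- per-k lower bound
      have hperk : ∀ k : Fin m, y k * a i ≤ ∫ s in τ i t..t, p k s * x (τ k s) := by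
        intro k
        have h1 : ∫ s in τ i t..t, y k * p₀ s
            ≤ ∫ s in τ i t..t, p k s * x (τ k s) := by
          apply intervalIntegral.integral_mono_on (hτle i)
          · exact ContinuousOn.intervalIntegrable_of_Icc (hτle i)
              ((continuousOn_const.mul hp₀_cont).mono hIccI)
          · exact hint k
          · intro s hs
            have hst0 : t0 ≤ s := hIccI hs
            have hsC : C ≤ s := (hτC i).trans hs.1
            have hτks : B ≤ τ k s := hC s hsC k
            have hmono : τ k s ≤ τ k t := hτ_mono k hst0 htt0 hs.2
            have hxm : x (τ k t) ≤ x (τ k s) :=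
              hanti (Set.mem_Ici.2 hτks) (Set.mem_Ici.2 (hτB k)) hmono
            have hxs_pos : 0 < x (τ k s) := lt_of_lt_of_le (hy_pos k) hxm
            calc y k * p₀ s ≤ x (τ k s) * p₀ s :=
                  mul_le_mul_of_nonneg_right hxm (hp₀_nonneg s hst0)
              _ ≤ x (τ k s) * p k s :=
                  mul_le_mul_of_nonneg_left (hp₀_le k s hst0) hxs_pos.le
              _ = p k s * x (τ k s) := mul_comm _ _
        rwa [intervalIntegral.integral_const_mul] at h1
      have hsum2 : (∑ k, y k) * a i ≤ x (τ i t) - x t := by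
        have h2 : ∑ k : Fin m, y k * a i
            ≤ ∑ k : Fin m, ∫ s in τ i t..t, p k s * x (τ k s) :=
          Finset.sum_le_sum fun k _ => hperk k
        rw [← hsum] at h2
        have h3 := hftc
        rw [Finset.sum_mul]
        nlinarith [h2, h3]
      linarith [hsum2, mul_comm (a i) (∑ k, y k)]
    constructor
    · exact Finset.prod_nonneg fun i _ => ha_nonneg i
    · exact key_ineq m hm a y (x t) hxt ha_nonneg hy_pos hkey
  have hev : ∀ᶠ t in atTop, F t ≤ 1 / (m : ℝ) ^ m :=
    eventually_atTop.2 ⟨D, fun t ht => (main t ht).2.le⟩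
  have hev0 : ∀ᶠ t in atTop, (0:ℝ) ≤ F t :=
    eventually_atTop.2 ⟨D, fun t ht => (main t ht).1⟩
  have hcb : IsCoboundedUnder (· ≤ ·) atTop F :=
    isCoboundedUnder_le_of_eventually_le atTop hev0
  have := limsup_le_of_le hcb hev
  exact absurd hlimsup (not_lt.2 this)

/-- **Corollary 3.4.** Suppose each `τ i` is non-decreasing, `p i t ≥ p t ≥ 0` and
`limsup_{t→∞} ∏_j ∫_{τ j t}^{t} p s ds > 1/mᵐ`.
Then every solution of `x'(t) + ∑ i, p i t * x (τ i t) = 0` is oscillatory. -/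
theorem oscillation_several_args_common_minorant
    (m : ℕ) (hm : 1 ≤ m) (t0 : ℝ)
    (p : Fin m → ℝ → ℝ) (τ : Fin m → ℝ → ℝ)
    (hp_cont : ∀ i, ContinuousOn (p i) (Set.Ici t0))
    (hp_nonneg : ∀ i t, t0 ≤ t → 0 ≤ p i t)
    (hτ_cont : ∀ i, ContinuousOn (τ i) (Set.Ici t0))
    (hτ_nonneg : ∀ i t, t0 ≤ t → 0 ≤ τ i t)
    (hτ_le : ∀ i t, t0 ≤ t → τ i t ≤ t)
    (hτ_tendsto : ∀ i, Tendsto (τ i) atTop atTop)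
    (hτ_mono : ∀ i, MonotoneOn (τ i) (Set.Ici t0))
    (p₀ : ℝ → ℝ)
    (hp₀_cont : ContinuousOn p₀ (Set.Ici t0))
    (hp₀_nonneg : ∀ t, t0 ≤ t → 0 ≤ p₀ t)
    (hp₀_le : ∀ i t, t0 ≤ t → p₀ t ≤ p i t)
    (hlimsup :
      Filter.limsup (fun t : ℝ =>
        ∏ j : Fin m, ∫ s in τ j t..t, p₀ s) atTop > 1 / (m : ℝ) ^ m)
    (x : ℝ → ℝ) (hx_cont : Continuous x)
    (hx_sol : ∃ T, t0 ≤ T ∧ ∀ t, T ≤ t →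
      HasDerivAt x (-(∑ i : Fin m, p i t * x (τ i t))) t) :
    ∀ T : ℝ, ∃ t, T ≤ t ∧ x t = 0 := by
  intro T
  by_contra hcon
  push_neg at hcon
  obtain ⟨T0, hT0t0, hder⟩ := hx_sol
  have hsign : (∀ t, T ≤ t → 0 < x t) ∨ (∀ t, T ≤ t → x t < 0) := by
    rcases lt_or_gt_of_ne (hcon T le_rfl) with hneg | hpos
    · right; intro t ht
      by_contra hle
      push_neg at hle
      have hxt : 0 < x t := lt_of_le_of_ne hle (Ne.symm (hcon t ht))
      obtain ⟨s, hs, hxs⟩ := intermediate_value_Icc ht hx_cont.continuousOn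
        (Set.mem_Icc.2 ⟨hneg.le, hxt.le⟩)
      exact hcon s hs.1 hxs
    · left; intro t ht
      by_contra hle
      push_neg at hle
      have hxt : x t < 0 := lt_of_le_of_ne hle (hcon t ht)
      obtain ⟨s, hs, hxs⟩ := intermediate_value_Icc' ht hx_cont.continuousOn
        (Set.mem_Icc.2 ⟨hxt.le, hpos.le⟩)
      exact hcon s hs.1 hxs
  rcases hsign with hpos | hneg
  · exact osc_aux m hm t0 p τ hp_cont hp_nonneg hτ_cont hτ_le hτ_tendsto hτ_mono
      p₀ hp₀_cont hp₀_nonneg hp₀_le hlimsup x hx_cont T0 hT0t0 hder T hpos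
  · refine osc_aux m hm t0 p τ hp_cont hp_nonneg hτ_cont hτ_le hτ_tendsto hτ_mono
      p₀ hp₀_cont hp₀_nonneg hp₀_le hlimsup (fun u => -x u) hx_cont.neg T0 hT0t0
      (fun t ht => ?_) T (fun t ht => neg_pos.2 (hneg t ht))
    have h : HasDerivAt (fun u => -x u) _ t := (hder t ht).neg
    convert h using 1
    simp [mul_neg]
end

section
/- Suppose τ is non-decreasing and limsup_{t→∞} ∫_{τ(t)}^{t} p(s) ds > 1. Then every solution of the equation x'(t) + p(t) x(τ(t)) = 0 is oscillatory. -/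
open Real Filter MeasureTheory

private lemma aux_ev (t0 T1 : ℝ) (p τ x : ℝ → ℝ)
    (hp_cont : ContinuousOn p (Set.Ici t0))
    (hp_nonneg : ∀ t, t0 ≤ t → 0 ≤ p t)
    (hτ_cont : ContinuousOn τ (Set.Ici t0))
    (hτ_le : ∀ t, t0 ≤ t → τ t ≤ t)
    (hτ_tendsto : Tendsto τ atTop atTop)
    (hτ_mono : MonotoneOn τ (Set.Ici t0))
    (hx_cont : Continuous x)
    (ht01 : t0 ≤ T1)
    (hpos : ∀ t, T1 ≤ t → 0 < x t)
    (hsol : ∀ t, T1 ≤ t → HasDerivAt x (-(p t * x (τ t))) t) :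
    ∀ᶠ t in atTop, (∫ s in τ t..t, p s) < 1 := by
  obtain ⟨A, hA⟩ := eventually_atTop.mp (hτ_tendsto.eventually_ge_atTop T1)
  set T2 := max A T1 with hT2def
  have hT12 : T1 ≤ T2 := le_max_right _ _
  have hT2 : ∀ t, T2 ≤ t → T1 ≤ τ t := fun t ht => hA t (le_trans (le_max_left _ _) ht)
  obtain ⟨B, hB⟩ := eventually_atTop.mp (hτ_tendsto.eventually_ge_atTop T2)
  set T3 := max B T2 with hT3def
  have hT23 : T2 ≤ T3 := le_max_right _ _
  have hT3 : ∀ t, T3 ≤ t → T2 ≤ τ t := fun t ht => hB t (le_trans (le_max_left _ _) ht)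
  obtain ⟨C, hC⟩ := eventually_atTop.mp (hτ_tendsto.eventually_ge_atTop T3)
  set T4 := max C T3 with hT4def
  have hT34 : T3 ≤ T4 := le_max_right _ _
  have hT4 : ∀ t, T4 ≤ t → T3 ≤ τ t := fun t ht => hC t (le_trans (le_max_left _ _) ht)
  -- x is antitone on [T2, ∞)
  have hanti : AntitoneOn x (Set.Ici T2) := by
    apply antitoneOn_of_deriv_nonpos (convex_Ici T2) hx_cont.continuousOn
    · intro t ht
      rw [interior_Ici] at ht
      have ht1 : T1 ≤ t := le_trans hT12 (le_of_lt ht)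
      exact (hsol t ht1).differentiableAt.differentiableWithinAt
    · intro t ht
      rw [interior_Ici] at ht
      have ht1 : T1 ≤ t := le_trans hT12 (le_of_lt ht)
      rw [(hsol t ht1).deriv]
      have h1 : 0 ≤ p t := hp_nonneg t (le_trans ht01 ht1)
      have h2 : 0 ≤ x (τ t) := (hpos _ (hT2 t (le_of_lt ht))).le
      have := mul_nonneg h1 h2
      linarith
  rw [eventually_atTop]
  refine ⟨T4, fun t ht => ?_⟩
  have htT3 : T3 ≤ t := le_trans hT34 ht
  have htT2 : T2 ≤ t := le_trans hT23 htT3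
  have htT1 : T1 ≤ t := le_trans hT12 htT2
  have ht0 : t0 ≤ t := le_trans ht01 htT1
  have hτtT3 : T3 ≤ τ t := hT4 t ht
  have hτtT2 : T2 ≤ τ t := le_trans hT23 hτtT3
  have hτtT1 : T1 ≤ τ t := le_trans hT12 hτtT2
  have hτt0 : t0 ≤ τ t := le_trans ht01 hτtT1
  have hτtt : τ t ≤ t := hτ_le t ht0
  have hsub : Set.uIcc (τ t) t ⊆ Set.Ici t0 := by
    rw [Set.uIcc_of_le hτtt]
    exact fun s hs => le_trans hτt0 hs.1
  have hxτcont : ContinuousOn (fun s => x (τ s)) (Set.uIcc (τ t) t) :=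
    hx_cont.comp_continuousOn (hτ_cont.mono hsub)
  have hint_p : IntervalIntegrable p volume (τ t) t :=
    (hp_cont.mono hsub).intervalIntegrable
  have hint_pxτ : IntervalIntegrable (fun s => p s * x (τ s)) volume (τ t) t :=
    ((hp_cont.mono hsub).mul hxτcont).intervalIntegrable
  have hftc : ∫ s in τ t..t, -(p s * x (τ s)) = x t - x (τ t) := by
    apply intervalIntegral.integral_eq_sub_of_hasDerivAt
    · intro s hs
      rw [Set.uIcc_of_le hτtt] at hs
      exact hsol s (le_trans hτtT1 hs.1)
    · exact hint_pxτ.neg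
  have hftc' : ∫ s in τ t..t, p s * x (τ s) = x (τ t) - x t := by
    rw [intervalIntegral.integral_neg] at hftc
    linarith
  have hmono : ∫ s in τ t..t, p s * x (τ t) ≤ ∫ s in τ t..t, p s * x (τ s) := by
    apply intervalIntegral.integral_mono_on hτtt (hint_p.mul_const _) hint_pxτ
    intro s hs
    have hs0 : t0 ≤ s := le_trans hτt0 hs.1
    have hτsτt : τ s ≤ τ t := hτ_mono hs0 ht0 hs.2
    have hτsT2 : T2 ≤ τ s := hT3 s (le_trans hτtT3 hs.1)
    have hxle : x (τ t) ≤ x (τ s) := hanti hτsT2 hτtT2 hτsτt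
    exact mul_le_mul_of_nonneg_left hxle (hp_nonneg s hs0)
  have hkey : (∫ s in τ t..t, p s) * x (τ t) ≤ x (τ t) - x t := by
    calc (∫ s in τ t..t, p s) * x (τ t) = ∫ s in τ t..t, p s * x (τ t) :=
          (intervalIntegral.integral_mul_const _ _).symm
      _ ≤ ∫ s in τ t..t, p s * x (τ s) := hmono
      _ = x (τ t) - x t := hftc'
  have hxτpos : 0 < x (τ t) := hpos _ hτtT1
  have hxtpos : 0 < x t := hpos t htT1
  have : (∫ s in τ t..t, p s) * x (τ t) < 1 * x (τ t) := by nlinarith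
  exact lt_of_mul_lt_mul_right this hxτpos.le

/-- **(Ladas–Lakshmikantham–Papadakis, 1972.)** Suppose `τ` is non-decreasing and
`limsup_{t→∞} ∫_{τ t}^{t} p s ds > 1`. Then every solution of
`x'(t) + p t * x (τ t) = 0` is oscillatory. -/
theorem oscillation_limsup_gt_one
    (t0 : ℝ) (p τ : ℝ → ℝ)
    (hp_cont : ContinuousOn p (Set.Ici t0))
    (hp_nonneg : ∀ t, t0 ≤ t → 0 ≤ p t)
    (hτ_cont : ContinuousOn τ (Set.Ici t0))
    (hτ_nonneg : ∀ t, t0 ≤ t → 0 ≤ τ t)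
    (hτ_le : ∀ t, t0 ≤ t → τ t ≤ t)
    (hτ_tendsto : Tendsto τ atTop atTop)
    (hτ_mono : MonotoneOn τ (Set.Ici t0))
    (hlimsup : Filter.limsup (fun t : ℝ => ∫ s in τ t..t, p s) atTop > 1)
    (x : ℝ → ℝ) (hx_cont : Continuous x)
    (hx_sol : ∃ T, t0 ≤ T ∧ ∀ t, T ≤ t →
      HasDerivAt x (-(p t * x (τ t))) t) :
    ∀ T : ℝ, ∃ t, T ≤ t ∧ x t = 0 := by
  obtain ⟨T0, hT0, hsol⟩ := hx_sol
  intro T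
  by_contra hcon
  push_neg at hcon
  set T1 := max T (max T0 t0) with hT1def
  have hTT1 : T ≤ T1 := le_max_left _ _
  have hT0T1 : T0 ≤ T1 := le_trans (le_max_left _ _) (le_max_right _ _)
  have ht0T1 : t0 ≤ T1 := le_trans (le_max_right _ _) (le_max_right _ _)
  have hne : ∀ t, T1 ≤ t → x t ≠ 0 := fun t ht => hcon t (le_trans hTT1 ht)
  have hsol' : ∀ t, T1 ≤ t → HasDerivAt x (-(p t * x (τ t))) t :=
    fun t ht => hsol t (le_trans hT0T1 ht)
  have hsign : (∀ t, T1 ≤ t → 0 < x t) ∨ (∀ t, T1 ≤ t → x t < 0) := by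
    rcases lt_or_gt_of_ne (hne T1 le_rfl) with h | h
    · right
      intro t ht
      by_contra hle
      have hxp : 0 < x t := lt_of_le_of_ne (not_lt.mp hle) (Ne.symm (hne t ht))
      obtain ⟨c, hcmem, hc0⟩ :=
        intermediate_value_Icc ht hx_cont.continuousOn (Set.mem_Icc.mpr ⟨h.le, hxp.le⟩)
      exact hne c hcmem.1 hc0
    · left
      intro t ht
      by_contra hle
      have hxn : x t < 0 := lt_of_le_of_ne (not_lt.mp hle) (hne t ht)
      obtain ⟨c, hcmem, hc0⟩ :=
        intermediate_value_Icc' ht hx_cont.continuousOn (Set.mem_Icc.mpr ⟨hxn.le, h.le⟩)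
      exact hne c hcmem.1 hc0
  have hev : ∀ᶠ t in atTop, (∫ s in τ t..t, p s) < 1 := by
    rcases hsign with hp | hn
    · exact aux_ev t0 T1 p τ x hp_cont hp_nonneg hτ_cont hτ_le hτ_tendsto hτ_mono
        hx_cont ht0T1 hp hsol'
    · apply aux_ev t0 T1 p τ (fun t => -x t) hp_cont hp_nonneg hτ_cont hτ_le hτ_tendsto
        hτ_mono hx_cont.neg ht0T1 (fun t ht => neg_pos.mpr (hn t ht))
      intro t ht
      have := (hsol' t ht).neg
      convert this using 1
      · rfl
      · rfl
      · rfl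
      · ring
  have hnonneg : ∀ᶠ t in atTop, 0 ≤ ∫ s in τ t..t, p s := by
    obtain ⟨A, hA⟩ := eventually_atTop.mp (hτ_tendsto.eventually_ge_atTop t0)
    filter_upwards [eventually_ge_atTop (max A t0)] with t ht
    have ht0 : t0 ≤ t := le_trans (le_max_right _ _) ht
    have hτt0 : t0 ≤ τ t := hA t (le_trans (le_max_left _ _) ht)
    exact intervalIntegral.integral_nonneg (hτ_le t ht0)
      (fun u hu => hp_nonneg u (le_trans hτt0 hu.1))
  have hcb : IsCoboundedUnder (· ≤ ·) atTop (fun t : ℝ => ∫ s in τ t..t, p s) :=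
    Filter.IsCoboundedUnder.of_frequently_ge hnonneg.frequently
  have hfreq := frequently_lt_of_lt_limsup hcb hlimsup
  obtain ⟨t, h1, h2⟩ := (hfreq.and_eventually hev).exists
  linarith
end

section
/- Suppose liminf_{t→∞} ∫_{τ(t)}^{t} p(s) ds > 1/e. Then every solution of the equation x'(t) + p(t) x(τ(t)) = 0 is oscillatory. -/
open Real Filter MeasureTheory

set_option maxHeartbeats 2000000 in
lemma osc_aux_s10
    (t0 : ℝ) (p τ : ℝ → ℝ)
    (hp_cont : ContinuousOn p (Set.Ici t0))
    (hp_nonneg : ∀ t, t0 ≤ t → 0 ≤ p t)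
    (hτ_cont : ContinuousOn τ (Set.Ici t0))
    (hτ_le : ∀ t, t0 ≤ t → τ t ≤ t)
    (hτ_tendsto : Tendsto τ atTop atTop)
    (hliminf : Filter.liminf (fun t : ℝ => ∫ s in τ t..t, p s) atTop >
      1 / Real.exp 1)
    (x : ℝ → ℝ) (hx_cont : Continuous x)
    (T : ℝ) (hT0 : t0 ≤ T)
    (hsol : ∀ t, T ≤ t → HasDerivAt x (-(p t * x (τ t))) t)
    (hpos : ∀ t, T ≤ t → 0 < x t) : False := by
  -- choose c with 1/e < c and eventually c ≤ ∫
  have hbdd : IsBoundedUnder (· ≥ ·) atTop (fun t : ℝ => ∫ s in τ t..t, p s) := by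
    apply isBoundedUnder_of_eventually_ge (a := 0)
    filter_upwards [hτ_tendsto.eventually_ge_atTop t0, eventually_ge_atTop t0] with t h1 h2
    refine intervalIntegral.integral_nonneg (hτ_le t h2) ?_
    intro u hu
    exact hp_nonneg u (le_trans h1 hu.1)
  obtain ⟨c, hc1, hc2⟩ := exists_between hliminf
  have hcpos : 0 < c := lt_trans (by positivity) hc1
  have hec : 1 < Real.exp 1 * c := by
    rw [div_lt_iff₀ (exp_pos 1)] at hc1
    linarith [hc1]
  have hev : ∀ᶠ t in atTop, c ≤ (∫ s in τ t..t, p s) :=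
    (eventually_lt_of_lt_liminf hc2 hbdd).mono fun t ht => le_of_lt ht
  -- T1
  obtain ⟨T1', hT1'⟩ := eventually_atTop.1 (hτ_tendsto.eventually_ge_atTop T)
  set T1 : ℝ := max T1' T with hT1def
  have hTT1 : T ≤ T1 := le_max_right _ _
  have hT1 : ∀ t, T1 ≤ t → T ≤ τ t := fun t ht => hT1' t (le_trans (le_max_left _ _) ht)
  -- key integral identity
  have key : ∀ a b, T ≤ a → a ≤ b → x a - x b = ∫ s in a..b, p s * x (τ s) := by
    intro a b ha hab
    have hsub : Set.uIcc a b ⊆ Set.Ici t0 := by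
      rw [Set.uIcc_of_le hab]
      exact fun u hu => le_trans (le_trans hT0 ha) hu.1
    have hcont : ContinuousOn (fun s => p s * x (τ s)) (Set.uIcc a b) :=
      (hp_cont.mono hsub).mul (hx_cont.comp_continuousOn (hτ_cont.mono hsub))
    have hint : IntervalIntegrable (fun s => -(p s * x (τ s))) volume a b :=
      hcont.neg.intervalIntegrable
    have := intervalIntegral.integral_eq_sub_of_hasDerivAt (f := x)
      (f' := fun s => -(p s * x (τ s))) (a := a) (b := b) ?_ hint
    · rw [intervalIntegral.integral_neg] at this
      linarith [this]
    · intro u hu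
      rw [Set.uIcc_of_le hab] at hu
      exact hsol u (le_trans ha hu.1)
  -- monotonicity
  have hmono : ∀ a b, T1 ≤ a → a ≤ b → x b ≤ x a := by
    intro a b ha hab
    have h := key a b (le_trans hTT1 ha) hab
    have h2 : 0 ≤ ∫ s in a..b, p s * x (τ s) := by
      refine intervalIntegral.integral_nonneg hab ?_
      intro u hu
      exact mul_nonneg (hp_nonneg u (le_trans (le_trans hT0 (le_trans hTT1 ha)) hu.1))
        (le_of_lt (hpos (τ u) (hT1 u (le_trans ha hu.1))))
    linarith
  -- lower bound
  have keyge : ∀ a b m, T1 ≤ a → a ≤ b → 0 ≤ m → (∀ s ∈ Set.Icc a b, m ≤ x (τ s)) →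
      m * (∫ s in a..b, p s) ≤ x a - x b := by
    intro a b m ha hab hm hbound
    rw [key a b (le_trans hTT1 ha) hab]
    have hsub : Set.uIcc a b ⊆ Set.Ici t0 := by
      rw [Set.uIcc_of_le hab]
      exact fun u hu => le_trans (le_trans hT0 (le_trans hTT1 ha)) hu.1
    have hpint : IntervalIntegrable p volume a b := (hp_cont.mono hsub).intervalIntegrable
    have hcont : ContinuousOn (fun s => p s * x (τ s)) (Set.uIcc a b) :=
      (hp_cont.mono hsub).mul (hx_cont.comp_continuousOn (hτ_cont.mono hsub))
    rw [← intervalIntegral.integral_const_mul]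
    refine intervalIntegral.integral_mono_on hab (hpint.const_mul m) hcont.intervalIntegrable ?_
    intro u hu
    rw [mul_comm]
    exact mul_le_mul (le_refl (p u)) (hbound u hu)  hm
      (hp_nonneg u (le_trans (le_trans hT0 (le_trans hTT1 ha)) hu.1))
  -- T2
  obtain ⟨T2', hT2'⟩ := eventually_atTop.1 (hev.and (hτ_tendsto.eventually_ge_atTop T1))
  set T2 : ℝ := max T2' T1 with hT2def
  have hT12 : T1 ≤ T2 := le_max_right _ _
  have hT2c : ∀ t, T2 ≤ t → c ≤ (∫ s in τ t..t, p s) :=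
    fun t ht => (hT2' t (le_trans (le_max_left _ _) ht)).1
  have hT2τ : ∀ t, T2 ≤ t → T1 ≤ τ t :=
    fun t ht => (hT2' t (le_trans (le_max_left _ _) ht)).2
  have hT2t0 : ∀ t, T2 ≤ t → t0 ≤ t :=
    fun t ht => le_trans hT0 (le_trans hTT1 (le_trans hT12 ht))
  -- maximizer of τ on [T2, t]
  have hmax : ∀ t, T2 ≤ t → ∃ s, s ∈ Set.Icc T2 t ∧ ∀ u ∈ Set.Icc T2 t, τ u ≤ τ s := by
    intro t ht
    obtain ⟨s, hs, hsmax⟩ := IsCompact.exists_isMaxOn isCompact_Icc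
      ⟨T2, le_refl _, ht⟩ (hτ_cont.mono (fun u hu => hT2t0 u hu.1))
    exact ⟨s, hs, fun u hu => hsmax hu⟩
  choose! m hm1 hm2 using hmax
  set δ : ℝ → ℝ := fun t => τ (m t) with hδdef
  have hmmem : ∀ t, T2 ≤ t → m t ∈ Set.Icc T2 t := fun t ht => (hm1 t ht)
  have hδge : ∀ t, T2 ≤ t → ∀ u, u ∈ Set.Icc T2 t → τ u ≤ δ t := fun t ht => hm2 t ht
  have hδτ : ∀ t, T2 ≤ t → τ t ≤ δ t := fun t ht => hδge t ht t ⟨ht, le_refl _⟩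
  have hδT1 : ∀ t, T2 ≤ t → T1 ≤ δ t := fun t ht => le_trans (hT2τ t ht) (hδτ t ht)
  have hδle : ∀ t, T2 ≤ t → δ t ≤ t := by
    intro t ht
    exact le_trans (hτ_le (m t) (hT2t0 (m t) (hmmem t ht).1)) (hmmem t ht).2
  have hδmono : ∀ s t, T2 ≤ s → s ≤ t → δ s ≤ δ t := by
    intro s t hs hst
    exact hδge t (le_trans hs hst) (m s) ⟨(hmmem s hs).1, le_trans (hmmem s hs).2 hst⟩
  -- integral of p from δ t to t is at least c
  have hδint : ∀ t, T2 ≤ t → c ≤ ∫ s in δ t..t, p s := by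
    intro t ht
    have hm2T2 : T2 ≤ m t := (hmmem t ht).1
    have h1 : c ≤ ∫ s in τ (m t)..(m t), p s := hT2c (m t) hm2T2
    have hδmt : δ t ≤ m t := hτ_le (m t) (hT2t0 (m t) hm2T2)
    have hδt0 : t0 ≤ δ t := le_trans (le_trans hT0 hTT1) (hT2τ (m t) hm2T2)
    have hint1 : IntervalIntegrable p volume (δ t) (m t) := by
      refine (hp_cont.mono ?_).intervalIntegrable
      rw [Set.uIcc_of_le hδmt]
      exact fun u hu => le_trans hδt0 hu.1
    have hint2 : IntervalIntegrable p volume (m t) t := by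
      refine (hp_cont.mono ?_).intervalIntegrable
      rw [Set.uIcc_of_le (hmmem t ht).2]
      exact fun u hu => le_trans (hT2t0 (m t) hm2T2) hu.1
    have hadd := intervalIntegral.integral_add_adjacent_intervals hint1 hint2
    have h2 : 0 ≤ ∫ s in (m t)..t, p s := by
      refine intervalIntegral.integral_nonneg (hmmem t ht).2 ?_
      intro u hu
      exact hp_nonneg u (le_trans (hT2t0 (m t) hm2T2) hu.1)
    rw [← hadd]
    calc c ≤ ∫ s in τ (m t)..(m t), p s := h1
    _ ≤ (∫ s in δ t..(m t), p s) + ∫ s in (m t)..t, p s := by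
        simp only [hδdef]; linarith
  -- the iteration claim
  have claim : ∀ k : ℕ, ∃ Tk, T2 ≤ Tk ∧ ∀ t, Tk ≤ t →
      (Real.exp 1 * c)^k * x t ≤ x (δ t) := by
    intro k
    induction k with
    | zero =>
      refine ⟨T2, le_refl _, fun t ht => ?_⟩
      rw [pow_zero, one_mul]
      exact hmono (δ t) t (hδT1 t ht) (hδle t ht)
    | succ k ih =>
      obtain ⟨Tk, hTk2, hk⟩ := ih
      obtain ⟨Tk1', hTk1'⟩ := eventually_atTop.1 (hτ_tendsto.eventually_ge_atTop Tk)
      refine ⟨max Tk1' Tk, le_trans hTk2 (le_max_right _ _), fun t ht => ?_⟩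
      set lam := (Real.exp 1 * c)^k with hlamdef
      have hlam1 : (1:ℝ) ≤ lam := one_le_pow₀ (le_of_lt hec)
      have htT2 : T2 ≤ t := le_trans (le_trans hTk2 (le_max_right _ _)) ht
      have hδTk : Tk ≤ δ t :=
        le_trans (hTk1' t (le_trans (le_max_left _ _) ht)) (hδτ t htT2)
      have hδt2 : T2 ≤ δ t := le_trans hTk2 hδTk
      have hδlet : δ t ≤ t := hδle t htT2
      have hsubt0 : Set.uIcc (δ t) t ⊆ Set.Ici t0 := by
        rw [Set.uIcc_of_le hδlet]
        exact fun u hu => le_trans (le_trans hT0 (le_trans hTT1 (le_trans hT12 hδt2))) hu.1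
      have hTmem : ∀ u, u ∈ Set.Icc (δ t) t → T ≤ u :=
        fun u hu => le_trans (le_trans hTT1 (le_trans hT12 hδt2)) hu.1
      have hL : ∀ u ∈ Set.uIcc (δ t) t, HasDerivAt (fun v => Real.log (x v))
          (-(p u * x (τ u)) / x u) u := by
        intro u hu
        rw [Set.uIcc_of_le hδlet] at hu
        exact (hsol u (hTmem u hu)).log (ne_of_gt (hpos u (hTmem u hu)))
      have hcont1 : ContinuousOn (fun u => -(p u * x (τ u)) / x u) (Set.uIcc (δ t) t) := by
        refine ContinuousOn.div
          (((hp_cont.mono hsubt0).mul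
            (hx_cont.comp_continuousOn (hτ_cont.mono hsubt0))).neg)
          hx_cont.continuousOn ?_
        intro u hu
        rw [Set.uIcc_of_le hδlet] at hu
        exact ne_of_gt (hpos u (hTmem u hu))
      have hid := intervalIntegral.integral_eq_sub_of_hasDerivAt hL hcont1.intervalIntegrable
      have hpint : IntervalIntegrable p volume (δ t) t := (hp_cont.mono hsubt0).intervalIntegrable
      have hpb : ∀ u ∈ Set.Icc (δ t) t, -(p u * x (τ u)) / x u ≤ -(lam * p u) := by
        intro u hu
        have hxu : 0 < x u := hpos u (hTmem u hu)
        have huT2 : T2 ≤ u := le_trans hδt2 hu.1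
        have h1 : lam * x u ≤ x (δ u) := hk u (le_trans hδTk hu.1)
        have h2 : x (δ u) ≤ x (τ u) := hmono (τ u) (δ u) (hT2τ u huT2) (hδτ u huT2)
        have h3 : lam * x u ≤ x (τ u) := le_trans h1 h2
        have hpu : 0 ≤ p u := hp_nonneg u (hsubt0 (by rw [Set.uIcc_of_le hδlet]; exact hu))
        rw [div_le_iff₀ hxu]
        nlinarith
      have hmono_int : (∫ u in δ t..t, -(p u * x (τ u)) / x u) ≤
          ∫ u in δ t..t, -(lam * p u) :=
        intervalIntegral.integral_mono_on hδlet hcont1.intervalIntegrable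
          ((hpint.const_mul lam).neg) hpb
      have hrhs : (∫ u in δ t..t, -(lam * p u)) = -(lam * ∫ u in δ t..t, p u) := by
        rw [intervalIntegral.integral_neg, intervalIntegral.integral_const_mul]
      have h4 : Real.log (x t) - Real.log (x (δ t)) ≤ -(lam * c) := by
        have h5 : lam * c ≤ lam * ∫ u in δ t..t, p u :=
          mul_le_mul_of_nonneg_left (hδint t htT2) (by linarith)
        rw [← hid]
        refine le_trans hmono_int ?_
        rw [hrhs]
        linarith
      have hxt : 0 < x t := hpos t (hTmem t ⟨hδlet, le_refl _⟩)
      have hxδ : 0 < x (δ t) := hpos (δ t) (hTmem (δ t) ⟨le_refl _, hδlet⟩)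
      have h6 : Real.log (x t) + lam * c ≤ Real.log (x (δ t)) := by linarith
      have h7 : x t * Real.exp (lam * c) ≤ x (δ t) := by
        have h8 := Real.exp_le_exp.2 h6
        rwa [Real.exp_add, Real.exp_log hxt, Real.exp_log hxδ] at h8
      have h8 : Real.exp 1 * (lam * c) ≤ Real.exp (lam * c) := by
        have h9 : lam * c ≤ Real.exp (lam * c - 1) := by
          linarith [Real.add_one_le_exp (lam * c - 1)]
        calc Real.exp 1 * (lam * c) ≤ Real.exp 1 * Real.exp (lam * c - 1) :=
              mul_le_mul_of_nonneg_left h9 (le_of_lt (exp_pos 1))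
        _ = Real.exp (lam * c) := by rw [← Real.exp_add]; ring_nf
      calc (Real.exp 1 * c)^(k+1) * x t = (Real.exp 1 * (lam * c)) * x t := by
            rw [pow_succ]; ring
      _ ≤ Real.exp (lam * c) * x t :=
            mul_le_mul_of_nonneg_right h8 (le_of_lt hxt)
      _ ≤ x (δ t) := by nlinarith
  -- final contradiction
  obtain ⟨k, hkbig⟩ := pow_unbounded_of_one_lt (4 / c^2) hec
  obtain ⟨Tk, hTk2, hk⟩ := claim k
  obtain ⟨Tf', hTf'⟩ := eventually_atTop.1 (hτ_tendsto.eventually_ge_atTop Tk)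
  set t : ℝ := max Tf' Tk with htdef
  have htTk : Tk ≤ t := le_max_right _ _
  have htT2 : T2 ≤ t := le_trans hTk2 htTk
  have hδTk : Tk ≤ δ t := le_trans (hTf' t (le_max_left _ _)) (hδτ t htT2)
  have hδt2 : T2 ≤ δ t := le_trans hTk2 hδTk
  have hδlet : δ t ≤ t := hδle t htT2
  have hsubt0 : Set.uIcc (δ t) t ⊆ Set.Ici t0 := by
    rw [Set.uIcc_of_le hδlet]
    exact fun u hu => le_trans (le_trans hT0 (le_trans hTT1 (le_trans hT12 hδt2))) hu.1
  have hpInt : IntegrableOn p (Set.uIcc (δ t) t) := by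
    rw [Set.uIcc_of_le hδlet]
    exact (hp_cont.mono (by rw [← Set.uIcc_of_le hδlet]; exact hsubt0)).integrableOn_Icc
  have hgcont : ContinuousOn (fun s => ∫ u in δ t..s, p u) (Set.Icc (δ t) t) := by
    rw [← Set.uIcc_of_le hδlet]
    exact intervalIntegral.continuousOn_primitive_interval hpInt
  have hgc : c ≤ ∫ u in δ t..t, p u := hδint t htT2
  -- find ts with ∫_{δ t}^{ts} p = (∫_{δ t}^t p) - c/2
  have hmem : (∫ u in δ t..t, p u) - c / 2 ∈
      Set.Icc ((fun s => ∫ u in δ t..s, p u) (δ t)) ((fun s => ∫ u in δ t..s, p u) t) := by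
    simp only [intervalIntegral.integral_same]
    constructor <;> [linarith; linarith]
  obtain ⟨ts, hts, hgts⟩ := intermediate_value_Icc hδlet hgcont hmem
  have htsT2 : T2 ≤ ts := le_trans hδt2 hts.1
  have htsT1 : T1 ≤ ts := le_trans hT12 htsT2
  -- integral splitting
  have hint1 : IntervalIntegrable p volume (δ t) ts := by
    refine (hp_cont.mono ?_).intervalIntegrable
    rw [Set.uIcc_of_le hts.1]
    exact fun u hu => hsubt0 (by rw [Set.uIcc_of_le hδlet]; exact ⟨hu.1, le_trans hu.2 hts.2⟩)
  have hint2 : IntervalIntegrable p volume ts t := by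
    refine (hp_cont.mono ?_).intervalIntegrable
    rw [Set.uIcc_of_le hts.2]
    exact fun u hu => hsubt0 (by rw [Set.uIcc_of_le hδlet]; exact ⟨le_trans hts.1 hu.1, hu.2⟩)
  have hadd := intervalIntegral.integral_add_adjacent_intervals hint1 hint2
  have hI2 : (∫ u in ts..t, p u) = c / 2 := by
    have : (∫ u in δ t..ts, p u) = (∫ u in δ t..t, p u) - c / 2 := hgts
    linarith [hadd]
  have hI1 : c / 2 ≤ ∫ u in δ t..ts, p u := by
    have : (∫ u in δ t..ts, p u) = (∫ u in δ t..t, p u) - c / 2 := hgts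
    linarith
  -- inequality (i)
  have hi : x (δ t) * (c / 2) ≤ x ts - x t := by
    have := keyge ts t (x (δ t)) htsT1 hts.2 (le_of_lt (hpos (δ t)
      (le_trans hTT1 (le_trans hT12 hδt2)))) ?_
    · rwa [hI2] at this
    · intro s hs
      have hsT2 : T2 ≤ s := le_trans htsT2 hs.1
      have hτsδ : τ s ≤ δ t := hδge t htT2 s ⟨hsT2, hs.2⟩
      exact hmono (τ s) (δ t) (hT2τ s hsT2) hτsδ
  -- inequality (ii)
  have hii : x (δ ts) * (c / 2) ≤ x (δ t) - x ts := by
    have hb : ∀ s ∈ Set.Icc (δ t) ts, x (δ ts) ≤ x (τ s) := by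
      intro s hs
      have hsT2 : T2 ≤ s := le_trans hδt2 hs.1
      have h1 : τ s ≤ δ s := hδτ s hsT2
      have h2 : δ s ≤ δ ts := hδmono s ts hsT2 hs.2
      exact hmono (τ s) (δ ts) (hT2τ s hsT2) (le_trans h1 h2)
    have hδts0 : 0 ≤ x (δ ts) := le_of_lt (hpos (δ ts) (le_trans hTT1 (hδT1 ts htsT2)))
    have h := keyge (δ t) ts (x (δ ts)) (le_trans hT12 hδt2) hts.1 hδts0 hb
    nlinarith [h, hI1]
  -- inequality (iii)
  have hiii : (Real.exp 1 * c)^k * x ts ≤ x (δ ts) := hk ts (le_trans hδTk hts.1)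
  -- combine
  have hxts : 0 < x ts := hpos ts (le_trans hTT1 htsT1)
  have hxt : 0 < x t := hpos t (le_trans hTT1 (le_trans hT12 htT2))
  have hxδt : 0 < x (δ t) := hpos (δ t) (le_trans hTT1 (hδT1 t htT2))
  have hxδts : 0 < x (δ ts) := hpos (δ ts) (le_trans hTT1 (hδT1 ts htsT2))
  set L : ℝ := (Real.exp 1 * c)^k with hLdef
  have hL0 : 0 < L := pow_pos (by positivity) k
  have hL4 : 4 < L * c^2 := by
    rw [div_lt_iff₀ (by positivity : (0:ℝ) < c^2)] at hkbig
    linarith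
  have s1 : L * (c / 2 * x (δ t)) ≤ L * x ts :=
    mul_le_mul_of_nonneg_left (by nlinarith) (le_of_lt hL0)
  have s2 : L * (c / 2 * x (δ t)) ≤ x (δ ts) := le_trans s1 (by nlinarith)
  have s3 : c / 2 * (c / 2 * x (δ ts)) ≤ c / 2 * x (δ t) :=
    mul_le_mul_of_nonneg_left (by nlinarith) (by positivity)
  have s4 : L * (c / 2 * (c / 2 * x (δ ts))) ≤ x (δ ts) :=
    le_trans (mul_le_mul_of_nonneg_left s3 (le_of_lt hL0)) s2
  nlinarith [s4, mul_pos hL0 hxδts]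

/-- **(Koplatadze–Chanturija, 1982.)** Suppose
`liminf_{t→∞} ∫_{τ t}^{t} p s ds > 1/e`. Then every solution of
`x'(t) + p t * x (τ t) = 0` is oscillatory. -/
theorem oscillation_liminf_gt_inv_e
    (t0 : ℝ) (p τ : ℝ → ℝ)
    (hp_cont : ContinuousOn p (Set.Ici t0))
    (hp_nonneg : ∀ t, t0 ≤ t → 0 ≤ p t)
    (hτ_cont : ContinuousOn τ (Set.Ici t0))
    (hτ_nonneg : ∀ t, t0 ≤ t → 0 ≤ τ t)
    (hτ_le : ∀ t, t0 ≤ t → τ t ≤ t)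
    (hτ_tendsto : Tendsto τ atTop atTop)
    (hliminf : Filter.liminf (fun t : ℝ => ∫ s in τ t..t, p s) atTop >
      1 / Real.exp 1)
    (x : ℝ → ℝ) (hx_cont : Continuous x)
    (hx_sol : ∃ T, t0 ≤ T ∧ ∀ t, T ≤ t →
      HasDerivAt x (-(p t * x (τ t))) t) :
    ∀ T : ℝ, ∃ t, T ≤ t ∧ x t = 0 := by
  intro T0
  by_contra hcon
  push_neg at hcon
  obtain ⟨Ts, hTs0, hsol⟩ := hx_sol
  set T : ℝ := max T0 Ts with hTdef
  have hTt0 : t0 ≤ T := le_trans hTs0 (le_max_right _ _)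
  have hsol' : ∀ t, T ≤ t → HasDerivAt x (-(p t * x (τ t))) t :=
    fun t ht => hsol t (le_trans (le_max_right _ _) ht)
  have hne : ∀ t, T ≤ t → x t ≠ 0 :=
    fun t ht => hcon t (le_trans (le_max_left _ _) ht)
  rcases lt_trichotomy (x T) 0 with h | h | h
  · -- x T < 0 : use -x
    have hpos : ∀ t, T ≤ t → 0 < -x t := by
      intro t ht
      rcases lt_trichotomy (x t) 0 with h' | h' | h'
      · linarith
      · exact absurd h' (hne t ht)
      · exfalso
        obtain ⟨u, hu, hxu⟩ := intermediate_value_Icc (le_refl T |>.trans ht)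
          hx_cont.continuousOn ⟨le_of_lt h, le_of_lt h'⟩
        exact hne u hu.1 hxu
    refine osc_aux_s10 t0 p τ hp_cont hp_nonneg hτ_cont hτ_le hτ_tendsto hliminf
      (fun t => -x t) hx_cont.neg T hTt0 ?_ hpos
    intro t ht
    have : HasDerivAt (fun t => -x t) (-(-(p t * x (τ t)))) t := (hsol' t ht).neg
    convert this using 1
    ring
  · exact hne T le_rfl h
  · -- x T > 0
    have hpos : ∀ t, T ≤ t → 0 < x t := by
      intro t ht
      rcases lt_trichotomy (x t) 0 with h' | h' | h'
      · exfalso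
        obtain ⟨u, hu, hxu⟩ := intermediate_value_Icc' (le_refl T |>.trans ht)
          hx_cont.continuousOn ⟨le_of_lt h', le_of_lt h⟩
        exact hne u hu.1 hxu
      · exact absurd h' (hne t ht)
      · exact h'
    exact osc_aux_s10 t0 p τ hp_cont hp_nonneg hτ_cont hτ_le hτ_tendsto hliminf
      x hx_cont T hTt0 hsol' hpos
end

section
/- For every α ∈ (1/e, 1) there exist a constant τ > 0 and a continuous function p : [0,∞) → [0,∞) such that limsup_{t→∞} ∫_{t−τ}^{t} p(s) ds = α and the equation x'(t) + p(t) x(t − τ) = 0 has a nonoscillatory solution. -/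
open Real Filter MeasureTheory intervalIntegral

noncomputable def qq (m : ℝ) : ℝ → ℝ := fun t => m * π / 2 * max (Real.sin (π * t)) 0

lemma qq_cont (m : ℝ) : Continuous (qq m) := by
  unfold qq; fun_prop

lemma qq_nonneg (m : ℝ) (hm : 0 ≤ m) (t : ℝ) : 0 ≤ qq m t := by
  have h : (0:ℝ) ≤ m * π / 2 := by positivity
  exact mul_nonneg h (le_max_right _ _)

lemma sin_nonpos_off (k : ℤ) (s : ℝ) (h1 : 2*(k:ℝ)+1 ≤ s) (h2 : s ≤ 2*(k:ℝ)+2) :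
    Real.sin (π * s) ≤ 0 := by
  have key : Real.sin (π * s) = Real.sin (π * (s - 2*((k:ℝ)+1))) := by
    have := Real.sin_add_int_mul_two_pi (π * (s - 2*((k:ℝ)+1))) (k+1)
    rw [← this]
    congr 1
    push_cast
    ring
  rw [key]
  have hv1 : (0:ℝ) ≤ -(π * (s - 2*((k:ℝ)+1))) := by
    have : s - 2*((k:ℝ)+1) ≤ 0 := by linarith
    nlinarith [Real.pi_pos]
  have hv2 : -(π * (s - 2*((k:ℝ)+1))) ≤ π := by
    have : -1 ≤ s - 2*((k:ℝ)+1) := by linarith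
    nlinarith [Real.pi_pos]
  have := Real.sin_nonneg_of_nonneg_of_le_pi hv1 hv2
  rw [Real.sin_neg] at this
  linarith

lemma sin_nonneg_on (k : ℤ) (s : ℝ) (h1 : 2*(k:ℝ) ≤ s) (h2 : s ≤ 2*(k:ℝ)+1) :
    0 ≤ Real.sin (π * s) := by
  have key : Real.sin (π * s) = Real.sin (π * (s - 2*(k:ℝ))) := by
    have := Real.sin_add_int_mul_two_pi (π * (s - 2*(k:ℝ))) k
    rw [← this]
    congr 1
    ring
  rw [key]
  apply Real.sin_nonneg_of_nonneg_of_le_pi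
  · nlinarith [Real.pi_pos]
  · nlinarith [Real.pi_pos]

lemma qq_zero (m : ℝ) (k : ℤ) (s : ℝ) (h1 : 2*(k:ℝ)+1 ≤ s) (h2 : s ≤ 2*(k:ℝ)+2) :
    qq m s = 0 := by
  unfold qq
  rw [max_eq_right (sin_nonpos_off k s h1 h2), mul_zero]

noncomputable def hh (m : ℝ) : ℝ → ℝ := fun t => ∫ s in (0:ℝ)..t, qq m s

lemma hasDerivAt_hh (m t : ℝ) : HasDerivAt (hh m) (qq m t) t :=
  intervalIntegral.integral_hasDerivAt_right ((qq_cont m).intervalIntegrable 0 t)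
    ((qq_cont m).stronglyMeasurableAtFilter _ _) (qq_cont m).continuousAt

lemma hh_cont (m : ℝ) : Continuous (hh m) :=
  continuous_iff_continuousAt.2 fun t => (hasDerivAt_hh m t).continuousAt

lemma hh_sub (m a b : ℝ) : hh m b - hh m a = ∫ s in a..b, qq m s := by
  unfold hh
  rw [intervalIntegral.integral_interval_sub_left ((qq_cont m).intervalIntegrable 0 b)
    ((qq_cont m).intervalIntegrable 0 a)]

lemma integral_qq_pulse (m : ℝ) (k : ℤ) :
    ∫ s in (2*(k:ℝ))..(2*(k:ℝ)+1), qq m s = m := by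
  have hcongr : Set.EqOn (qq m) (fun s => m * π / 2 * Real.sin (π * s))
      (Set.uIcc (2*(k:ℝ)) (2*(k:ℝ)+1)) := by
    intro s hs
    rw [Set.uIcc_of_le (by linarith)] at hs
    unfold qq
    rw [max_eq_left (sin_nonneg_on k s hs.1 hs.2)]
  rw [intervalIntegral.integral_congr hcongr]
  have hderiv : ∀ s ∈ Set.uIcc (2*(k:ℝ)) (2*(k:ℝ)+1),
      HasDerivAt (fun u => -(m/2) * Real.cos (π * u)) (m * π / 2 * Real.sin (π * s)) s := by
    intro s _
    have h1 : HasDerivAt (fun u : ℝ => π * u) π s := by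
      simpa using (hasDerivAt_id s).const_mul π
    have h2 := (Real.hasDerivAt_cos (π * s)).comp s h1
    have h3 := h2.const_mul (-(m/2))
    exact h3.congr_deriv (by ring)
  rw [intervalIntegral.integral_eq_sub_of_hasDerivAt hderiv (Continuous.intervalIntegrable (by fun_prop) _ _)]
  have hc1 : Real.cos (π * (2*(k:ℝ)+1)) = -1 := by
    have : π * (2*(k:ℝ)+1) = π + k * (2*π) := by ring
    rw [this, Real.cos_add_int_mul_two_pi, Real.cos_pi]
  have hc2 : Real.cos (π * (2*(k:ℝ))) = 1 := by
    have : π * (2*(k:ℝ)) = (k:ℝ) * (2*π) := by ring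
    rw [this, Real.cos_int_mul_two_pi]
  rw [hc1, hc2]
  ring

lemma integral_qq_rest (m : ℝ) (k : ℤ) :
    ∫ s in (2*(k:ℝ)+1)..(2*(k:ℝ)+2), qq m s = 0 := by
  have hcongr : Set.EqOn (qq m) (fun _ => (0:ℝ)) (Set.uIcc (2*(k:ℝ)+1) (2*(k:ℝ)+2)) := by
    intro s hs
    rw [Set.uIcc_of_le (by linarith)] at hs
    exact qq_zero m k s hs.1 hs.2
  rw [intervalIntegral.integral_congr hcongr]
  simp

lemma hh_step (m : ℝ) (k : ℤ) : hh m (2*(k:ℝ)+2) = hh m (2*(k:ℝ)) + m := by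
  have h := hh_sub m (2*(k:ℝ)) (2*(k:ℝ)+2)
  have hsplit : ∫ s in (2*(k:ℝ))..(2*(k:ℝ)+2), qq m s
      = (∫ s in (2*(k:ℝ))..(2*(k:ℝ)+1), qq m s) + ∫ s in (2*(k:ℝ)+1)..(2*(k:ℝ)+2), qq m s := by
    rw [intervalIntegral.integral_add_adjacent_intervals ((qq_cont m).intervalIntegrable _ _)
      ((qq_cont m).intervalIntegrable _ _)]
  rw [hsplit, integral_qq_pulse, integral_qq_rest] at h
  linarith

lemma hh_even (m : ℝ) (k : ℤ) : hh m (2*(k:ℝ)) = k * m := by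
  induction k using Int.induction_on with
  | zero => simp [hh]
  | succ n ih =>
      have := hh_step m n
      push_cast
      push_cast at ih this
      rw [show 2*((n:ℝ)+1) = 2*(n:ℝ)+2 by ring, this, ih]
      ring
  | pred n ih =>
      have := hh_step m (-(n:ℤ)-1)
      push_cast at ih this
      rw [show 2*(-(n:ℝ)-1) = 2*(-(n:ℝ)-1) by ring] at this
      push_cast
      rw [show (2:ℝ)*(-(n:ℝ)-1) = 2*(-(n:ℝ)-1) by ring]
      have h2 : (2:ℝ)*(-(n:ℝ)-1)+2 = 2*(-(n:ℝ)) := by ring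
      rw [h2] at this
      rw [show (2:ℝ)*(-(n:ℝ)) = 2*(-(n:ℝ)) by ring] at this
      have : hh m (2*(-(n:ℝ)-1)) = hh m (2*(-(n:ℝ))) - m := by linarith
      rw [this, ih]
      ring

lemma hh_plateau (m : ℝ) (k : ℤ) (u : ℝ) (h1 : 2*(k:ℝ)-1 ≤ u) (h2 : u ≤ 2*(k:ℝ)) :
    hh m u = k * m := by
  have h := hh_sub m u (2*(k:ℝ))
  have hz : ∫ s in u..(2*(k:ℝ)), qq m s = 0 := by
    have hcongr : Set.EqOn (qq m) (fun _ => (0:ℝ)) (Set.uIcc u (2*(k:ℝ))) := by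
      intro s hs
      rw [Set.uIcc_of_le h2] at hs
      refine qq_zero m (k-1) s ?_ ?_ <;> push_cast <;> [linarith [hs.1]; linarith [hs.2]]
    rw [intervalIntegral.integral_congr hcongr]; simp
  rw [hz] at h
  rw [hh_even m k] at h
  linarith

noncomputable def pp (m : ℝ) : ℝ → ℝ := fun t => qq m t * Real.exp (hh m (t-1) - hh m t)

lemma pp_cont (m : ℝ) : Continuous (pp m) := by
  unfold pp
  exact (qq_cont m).mul (Real.continuous_exp.comp (((hh_cont m).comp (by fun_prop)).sub (hh_cont m)))

lemma pp_nonneg (m : ℝ) (hm : 0 ≤ m) (t : ℝ) : 0 ≤ pp m t :=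
  mul_nonneg (qq_nonneg m hm t) (Real.exp_nonneg _)

lemma pp_zero (m : ℝ) (k : ℤ) (s : ℝ) (h1 : 2*(k:ℝ)+1 ≤ s) (h2 : s ≤ 2*(k:ℝ)+2) :
    pp m s = 0 := by
  unfold pp
  rw [qq_zero m k s h1 h2, zero_mul]

lemma integral_pp_pulse (m : ℝ) (k : ℤ) :
    ∫ s in (2*(k:ℝ))..(2*(k:ℝ)+1), pp m s = 1 - Real.exp (-m) := by
  have hcongr : Set.EqOn (pp m) (fun s => qq m s * Real.exp ((k:ℝ)*m - hh m s))
      (Set.uIcc (2*(k:ℝ)) (2*(k:ℝ)+1)) := by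
    intro s hs
    rw [Set.uIcc_of_le (by linarith)] at hs
    unfold pp
    rw [hh_plateau m k (s-1) (by linarith [hs.1]) (by linarith [hs.2])]
  rw [intervalIntegral.integral_congr hcongr]
  have hderiv : ∀ s ∈ Set.uIcc (2*(k:ℝ)) (2*(k:ℝ)+1),
      HasDerivAt (fun u => -Real.exp ((k:ℝ)*m - hh m u)) (qq m s * Real.exp ((k:ℝ)*m - hh m s)) s := by
    intro s _
    have h1 : HasDerivAt (fun u => (k:ℝ)*m - hh m u) (-(qq m s)) s :=
      (hasDerivAt_hh m s).const_sub ((k:ℝ)*m)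
    have h2 := h1.exp.neg
    exact h2.congr_deriv (by ring)
  rw [intervalIntegral.integral_eq_sub_of_hasDerivAt hderiv]
  · have e1 : hh m (2*(k:ℝ)) = k*m := hh_even m k
    have e2 : hh m (2*(k:ℝ)+1) = k*m + m := by
      have h := hh_sub m (2*(k:ℝ)) (2*(k:ℝ)+1)
      rw [integral_qq_pulse, e1] at h
      linarith
    rw [e1, e2]
    rw [show (k:ℝ)*m - ((k:ℝ)*m + m) = -m by ring, show (k:ℝ)*m - (k:ℝ)*m = (0:ℝ) by ring,
      Real.exp_zero]
    ring
  · apply Continuous.intervalIntegrable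
    exact (qq_cont m).mul (Real.continuous_exp.comp ((continuous_const).sub (hh_cont m)))

lemma integral_pp_zero_left (m : ℝ) (k : ℤ) :
    ∫ s in (2*(k:ℝ)-1)..(2*(k:ℝ)), pp m s = 0 := by
  have hcongr : Set.EqOn (pp m) (fun _ => (0:ℝ)) (Set.uIcc (2*(k:ℝ)-1) (2*(k:ℝ))) := by
    intro s hs
    rw [Set.uIcc_of_le (by linarith)] at hs
    refine pp_zero m (k-1) s ?_ ?_ <;> push_cast <;> [linarith [hs.1]; linarith [hs.2]]
  rw [intervalIntegral.integral_congr hcongr]; simp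

lemma integral_pp_zero_right (m : ℝ) (k : ℤ) :
    ∫ s in (2*(k:ℝ)+1)..(2*(k:ℝ)+2), pp m s = 0 := by
  have hcongr : Set.EqOn (pp m) (fun _ => (0:ℝ)) (Set.uIcc (2*(k:ℝ)+1) (2*(k:ℝ)+2)) := by
    intro s hs
    rw [Set.uIcc_of_le (by linarith)] at hs
    exact pp_zero m k s hs.1 hs.2
  rw [intervalIntegral.integral_congr hcongr]; simp

lemma F_le (m : ℝ) (hm : 0 ≤ m) (t : ℝ) :
    ∫ s in (t-1)..t, pp m s ≤ 1 - Real.exp (-m) := by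
  set k : ℤ := ⌊t/2⌋ with hk
  have hk1 : 2*(k:ℝ) ≤ t := by
    have := Int.floor_le (t/2)
    rw [← hk] at this
    linarith
  have hk2 : t ≤ 2*(k:ℝ)+2 := by
    have := Int.lt_floor_add_one (t/2)
    rw [← hk] at this
    linarith
  have hmono : ∫ s in (t-1)..t, pp m s ≤ ∫ s in (2*(k:ℝ)-1)..(2*(k:ℝ)+2), pp m s := by
    apply intervalIntegral.integral_mono_interval (by linarith) (by linarith) (by linarith)
    · exact Filter.Eventually.filter_mono (ae_mono Measure.restrict_le_self)
        (Filter.Eventually.of_forall (pp_nonneg m hm))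
    · exact (pp_cont m).intervalIntegrable _ _
  have hsplit : ∫ s in (2*(k:ℝ)-1)..(2*(k:ℝ)+2), pp m s
      = (∫ s in (2*(k:ℝ)-1)..(2*(k:ℝ)), pp m s) + ((∫ s in (2*(k:ℝ))..(2*(k:ℝ)+1), pp m s)
        + ∫ s in (2*(k:ℝ)+1)..(2*(k:ℝ)+2), pp m s) := by
    rw [intervalIntegral.integral_add_adjacent_intervals ((pp_cont m).intervalIntegrable _ _)
      ((pp_cont m).intervalIntegrable _ _),
      intervalIntegral.integral_add_adjacent_intervals ((pp_cont m).intervalIntegrable _ _)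
      ((pp_cont m).intervalIntegrable _ _)]
  rw [hsplit, integral_pp_zero_left, integral_pp_zero_right, integral_pp_pulse] at hmono
  linarith

/-- **(Berezansky–Braverman, 2011.)** For every `α ∈ (1/e, 1)` there exist a
constant delay `τ > 0` and a continuous nonnegative coefficient `p` on `[0,∞)` such
that `limsup_{t→∞} ∫_{t−τ}^{t} p s ds = α` and the equation
`x'(t) + p t * x (t − τ) = 0` has a nonoscillatory solution. -/
theorem exists_nonoscillatory_with_limsup_eq_alpha :
    ∀ α : ℝ, α ∈ Set.Ioo (1 / Real.exp 1) 1 →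
      ∃ (τ : ℝ) (p : ℝ → ℝ), 0 < τ ∧
        ContinuousOn p (Set.Ici (0 : ℝ)) ∧
        (∀ t, 0 ≤ t → 0 ≤ p t) ∧
        Filter.limsup (fun t : ℝ => ∫ s in (t - τ)..t, p s) atTop = α ∧
        ∃ x : ℝ → ℝ, Continuous x ∧
          (∃ T, 0 ≤ T ∧ ∀ t, T ≤ t → HasDerivAt x (-(p t * x (t - τ))) t) ∧
          (∃ T, ∀ t, T ≤ t → x t ≠ 0) := by
  intro α hα
  obtain ⟨hα1, hα2⟩ := hα
  have hepos : (0:ℝ) < 1 / Real.exp 1 := by positivity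
  have hα0 : 0 < α := lt_trans hepos hα1
  set m : ℝ := -Real.log (1 - α) with hm_def
  have h1α : (0:ℝ) < 1 - α := by linarith
  have hexp : Real.exp (-m) = 1 - α := by rw [hm_def, neg_neg, Real.exp_log h1α]
  have hm : 0 < m := by
    rw [hm_def, neg_pos]
    exact Real.log_neg h1α (by linarith)
  have key : 1 - Real.exp (-m) = α := by rw [hexp]; ring
  refine ⟨1, pp m, one_pos, (pp_cont m).continuousOn, fun t _ => pp_nonneg m hm.le t, ?_, ?_⟩
  · -- limsup
    have hub : ∀ t : ℝ, (∫ s in (t-1)..t, pp m s) ≤ α := fun t => key ▸ F_le m hm.le t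
    have hfreq : ∃ᶠ t in (atTop : Filter ℝ), α ≤ ∫ s in (t-1)..t, pp m s := by
      have htend : Tendsto (fun n : ℕ => 2*(n:ℝ)+1) atTop atTop := by
        apply tendsto_atTop_mono (fun n : ℕ => by linarith : ∀ n : ℕ, (n:ℝ) ≤ 2*(n:ℝ)+1)
        exact tendsto_natCast_atTop_atTop
      refine htend.frequently (Frequently.of_forall fun n => ?_)
      have hp := integral_pp_pulse m (n:ℤ)
      push_cast at hp
      rw [show (2*(n:ℝ)+1) - 1 = 2*(n:ℝ) by ring, hp, key]
    apply le_antisymm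
    · exact limsup_le_of_le (Filter.IsCoboundedUnder.of_frequently_ge hfreq)
        (Filter.Eventually.of_forall hub)
    · exact le_limsup_of_frequently_le hfreq
        (Filter.isBoundedUnder_of ⟨α, hub⟩)
  · refine ⟨fun t => Real.exp (-(hh m t)), Real.continuous_exp.comp (hh_cont m).neg,
      ⟨0, le_refl 0, fun t _ => ?_⟩, ⟨0, fun t _ => Real.exp_ne_zero _⟩⟩
    have h1 := ((hasDerivAt_hh m t).neg).exp
    convert h1 using 1
    show -(pp m t * Real.exp (-(hh m (t-1)))) = Real.exp (-(hh m t)) * -(qq m t)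
    unfold pp
    rw [mul_assoc, ← Real.exp_add,
      show hh m (t-1) - hh m t + -(hh m (t-1)) = -(hh m t) by ring]
    ring
    rfl
end

section
/- Let σ(t) = sup{ τ(s) : t_0 ≤ s ≤ t } for t ≥ t_0. If limsup_{t→∞} ∫_{σ(t)}^{t} p(s) · exp( ∫_{τ(s)}^{σ(t)} p(ξ) dξ ) ds > 1, then every solution of the equation x'(t) + p(t) x(τ(t)) = 0 is oscillatory. -/
open Real Filter MeasureTheory

set_option linter.unusedVariables false

lemma aux_false (t0 : ℝ) (p τ : ℝ → ℝ)
    (hp_cont : ContinuousOn p (Set.Ici t0))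
    (hp_nonneg : ∀ t, t0 ≤ t → 0 ≤ p t)
    (hτ_cont : ContinuousOn τ (Set.Ici t0))
    (hτ_le : ∀ t, t0 ≤ t → τ t ≤ t)
    (hτ_tendsto : Tendsto τ atTop atTop)
    (σ : ℝ → ℝ)
    (hσ : ∀ t, t0 ≤ t → σ t = sSup (τ '' Set.Icc t0 t))
    (hlimsup : Filter.limsup (fun t : ℝ =>
        ∫ s in σ t..t, p s * Real.exp (∫ ξ in τ s..σ t, p ξ)) atTop > 1)
    (x : ℝ → ℝ) (hx_cont : Continuous x)
    (T2 : ℝ) (hT2 : t0 ≤ T2)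
    (hderiv : ∀ t, T2 ≤ t → HasDerivAt x (-(p t * x (τ t))) t)
    (hpos : ∀ t, T2 ≤ t → 0 < x t) : False := by
  obtain ⟨N3, hN3⟩ := eventually_atTop.1 (hτ_tendsto.eventually_ge_atTop T2)
  set T3 := max N3 (T2 + 1) with hT3def
  have hT3T2 : T2 + 1 ≤ T3 := le_max_right _ _
  have hT3t0 : t0 < T3 := by linarith
  have hτT3 : ∀ t, T3 ≤ t → T2 ≤ τ t := fun t ht => hN3 t (le_trans (le_max_left _ _) ht)
  -- x is antitone on [T3, ∞)
  have hanti : AntitoneOn x (Set.Ici T3) := by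
    apply antitoneOn_of_deriv_nonpos (convex_Ici T3) hx_cont.continuousOn
    · intro t ht
      rw [interior_Ici, Set.mem_Ioi] at ht
      exact ((hderiv t (by linarith)).differentiableAt).differentiableWithinAt
    · intro t ht
      rw [interior_Ici, Set.mem_Ioi] at ht
      rw [(hderiv t (by linarith)).deriv]
      have hpt : 0 ≤ p t := hp_nonneg t (by linarith)
      have hxτ : 0 < x (τ t) := hpos (τ t) (hτT3 t ht.le)
      nlinarith
  -- primitive of p
  set P : ℝ → ℝ := fun u => ∫ s in t0..u, p s with hPdef
  have hPint : ∀ a b : ℝ, t0 ≤ a → t0 ≤ b → IntervalIntegrable p volume a b := by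
    intro a b ha hb
    apply ContinuousOn.intervalIntegrable
    apply hp_cont.mono
    intro y hy
    rcases Set.mem_uIcc.mp hy with ⟨h1, _⟩ | ⟨h1, _⟩
    · exact le_trans ha h1
    · exact le_trans hb h1
  have hPderiv : ∀ u, t0 < u → HasDerivAt P (p u) u := by
    intro u hu
    refine intervalIntegral.integral_hasDerivAt_right (hPint t0 u le_rfl hu.le) ?_ ?_
    · exact (hp_cont.mono Set.Ioi_subset_Ici_self).stronglyMeasurableAtFilter isOpen_Ioi u hu
    · exact hp_cont.continuousAt (Ici_mem_nhds hu)
  have hPcont : ContinuousOn P (Set.Ioi t0) :=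
    fun u hu => ((hPderiv u hu).continuousAt).continuousWithinAt
  -- T4
  obtain ⟨N4, hN4⟩ := eventually_atTop.1 (hτ_tendsto.eventually_ge_atTop T3)
  set T4 := max N4 T3 with hT4def
  have hT4T3 : T3 ≤ T4 := le_max_right _ _
  have hτT4 : ∀ t, T4 ≤ t → T3 ≤ τ t := fun t ht => hN4 t (le_trans (le_max_left _ _) ht)
  -- g = x * exp(P) antitone on [T4, ∞)
  have hganti : AntitoneOn (fun u => x u * Real.exp (P u)) (Set.Ici T4) := by
    have hIci : Set.Ici T4 ⊆ Set.Ioi t0 := fun y hy => lt_of_lt_of_le (show t0 < T4 by linarith) hy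
    have hdg : ∀ u, T4 < u → HasDerivAt (fun u => x u * Real.exp (P u))
        ((-(p u * x (τ u))) * Real.exp (P u) + x u * (Real.exp (P u) * p u)) u := by
      intro u hu
      exact (hderiv u (by linarith)).mul ((hPderiv u (by linarith)).exp)
    apply antitoneOn_of_deriv_nonpos (convex_Ici T4)
    · exact (hx_cont.continuousOn).mul (Real.continuous_exp.comp_continuousOn (hPcont.mono hIci))
    · intro u hu
      rw [interior_Ici, Set.mem_Ioi] at hu
      exact (hdg u hu).differentiableAt.differentiableWithinAt
    · intro u hu
      rw [interior_Ici, Set.mem_Ioi] at hu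
      rw [(hdg u hu).deriv]
      have hxle : x u ≤ x (τ u) :=
        hanti (Set.mem_Ici.2 (hτT4 u hu.le)) (Set.mem_Ici.2 (by linarith)) (hτ_le u (by linarith))
      have hpu : 0 ≤ p u := hp_nonneg u (by linarith)
      have he : 0 < Real.exp (P u) := Real.exp_pos _
      nlinarith [mul_nonneg (mul_nonneg he.le hpu) (sub_nonneg.2 hxle)]
  -- key estimate
  have hkey : ∀ a b : ℝ, T4 ≤ a → a ≤ b → x b * Real.exp (∫ s in a..b, p s) ≤ x a := by
    intro a b ha hab
    have hat0 : t0 ≤ a := by linarith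
    have hbt0 : t0 ≤ b := by linarith
    have hg : x b * Real.exp (P b) ≤ x a * Real.exp (P a) :=
      hganti (Set.mem_Ici.2 ha) (Set.mem_Ici.2 (le_trans ha hab)) hab
    have hsub : P b - P a = ∫ s in a..b, p s :=
      intervalIntegral.integral_interval_sub_left (hPint t0 b le_rfl hbt0) (hPint t0 a le_rfl hat0)
    have h2 : x b * Real.exp (∫ s in a..b, p s) = (x b * Real.exp (P b)) / Real.exp (P a) := by
      rw [← hsub, Real.exp_sub]; ring
    rw [h2, div_le_iff₀ (Real.exp_pos _)]
    exact hg
  -- T5, T6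
  obtain ⟨N5, hN5⟩ := eventually_atTop.1 (hτ_tendsto.eventually_ge_atTop T4)
  set T5 := max N5 T4 with hT5def
  have hT5T4 : T4 ≤ T5 := le_max_right _ _
  have hτT5 : ∀ t, T5 ≤ t → T4 ≤ τ t := fun t ht => hN5 t (le_trans (le_max_left _ _) ht)
  obtain ⟨N6, hN6⟩ := eventually_atTop.1 (hτ_tendsto.eventually_ge_atTop T5)
  set T6 := max N6 T5 with hT6def
  have hT6T5 : T5 ≤ T6 := le_max_right _ _
  have hτT6 : ∀ t, T6 ≤ t → T5 ≤ τ t := fun t ht => hN6 t (le_trans (le_max_left _ _) ht)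
  -- main bound
  have hmain : ∀ t, T6 ≤ t →
      0 ≤ (∫ s in σ t..t, p s * Real.exp (∫ ξ in τ s..σ t, p ξ)) ∧
      (∫ s in σ t..t, p s * Real.exp (∫ ξ in τ s..σ t, p ξ)) ≤ 1 := by
    intro t ht
    have ht5 : T5 ≤ t := le_trans hT6T5 ht
    have ht4 : T4 ≤ t := le_trans hT5T4 ht5
    have ht0 : t0 ≤ t := by linarith
    have hστ := hσ t ht0
    have hbdd : BddAbove (τ '' Set.Icc t0 t) := by
      refine ⟨t, ?_⟩
      rintro y ⟨u, hu, rfl⟩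
      exact le_trans (hτ_le u hu.1) hu.2
    have hne : (τ '' Set.Icc t0 t).Nonempty := ⟨τ t, t, ⟨ht0, le_rfl⟩, rfl⟩
    have hσ_le_t : σ t ≤ t := by
      rw [hστ]
      apply csSup_le hne
      rintro y ⟨u, hu, rfl⟩
      exact le_trans (hτ_le u hu.1) hu.2
    have hτt_le : τ t ≤ σ t := by
      rw [hστ]; exact le_csSup hbdd ⟨t, ⟨ht0, le_rfl⟩, rfl⟩
    have hσT5 : T5 ≤ σ t := le_trans (hτT6 t ht) hτt_le
    have hσt0 : t0 ≤ σ t := by linarith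
    have hsub : Set.Icc (σ t) t ⊆ Set.Ici t0 := fun y hy => le_trans hσt0 hy.1
    have hτs_le : ∀ s, s ∈ Set.Icc (σ t) t → τ s ≤ σ t := by
      intro s hs
      rw [hστ]
      exact le_csSup hbdd ⟨s, ⟨le_trans hσt0 hs.1, hs.2⟩, rfl⟩
    have hτs_ge : ∀ s, s ∈ Set.Icc (σ t) t → T4 ≤ τ s :=
      fun s hs => hτT5 s (le_trans hσT5 hs.1)
    have hτs_t0 : ∀ s, s ∈ Set.Icc (σ t) t → t0 < τ s :=
      fun s hs => lt_of_lt_of_le (by linarith) (hτs_ge s hs)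
    -- FTC
    have hint1 : IntervalIntegrable (fun s => p s * x (τ s)) volume (σ t) t := by
      apply ContinuousOn.intervalIntegrable
      rw [Set.uIcc_of_le hσ_le_t]
      exact (hp_cont.mono hsub).mul (hx_cont.comp_continuousOn (hτ_cont.mono hsub))
    have hFTC : (∫ s in σ t..t, -(p s * x (τ s))) = x t - x (σ t) := by
      apply intervalIntegral.integral_eq_sub_of_hasDerivAt
      · intro s hs
        rw [Set.uIcc_of_le hσ_le_t] at hs
        exact hderiv s (by have := hs.1; linarith)
      · exact hint1.neg
    have hFTC' : (∫ s in σ t..t, p s * x (τ s)) = x (σ t) - x t := by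
      rw [intervalIntegral.integral_neg] at hFTC; linarith
    set c := x (σ t) with hc
    have hcpos : 0 < c := hpos _ (by linarith)
    have hEq : ∀ s ∈ Set.Icc (σ t) t, (∫ ξ in τ s..σ t, p ξ) = P (σ t) - P (τ s) := by
      intro s hs
      exact (intervalIntegral.integral_interval_sub_left (hPint t0 (σ t) le_rfl hσt0)
        (hPint t0 (τ s) le_rfl (hτs_t0 s hs).le)).symm
    have hF_cont : ContinuousOn (fun s => p s * (c * Real.exp (P (σ t) - P (τ s))))
        (Set.Icc (σ t) t) := by
      apply (hp_cont.mono hsub).mul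
      apply continuousOn_const.mul
      apply Real.continuous_exp.comp_continuousOn
      apply continuousOn_const.sub
      exact hPcont.comp (hτ_cont.mono hsub) (fun s hs => hτs_t0 s hs)
    have hintF : IntervalIntegrable (fun s => p s * (c * Real.exp (P (σ t) - P (τ s))))
        volume (σ t) t := by
      apply ContinuousOn.intervalIntegrable
      rwa [Set.uIcc_of_le hσ_le_t]
    have hmono : (∫ s in σ t..t, p s * (c * Real.exp (P (σ t) - P (τ s)))) ≤
        ∫ s in σ t..t, p s * x (τ s) := by
      apply intervalIntegral.integral_mono_on hσ_le_t hintF hint1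
      intro s hs
      have h1 : x (σ t) * Real.exp (∫ ξ in τ s..σ t, p ξ) ≤ x (τ s) :=
        hkey (τ s) (σ t) (hτs_ge s hs) (hτs_le s hs)
      rw [hEq s hs] at h1
      exact mul_le_mul_of_nonneg_left h1 (hp_nonneg s (le_trans hσt0 hs.1))
    have hIt : (∫ s in σ t..t, p s * Real.exp (∫ ξ in τ s..σ t, p ξ)) =
        (∫ s in σ t..t, p s * Real.exp (P (σ t) - P (τ s))) := by
      apply intervalIntegral.integral_congr
      intro s hs
      rw [Set.uIcc_of_le hσ_le_t] at hs
      simp only [hEq s hs]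
    have hpull : (∫ s in σ t..t, p s * (c * Real.exp (P (σ t) - P (τ s)))) =
        c * ∫ s in σ t..t, p s * Real.exp (P (σ t) - P (τ s)) := by
      rw [← intervalIntegral.integral_const_mul]
      apply intervalIntegral.integral_congr
      intro s _
      ring
    constructor
    · apply intervalIntegral.integral_nonneg hσ_le_t
      intro s hs
      exact mul_nonneg (hp_nonneg s (le_trans hσt0 hs.1)) (Real.exp_pos _).le
    · have hle : c * (∫ s in σ t..t, p s * Real.exp (P (σ t) - P (τ s))) ≤ c := by
        rw [← hpull]
        calc (∫ s in σ t..t, p s * (c * Real.exp (P (σ t) - P (τ s))))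
            ≤ ∫ s in σ t..t, p s * x (τ s) := hmono
          _ = x (σ t) - x t := hFTC'
          _ ≤ c := by have := hpos t (by linarith); rw [← hc]; linarith
      rw [hIt]
      exact (mul_le_iff_le_one_right hcpos).mp hle
  -- conclude
  have hub : ∀ᶠ t in (atTop : Filter ℝ),
      (∫ s in σ t..t, p s * Real.exp (∫ ξ in τ s..σ t, p ξ)) ≤ 1 := by
    filter_upwards [eventually_ge_atTop T6] with t ht using (hmain t ht).2
  have hlb : ∀ᶠ t in (atTop : Filter ℝ),
      (0:ℝ) ≤ (∫ s in σ t..t, p s * Real.exp (∫ ξ in τ s..σ t, p ξ)) := by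
    filter_upwards [eventually_ge_atTop T6] with t ht using (hmain t ht).1
  have hcob : IsCoboundedUnder (· ≤ ·) (atTop : Filter ℝ)
      (fun t : ℝ => ∫ s in σ t..t, p s * Real.exp (∫ ξ in τ s..σ t, p ξ)) := by
    apply IsBounded.isCobounded_flip (r := (· ≥ ·))
    exact ⟨0, eventually_map.2 hlb⟩
  have h1 : Filter.limsup (fun t : ℝ =>
      ∫ s in σ t..t, p s * Real.exp (∫ ξ in τ s..σ t, p ξ)) atTop ≤ 1 :=
    limsup_le_of_le hcob hub
  linarith

/-- **(Braverman–Karpuz, 2011.)** Let `σ t = sup {τ s : t₀ ≤ s ≤ t}`. If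
`limsup_{t→∞} ∫_{σ t}^{t} p s · exp(∫_{τ s}^{σ t} p ξ dξ) ds > 1`, then every
solution of `x'(t) + p t * x (τ t) = 0` is oscillatory. -/
theorem oscillation_braverman_karpuz
    (t0 : ℝ) (p τ : ℝ → ℝ)
    (hp_cont : ContinuousOn p (Set.Ici t0))
    (hp_nonneg : ∀ t, t0 ≤ t → 0 ≤ p t)
    (hτ_cont : ContinuousOn τ (Set.Ici t0))
    (hτ_nonneg : ∀ t, t0 ≤ t → 0 ≤ τ t)
    (hτ_le : ∀ t, t0 ≤ t → τ t ≤ t)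
    (hτ_tendsto : Tendsto τ atTop atTop)
    (σ : ℝ → ℝ)
    (hσ : ∀ t, t0 ≤ t → σ t = sSup (τ '' Set.Icc t0 t))
    (hlimsup :
      Filter.limsup (fun t : ℝ =>
        ∫ s in σ t..t, p s * Real.exp (∫ ξ in τ s..σ t, p ξ)) atTop > 1)
    (x : ℝ → ℝ) (hx_cont : Continuous x)
    (hx_sol : ∃ T, t0 ≤ T ∧ ∀ t, T ≤ t →
      HasDerivAt x (-(p t * x (τ t))) t) :
    ∀ T : ℝ, ∃ t, T ≤ t ∧ x t = 0 := by
  intro T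
  by_contra hcon
  push_neg at hcon
  obtain ⟨T0, hT0t0, hderiv⟩ := hx_sol
  set A := max T T0 with hAdef
  have hAt0 : t0 ≤ A := le_trans hT0t0 (le_max_right _ _)
  have hderivA : ∀ t, A ≤ t → HasDerivAt x (-(p t * x (τ t))) t :=
    fun t ht => hderiv t (le_trans (le_max_right _ _) ht)
  have hne : ∀ t, A ≤ t → x t ≠ 0 :=
    fun t ht => hcon t (le_trans (le_max_left _ _) ht)
  have hsign : (∀ t, A ≤ t → 0 < x t) ∨ (∀ t, A ≤ t → x t < 0) := by
    rcases lt_or_gt_of_ne (hne A le_rfl) with h | h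
    · right
      intro t ht
      by_contra hle
      push_neg at hle
      have hxt : 0 < x t := lt_of_le_of_ne hle (Ne.symm (hne t ht))
      obtain ⟨z, hzmem, hz0⟩ :=
        intermediate_value_Icc ht hx_cont.continuousOn (Set.mem_Icc.2 ⟨h.le, hxt.le⟩)
      exact hne z hzmem.1 hz0
    · left
      intro t ht
      by_contra hle
      push_neg at hle
      have hxt : x t < 0 := lt_of_le_of_ne hle (hne t ht)
      obtain ⟨z, hzmem, hz0⟩ :=
        intermediate_value_Icc' ht hx_cont.continuousOn (Set.mem_Icc.2 ⟨hxt.le, h.le⟩)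
      exact hne z hzmem.1 hz0
  rcases hsign with hp' | hn'
  · exact aux_false t0 p τ hp_cont hp_nonneg hτ_cont hτ_le hτ_tendsto σ hσ hlimsup
      x hx_cont A hAt0 hderivA hp'
  · refine aux_false t0 p τ hp_cont hp_nonneg hτ_cont hτ_le hτ_tendsto σ hσ hlimsup
      (fun u => -x u) (hx_cont.neg) A hAt0 ?_ ?_
    · intro t ht
      have := (hderivA t ht).neg
      simp only [neg_neg] at this ⊢
      exact this.congr_deriv (by ring)
    · intro t ht
      simpa using (hn' t ht)
end

section
/- Consider the equation x'(t) + ∑_{i=1}^m p_i(t) x(t − τ_i(t)) = 0, where the delay functions τ_i(t) ≥ 0 are continuous and uniformly bounded above by a constant τ_0 > 0. If liminf_{t→∞} ∑_{i=1}^m τ_i(t) p_i(t) > 1/e, then every solution of the equation is oscillatory. -/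
open Real Filter MeasureTheory

private lemma e_mul_le_exp (z : ℝ) : Real.exp 1 * z ≤ Real.exp z := by
  have h := Real.add_one_le_exp (z - 1)
  have h2 : Real.exp (z - 1) * Real.exp 1 = Real.exp z := by
    rw [← Real.exp_add]; ring_nf
  nlinarith [Real.exp_pos 1, Real.exp_pos (z - 1)]

set_option maxHeartbeats 1000000 in
private lemma hy_key
    (m : ℕ) (t0 : ℝ) (p τ : Fin m → ℝ → ℝ) (τ0 : ℝ) (hτ0 : 0 < τ0)
    (hp : ∀ i t, t0 ≤ t → 0 ≤ p i t)
    (hτn : ∀ i t, t0 ≤ t → 0 ≤ τ i t)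
    (hτb : ∀ i t, t0 ≤ t → τ i t ≤ τ0)
    (c : ℝ) (hce : 1 / Real.exp 1 < c)
    (y : ℝ → ℝ) (B : ℝ) (hBt0 : t0 ≤ B)
    (hcF : ∀ t, B ≤ t → c ≤ ∑ i : Fin m, τ i t * p i t)
    (hypos : ∀ t, B ≤ t → 0 < y t)
    (hysol : ∀ t, B ≤ t → HasDerivAt y (-(∑ i : Fin m, p i t * y (t - τ i t))) t) :
    False := by
  have he1 : (0:ℝ) < Real.exp 1 := Real.exp_pos 1
  have hc0 : 0 < c := lt_trans (by positivity) hce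
  set ρ := Real.exp 1 * c with hρdef
  have hρ1 : 1 < ρ := by
    have := (div_lt_iff₀ he1).mp hce
    rw [hρdef]; linarith [mul_comm c (Real.exp 1)]
  have hρ0 : 0 < ρ := lt_trans one_pos hρ1
  set T3 := B + τ0 with hT3def
  set u : ℝ → ℝ := fun s => -Real.log (y s) with hudef
  set lam : ℝ → ℝ := fun s => ∑ i : Fin m, p i s * (y (s - τ i s) / y s) with hlamdef
  -- derivative of u
  have hu' : ∀ t, T3 ≤ t → HasDerivAt u (lam t) t := by
    intro t ht
    have hB : B ≤ t := by linarith
    have hyt := hypos t hB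
    have h1 := ((hysol t hB).log (ne_of_gt hyt)).neg
    have h2 : lam t = -(-(∑ i : Fin m, p i t * y (t - τ i t)) / y t) := by
      rw [hlamdef]
      simp only [neg_div, neg_neg, Finset.sum_div]
      exact Finset.sum_congr rfl fun i _ => (mul_div_assoc _ _ _).symm
    rw [hudef, h2]
    exact h1
  -- delayed argument is ≥ B
  have hdelB : ∀ (i : Fin m) t, T3 ≤ t → B ≤ t - τ i t := by
    intro i t ht
    have hBt : B ≤ t := by linarith
    have h1 := hτb i t (le_trans hBt0 hBt)
    linarith
  have hlam0 : ∀ t, T3 ≤ t → 0 ≤ lam t := by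
    intro t ht
    have hBt : B ≤ t := by linarith
    rw [hlamdef]
    exact Finset.sum_nonneg fun i _ => mul_nonneg (hp i t (le_trans hBt0 hBt))
      (le_of_lt (div_pos (hypos _ (hdelB i t ht)) (hypos t hBt)))
  -- ratio identity
  have hratio : ∀ t s, B ≤ s → B ≤ t → y s / y t = Real.exp (u t - u s) := by
    intro t s hs ht
    rw [hudef]
    simp only
    rw [show -Real.log (y t) - -Real.log (y s) = Real.log (y s) - Real.log (y t) by ring,
      Real.exp_sub, Real.exp_log (hypos s hs), Real.exp_log (hypos t ht)]
  -- mean value inequality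
  have hmono : ∀ μ a b, T3 ≤ a → a ≤ b → (∀ s, a ≤ s → s ≤ b → μ ≤ lam s) →
      μ * (b - a) ≤ u b - u a := by
    intro μ a b hT3a hab hl
    have hg : ∀ s ∈ Set.Icc a b, HasDerivAt (fun r => u r - μ * r) (lam s - μ) s := by
      intro s hs
      exact (hu' s (le_trans hT3a hs.1)).sub (by simpa using (hasDerivAt_id s).const_mul μ)
    have hmo : MonotoneOn (fun r => u r - μ * r) (Set.Icc a b) := by
      apply monotoneOn_of_deriv_nonneg (convex_Icc a b)
      · intro s hs; exact (hg s hs).continuousAt.continuousWithinAt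
      · intro s hs
        rw [interior_Icc] at hs
        exact (hg s (Set.Ioo_subset_Icc_self hs)).differentiableAt.differentiableWithinAt
      · intro s hs
        rw [interior_Icc] at hs
        rw [(hg s (Set.Ioo_subset_Icc_self hs)).deriv]
        have := hl s hs.1.le hs.2.le
        linarith
    have h2 := hmo (Set.left_mem_Icc.2 hab) (Set.right_mem_Icc.2 hab) hab
    simp only at h2
    linarith
  have humono : ∀ a b, T3 ≤ a → a ≤ b → u a ≤ u b := by
    intro a b ha hab
    have := hmono 0 a b ha hab (fun s hs _ => hlam0 s (le_trans ha hs))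
    nlinarith
  -- the step lemma
  have hstep : ∀ μ h a, 0 < μ → 0 < h → B + 2*τ0 ≤ a →
      Real.exp 1 * (μ * τ0) ≤ Real.exp (μ * h) →
      (∀ s, a ≤ s → μ ≤ lam s) → ∀ t, a + h ≤ t → ρ * μ ≤ lam t := by
    intro μ h a hμ hh ha hexp hlow t ht
    have hBt : B ≤ t := by linarith
    have ht0t : t0 ≤ t := le_trans hBt0 hBt
    have hterm : ∀ i ∈ (Finset.univ : Finset (Fin m)),
        Real.exp 1 * μ * (τ i t * p i t) ≤ p i t * (y (t - τ i t) / y t) := by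
      intro i _
      have hpi := hp i t ht0t
      have hτi0 := hτn i t ht0t
      have hτiτ0 := hτb i t ht0t
      have hrw := hratio t (t - τ i t) (by linarith) hBt
      have hkey : Real.exp 1 * (μ * τ i t) ≤ Real.exp (u t - u (t - τ i t)) := by
        rcases le_or_gt (τ i t) h with hc1 | hc1
        · have h1 : μ * τ i t ≤ u t - u (t - τ i t) := by
            have := hmono μ (t - τ i t) t (by linarith) (by linarith)
              (fun s hs _ => hlow s (by linarith))
            linarith
          calc Real.exp 1 * (μ * τ i t) ≤ Real.exp (μ * τ i t) := e_mul_le_exp _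
            _ ≤ _ := Real.exp_le_exp.2 h1
        · have h1 : μ * h ≤ u t - u (t - h) := by
            have := hmono μ (t - h) t (by linarith) (by linarith)
              (fun s hs _ => hlow s (by linarith))
            linarith
          have h2 : u (t - τ i t) ≤ u (t - h) := humono _ _ (by linarith) (by linarith)
          have h3 : Real.exp 1 * (μ * τ i t) ≤ Real.exp 1 * (μ * τ0) :=
            mul_le_mul_of_nonneg_left (mul_le_mul_of_nonneg_left hτiτ0 hμ.le) he1.le
          calc Real.exp 1 * (μ * τ i t) ≤ Real.exp 1 * (μ * τ0) := h3
            _ ≤ Real.exp (μ * h) := hexp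
            _ ≤ Real.exp (u t - u (t - τ i t)) := Real.exp_le_exp.2 (by linarith)
      rw [hrw]
      calc Real.exp 1 * μ * (τ i t * p i t) = p i t * (Real.exp 1 * (μ * τ i t)) := by ring
        _ ≤ p i t * Real.exp (u t - u (t - τ i t)) := mul_le_mul_of_nonneg_left hkey hpi
    have hsum := Finset.sum_le_sum hterm
    rw [← Finset.mul_sum] at hsum
    have hF := hcF t hBt
    have hpos' : 0 < Real.exp 1 * μ := by positivity
    have hlamt : lam t = ∑ i : Fin m, p i t * (y (t - τ i t) / y t) := by rw [hlamdef]
    rw [hlamt]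
    calc ρ * μ = Real.exp 1 * μ * c := by rw [hρdef]; ring
      _ ≤ Real.exp 1 * μ * (∑ i : Fin m, τ i t * p i t) := by nlinarith
      _ ≤ _ := hsum
  -- the base bound
  have hbase : ∀ t, B + 2*τ0 ≤ t → c / τ0 ≤ lam t := by
    intro t ht
    have hBt : B ≤ t := by linarith
    have ht0t : t0 ≤ t := le_trans hBt0 hBt
    have hterm : ∀ i ∈ (Finset.univ : Finset (Fin m)),
        τ i t * p i t ≤ τ0 * (p i t * (y (t - τ i t) / y t)) := by
      intro i _
      have hpi := hp i t ht0t
      have hτiτ0 := hτb i t ht0t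
      have hτi0 := hτn i t ht0t
      have hr1 : (1:ℝ) ≤ y (t - τ i t) / y t := by
        rw [hratio t (t - τ i t) (by linarith) hBt]
        have h2 := humono (t - τ i t) t (by linarith) (by linarith)
        nlinarith [Real.add_one_le_exp (u t - u (t - τ i t))]
      nlinarith [mul_le_mul_of_nonneg_left hr1 (mul_nonneg hτ0.le hpi),
        mul_le_mul_of_nonneg_right hτiτ0 hpi]
    have hsum := Finset.sum_le_sum hterm
    rw [← Finset.mul_sum] at hsum
    have hF := hcF t hBt
    rw [div_le_iff₀ hτ0, hlamdef]
    simp only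
    nlinarith
  -- constants
  set σ := Real.sqrt ρ with hσdef
  have hσsq : σ * σ = ρ := Real.mul_self_sqrt hρ0.le
  have hσ1 : 1 < σ := by nlinarith [Real.sqrt_nonneg ρ]
  have hσ0 : 0 < σ := lt_trans one_pos hσ1
  set L := Real.log ρ with hLdef
  have hL0 : 0 < L := Real.log_pos hρ1
  set M := max 0 (Real.log c) with hMdef
  have hM0 : 0 ≤ M := le_max_left _ _
  have hMc : Real.log c ≤ M := le_max_right _ _
  set D := L / (σ - 1) with hDdef
  have hD0 : 0 < D := div_pos hL0 (by linarith)
  have hDL : D * (σ - 1) = L := div_mul_cancel₀ _ (by intro h0; rw [sub_eq_zero] at h0; exact absurd h0.symm (ne_of_lt hσ1))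
  set μ0 := c / τ0 with hμ0def
  have hμ00 : 0 < μ0 := div_pos hc0 hτ0
  have h1MD : 0 < 1 + M + D := by linarith
  set C := (1 + M + D) * (τ0 / c) with hCdef
  have hC0 : 0 < C := mul_pos h1MD (div_pos hτ0 hc0)
  set A0 := B + 2*τ0 with hA0def
  set aa : ℕ → ℝ := fun k => A0 + C * ∑ j ∈ Finset.range k, (1/σ)^j with haadef
  have hr01 : (0:ℝ) ≤ 1/σ := by positivity
  have hr1 : 1/σ < 1 := by rw [div_lt_one hσ0]; exact hσ1
  have haaA0 : ∀ k, A0 ≤ aa k := by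
    intro k
    have h0 : 0 ≤ ∑ j ∈ Finset.range k, (1/σ)^j :=
      Finset.sum_nonneg fun j _ => pow_nonneg hr01 j
    rw [haadef]
    simp only
    linarith [mul_nonneg hC0.le h0]
  set tinf := A0 + C * (1 - 1/σ)⁻¹ with htinfdef
  have htinf : ∀ k, aa k ≤ tinf := by
    intro k
    have hs := Summable.sum_le_tsum (Finset.range k) (fun j _ => pow_nonneg hr01 j)
      (summable_geometric_of_lt_one hr01 hr1)
    rw [tsum_geometric_of_lt_one hr01 hr1] at hs
    rw [haadef, htinfdef]
    simp only
    linarith [mul_le_mul_of_nonneg_left hs hC0.le]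
  -- the exp-condition at level k
  have hexp_k : ∀ k : ℕ, Real.exp 1 * ((μ0 * ρ^k) * τ0) ≤ Real.exp ((μ0 * ρ^k) * (C * (1/σ)^k)) := by
    intro k
    have hσk : (0:ℝ) < σ^k := pow_pos hσ0 k
    have hρk : (0:ℝ) < ρ^k := pow_pos hρ0 k
    have e1 : (μ0 * ρ^k) * τ0 = c * ρ^k := by rw [hμ0def]; field_simp
    have e2 : (μ0 * ρ^k) * (C * (1/σ)^k) = (1 + M + D) * σ^k := by
      rw [hμ0def, hCdef]
      have hρσ : ρ^k = σ^k * σ^k := by rw [← hσsq, mul_pow]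
      rw [hρσ]
      field_simp
      ring_nf
      rw [← mul_pow, mul_inv_cancel₀ hσ0.ne', one_pow]
    rw [e1, e2]
    have e3 : Real.exp 1 * (c * ρ^k) = Real.exp (1 + Real.log c + k * L) := by
      rw [Real.exp_add, Real.exp_add, Real.exp_log hc0, hLdef, Real.exp_nat_mul,
        Real.exp_log hρ0]
      ring
    rw [e3]
    apply Real.exp_le_exp.2
    have hbern : 1 + (k:ℝ) * (σ - 1) ≤ σ^k := by
      have h := one_add_mul_le_pow (by linarith : (-2:ℝ) ≤ σ - 1) k
      have h2 : 1 + (σ - 1) = σ := by ring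
      rw [h2] at h
      exact h
    have hk0 : (0:ℝ) ≤ (k:ℝ) := Nat.cast_nonneg k
    have hkDL : (k:ℝ) * (D * (σ - 1)) = (k:ℝ) * L := by rw [hDL]
    nlinarith [mul_le_mul_of_nonneg_left hbern h1MD.le, hkDL,
      mul_nonneg (mul_nonneg hk0 (by linarith : (0:ℝ) ≤ σ - 1)) hM0,
      mul_nonneg hk0 (by linarith : (0:ℝ) ≤ σ - 1)]
  -- main induction
  have hmain : ∀ k, ∀ t, aa k ≤ t → μ0 * ρ^k ≤ lam t := by
    intro k
    induction k with
    | zero =>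
      intro t ht
      have h0 : aa 0 = A0 := by rw [haadef]; simp
      rw [h0] at ht
      have hb := hbase t (by rw [hA0def] at ht; exact ht)
      simpa [hμ0def] using hb
    | succ k ih =>
      intro t ht
      have hsucc : aa (k+1) = aa k + C * (1/σ)^k := by
        rw [haadef]
        simp only
        rw [Finset.sum_range_succ]
        ring
      have hs := hstep (μ0 * ρ^k) (C * (1/σ)^k) (aa k)
        (mul_pos hμ00 (pow_pos hρ0 k))
        (mul_pos hC0 (pow_pos (div_pos one_pos hσ0) k))
        (by rw [hA0def] at haaA0; exact haaA0 k)
        (hexp_k k) ih t (by rw [hsucc] at ht; linarith)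
      calc μ0 * ρ^(k+1) = ρ * (μ0 * ρ^k) := by ring
        _ ≤ lam t := hs
  -- conclusion
  obtain ⟨k, hk⟩ := pow_unbounded_of_one_lt (lam tinf / μ0) hρ1
  have h1 := hmain k tinf (htinf k)
  rw [div_lt_iff₀ hμ00] at hk
  nlinarith

/-- **(Hunt–Yorke, 1984.)** Consider `x'(t) + ∑ i, p i t * x (t − τ i t) = 0` with
continuous delays `0 ≤ τ i t ≤ τ₀`. If `liminf_{t→∞} ∑ i, τ i t * p i t > 1/e`,
then every solution is oscillatory. -/
theorem oscillation_hunt_yorke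
    (m : ℕ) (hm : 1 ≤ m) (t0 : ℝ)
    (p τ : Fin m → ℝ → ℝ) (τ0 : ℝ) (hτ0_pos : 0 < τ0)
    (hp_cont : ∀ i, ContinuousOn (p i) (Set.Ici t0))
    (hp_nonneg : ∀ i t, t0 ≤ t → 0 ≤ p i t)
    (hτ_cont : ∀ i, ContinuousOn (τ i) (Set.Ici t0))
    (hτ_nonneg : ∀ i t, t0 ≤ t → 0 ≤ τ i t)
    (hτ_bdd : ∀ i t, t0 ≤ t → τ i t ≤ τ0)
    (hliminf : Filter.liminf
      (fun t : ℝ => ∑ i : Fin m, τ i t * p i t) atTop > 1 / Real.exp 1)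
    (x : ℝ → ℝ) (hx_cont : Continuous x)
    (hx_sol : ∃ T, t0 ≤ T ∧ ∀ t, T ≤ t →
      HasDerivAt x (-(∑ i : Fin m, p i t * x (t - τ i t))) t) :
    ∀ T : ℝ, ∃ t, T ≤ t ∧ x t = 0 := by
  by_contra hcon
  push_neg at hcon
  obtain ⟨T1, hT1⟩ := hcon
  obtain ⟨Ts, hTs0, hsol⟩ := hx_sol
  have hFbd : IsBoundedUnder (· ≥ ·) atTop (fun t : ℝ => ∑ i : Fin m, τ i t * p i t) := by
    refine ⟨0, ?_⟩
    rw [eventually_map]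
    filter_upwards [eventually_ge_atTop t0] with t ht
    exact Finset.sum_nonneg fun i _ => mul_nonneg (hτ_nonneg i t ht) (hp_nonneg i t ht)
  set c := (1/Real.exp 1 + liminf (fun t : ℝ => ∑ i : Fin m, τ i t * p i t) atTop)/2 with hcdef
  have hce : 1/Real.exp 1 < c := by rw [hcdef]; linarith [hliminf]
  have hclim : c < liminf (fun t : ℝ => ∑ i : Fin m, τ i t * p i t) atTop := by
    rw [hcdef]; linarith [hliminf]
  have hev := eventually_lt_of_lt_liminf hclim hFbd
  obtain ⟨Tc, hTc⟩ := (eventually_atTop).1 hev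
  set B := max (max T1 Ts) (max t0 Tc) with hBdef
  have hBT1 : T1 ≤ B := le_trans (le_max_left _ _) (le_max_left _ _)
  have hBTs : Ts ≤ B := le_trans (le_max_right _ _) (le_max_left _ _)
  have hBt0 : t0 ≤ B := le_trans (le_max_left _ _) (le_max_right _ _)
  have hBTc : Tc ≤ B := le_trans (le_max_right _ _) (le_max_right _ _)
  have hcF : ∀ t, B ≤ t → c ≤ ∑ i : Fin m, τ i t * p i t :=
    fun t ht => (hTc t (le_trans hBTc ht)).le
  have hxB := hT1 B hBT1
  rcases (Ne.lt_or_gt hxB) with hneg | hpos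
  · -- x is eventually negative; use y = -x
    have hypos : ∀ t, B ≤ t → 0 < -x t := by
      intro t ht
      rcases (Ne.lt_or_gt (hT1 t (le_trans hBT1 ht))) with h | h
      · linarith
      · exfalso
        obtain ⟨s, hsmem, hxs⟩ := intermediate_value_Icc ht (hx_cont.continuousOn)
          (Set.mem_Icc.2 ⟨hneg.le, h.le⟩)
        exact hT1 s (le_trans hBT1 hsmem.1) hxs
    have hysol : ∀ t, B ≤ t →
        HasDerivAt (fun s => -x s) (-(∑ i : Fin m, p i t * (-x (t - τ i t)))) t := by
      intro t ht
      have h1 : HasDerivAt (fun s => -x s) (-(-(∑ i : Fin m, p i t * x (t - τ i t)))) t :=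
        (hsol t (le_trans hBTs ht)).neg
      convert h1 using 1
      simp [mul_neg]
    exact hy_key m t0 p τ τ0 hτ0_pos hp_nonneg hτ_nonneg hτ_bdd c hce
      (fun s => -x s) B hBt0 hcF hypos hysol
  · -- x is eventually positive
    have hypos : ∀ t, B ≤ t → 0 < x t := by
      intro t ht
      rcases (Ne.lt_or_gt (hT1 t (le_trans hBT1 ht))) with h | h
      · exfalso
        obtain ⟨s, hsmem, hxs⟩ := intermediate_value_Icc' ht (hx_cont.continuousOn)
          (Set.mem_Icc.2 ⟨h.le, hpos.le⟩)
        exact hT1 s (le_trans hBT1 hsmem.1) hxs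
      · exact h
    exact hy_key m t0 p τ τ0 hτ0_pos hp_nonneg hτ_nonneg hτ_bdd c hce
      x B hBt0 hcF hypos (fun t ht => hsol t (le_trans hBTs ht))
end

section
/- Suppose there exists a continuous non-decreasing function τ* : [t_0,∞) → ℝ such that τ_i(t) ≤ τ*(t) ≤ t for all t ≥ t_0 and each i = 1,…,m, and liminf_{t→∞} ∫_{τ*(t)}^{t} ∑_{i=1}^m p_i(s) ds > 1/e. Then every solution of the equation x'(t) + ∑_{i=1}^m p_i(t) x(τ_i(t)) = 0 is oscillatory. -/
set_option maxHeartbeats 1000000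

open Real Filter MeasureTheory

private lemma fk_core
    (m : ℕ) (hm : 1 ≤ m) (t0 : ℝ)
    (p τ : Fin m → ℝ → ℝ)
    (hp_cont : ∀ i, ContinuousOn (p i) (Set.Ici t0))
    (hp_nonneg : ∀ i t, t0 ≤ t → 0 ≤ p i t)
    (hτ_cont : ∀ i, ContinuousOn (τ i) (Set.Ici t0))
    (hτ_tendsto : ∀ i, Tendsto (τ i) atTop atTop)
    (τStar : ℝ → ℝ)
    (hτStar_cont : ContinuousOn τStar (Set.Ici t0))
    (hτStar_mono : MonotoneOn τStar (Set.Ici t0))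
    (hτStar_ge : ∀ i t, t0 ≤ t → τ i t ≤ τStar t)
    (hτStar_le : ∀ t, t0 ≤ t → τStar t ≤ t)
    (hliminf : Filter.liminf
      (fun t : ℝ => ∫ s in τStar t..t, ∑ i : Fin m, p i s) atTop >
      1 / Real.exp 1)
    (x : ℝ → ℝ) (hx_cont : Continuous x)
    (T1 : ℝ) (hT1 : t0 ≤ T1)
    (hderiv : ∀ t, T1 ≤ t → HasDerivAt x (-(∑ i : Fin m, p i t * x (τ i t))) t)
    (hpos : ∀ t, T1 ≤ t → 0 < x t) : False := by
  have i0 : Fin m := ⟨0, hm⟩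
  set P : ℝ → ℝ := fun t => ∑ i : Fin m, p i t with hPdef
  have hP_cont : ContinuousOn P (Set.Ici t0) :=
    continuousOn_finset_sum _ fun i _ => hp_cont i
  have hP_nonneg : ∀ t, t0 ≤ t → 0 ≤ P t :=
    fun t ht => Finset.sum_nonneg fun i _ => hp_nonneg i t ht
  have hsub : ∀ a b : ℝ, t0 ≤ a → t0 ≤ b → Set.uIcc a b ⊆ Set.Ici t0 :=
    fun a b ha hb u hu => le_trans (le_min ha hb) hu.1
  have hPint : ∀ a b : ℝ, t0 ≤ a → t0 ≤ b → IntervalIntegrable P volume a b :=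
    fun a b ha hb => (hP_cont.mono (hsub a b ha hb)).intervalIntegrable
  have hxd_cont : ContinuousOn (fun s => -(∑ i : Fin m, p i s * x (τ i s))) (Set.Ici t0) :=
    (continuousOn_finset_sum _ fun i _ =>
      (hp_cont i).mul (hx_cont.comp_continuousOn (hτ_cont i))).neg
  have hτStar_tendsto : Tendsto τStar atTop atTop := by
    refine tendsto_atTop_mono' atTop ?_ (hτ_tendsto i0)
    filter_upwards [eventually_ge_atTop t0] with t ht
    exact hτStar_ge i0 t ht
  -- threshold helper
  have hEv : ∀ M : ℝ, ∃ S : ℝ, max M (t0 + 1) ≤ S ∧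
      ∀ t, S ≤ t → (∀ i, M ≤ τ i t) ∧ M ≤ τStar t := by
    intro M
    have h1 : ∀ᶠ t in atTop, ∀ i, M ≤ τ i t :=
      eventually_all.2 fun i => (hτ_tendsto i).eventually_ge_atTop M
    have h2 : ∀ᶠ t in atTop, M ≤ τStar t := hτStar_tendsto.eventually_ge_atTop M
    obtain ⟨S0, hS0⟩ := eventually_atTop.1 (h1.and h2)
    exact ⟨max (max M (t0 + 1)) S0, le_max_left _ _,
      fun t ht => hS0 t (le_trans (le_max_right _ _) ht)⟩
  -- T2 : beyond T2, all delayed arguments are ≥ T1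
  obtain ⟨T2, hT2ge, hT2⟩ := hEv T1
  have hT1T2 : T1 ≤ T2 := le_trans (le_max_left _ _) hT2ge
  have ht0T2 : t0 + 1 ≤ T2 := le_trans (le_max_right _ _) hT2ge
  have hT2t0 : t0 ≤ T2 := by linarith
  -- x is antitone on [T2, ∞)
  have hanti : AntitoneOn x (Set.Ici T2) := by
    have hd : ∀ u, T2 ≤ u → HasDerivAt x (-(∑ i : Fin m, p i u * x (τ i u))) u :=
      fun u hu => hderiv u (le_trans hT1T2 hu)
    refine antitoneOn_of_deriv_nonpos (convex_Ici T2) hx_cont.continuousOn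
      (fun u hu => (hd u (interior_subset hu)).differentiableAt.differentiableWithinAt)
      (fun u hu => ?_)
    have hu' : T2 ≤ u := interior_subset hu
    rw [(hd u hu').deriv]
    refine neg_nonpos.2 (Finset.sum_nonneg fun i _ => ?_)
    exact mul_nonneg (hp_nonneg i u (le_trans hT2t0 hu'))
      (hpos _ ((hT2 u hu').1 i)).le
  -- T3 : beyond T3, all delayed arguments are ≥ T2
  obtain ⟨T3, hT3ge, hT3⟩ := hEv T2
  have hT2T3 : T2 ≤ T3 := le_trans (le_max_left _ _) hT3ge
  have hT3t0 : t0 ≤ T3 := le_trans hT2t0 hT2T3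
  have hT1T3 : T1 ≤ T3 := le_trans hT1T2 hT2T3
  -- key differential inequality
  have hdineq : ∀ t, T3 ≤ t →
      -(∑ i : Fin m, p i t * x (τ i t)) ≤ -(P t * x (τStar t)) := by
    intro t ht
    have ht0 : t0 ≤ t := le_trans hT3t0 ht
    rw [neg_le_neg_iff]
    have hPx : P t * x (τStar t) = ∑ i : Fin m, p i t * x (τStar t) := by
      rw [hPdef]; rw [Finset.sum_mul]
    rw [hPx]
    refine Finset.sum_le_sum fun i _ => ?_
    refine mul_le_mul_of_nonneg_left ?_ (hp_nonneg i t ht0)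
    exact hanti (Set.mem_Ici.2 ((hT3 t ht).1 i)) (Set.mem_Ici.2 (hT3 t ht).2)
      (hτStar_ge i t ht0)
  -- the constant c
  obtain ⟨c, hce, hcev⟩ :
      ∃ c : ℝ, 1 / Real.exp 1 < c ∧ ∀ᶠ t in atTop, c < ∫ s in τStar t..t, P s := by
    set L := Filter.liminf (fun t : ℝ => ∫ s in τStar t..t, P s) atTop with hL
    refine ⟨(1 / Real.exp 1 + L) / 2, by linarith [hliminf], ?_⟩
    refine eventually_lt_of_lt_liminf (by rw [← hL]; linarith [hliminf]) ?_
    refine ⟨0, ?_⟩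
    rw [eventually_map]
    filter_upwards [eventually_ge_atTop T3] with t ht
    have ht0 : t0 ≤ t := le_trans hT3t0 ht
    have hτt : τStar t ≤ t := hτStar_le t ht0
    refine intervalIntegral.integral_nonneg hτt fun u hu => ?_
    exact hP_nonneg u (le_trans (le_trans hT2t0 (hT3 t ht).2) hu.1)
  have hc0 : 0 < c := lt_trans (by positivity) hce
  have hec1 : 1 < Real.exp 1 * c := by
    rw [div_lt_iff₀ (exp_pos 1)] at hce
    linarith [hce]
  -- T4 : beyond T4, integral ≥ c and delayed args ≥ T3
  obtain ⟨T4', hT4'⟩ := eventually_atTop.1 hcev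
  obtain ⟨T4, hT4ge, hT4⟩ := hEv (max T3 T4')
  have hT3T4 : T3 ≤ T4 := le_trans (le_trans (le_max_left _ _) (le_max_left _ _)) hT4ge
  have ht0T4 : t0 + 1 ≤ T4 := le_trans (le_max_right _ _) hT4ge
  have hT4c : ∀ t, T4 ≤ t → c ≤ ∫ s in τStar t..t, P s := by
    intro t ht
    exact (hT4' t (le_trans (le_trans (le_max_right _ _) (le_max_left _ _))
      (le_trans hT4ge ht))).le
  have hT4τ : ∀ t, T4 ≤ t → T3 ≤ τStar t := by
    intro t ht
    exact le_trans (le_max_left _ _) ((hT4 t ht).2)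
  -- FTC helper
  have hFTC : ∀ a u : ℝ, t0 ≤ a → t0 < u →
      HasDerivAt (fun v => ∫ s in a..v, P s) (P u) u := by
    intro a u ha hu
    exact intervalIntegral.integral_hasDerivAt_right (hPint a u ha hu.le)
      ((hP_cont.mono Set.Ioi_subset_Ici_self).stronglyMeasurableAtFilter isOpen_Ioi u hu)
      (hP_cont.continuousAt (Ici_mem_nhds hu))
  -- Gronwall-type iteration step
  have hstep : ∀ A : ℝ, 1 ≤ A → ∀ S, T4 ≤ S →
      (∀ t, S ≤ t → A * x t ≤ x (τStar t)) →
      ∃ S', S ≤ S' ∧ ∀ t, S' ≤ t → Real.exp (A * c) * x t ≤ x (τStar t) := by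
    intro A hA S hS hratio
    have ht0S : t0 + 1 ≤ S := le_trans ht0T4 hS
    have hT3S : T3 ≤ S := le_trans hT3T4 hS
    have hT1S : T1 ≤ S := le_trans hT1T3 hT3S
    have ht0S' : t0 ≤ S := by linarith
    have hGd : ∀ u, S ≤ u → HasDerivAt (fun v => ∫ s in S..v, P s) (P u) u :=
      fun u hu => hFTC S u ht0S' (by linarith)
    have hFd : ∀ u, S ≤ u → HasDerivAt (fun v => x v * Real.exp (A * ∫ s in S..v, P s))
        (-(∑ i : Fin m, p i u * x (τ i u)) * Real.exp (A * ∫ s in S..u, P s)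
          + x u * (Real.exp (A * ∫ s in S..u, P s) * (A * P u))) u := by
      intro u hu
      exact (hderiv u (le_trans hT1S hu)).mul (((hGd u hu).const_mul A).exp)
    have hFanti : AntitoneOn (fun v => x v * Real.exp (A * ∫ s in S..v, P s))
        (Set.Ici S) := by
      refine antitoneOn_of_deriv_nonpos (convex_Ici S)
        (fun u hu => (hFd u hu).continuousAt.continuousWithinAt)
        (fun u hu => (hFd u (interior_subset hu)).differentiableAt.differentiableWithinAt)
        (fun u hu => ?_)
      have hu' : S ≤ u := interior_subset hu
      rw [(hFd u hu').deriv]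
      have hd1 : -(∑ i : Fin m, p i u * x (τ i u)) ≤ -(P u * x (τStar u)) :=
        hdineq u (le_trans hT3S hu')
      have hd2 : P u * (A * x u) ≤ P u * x (τStar u) :=
        mul_le_mul_of_nonneg_left (hratio u hu') (hP_nonneg u (by linarith))
      have hE : (0:ℝ) < Real.exp (A * ∫ s in S..u, P s) := exp_pos _
      nlinarith [mul_le_mul_of_nonneg_right hd1 hE.le,
        mul_le_mul_of_nonneg_right hd2 hE.le]
    obtain ⟨S', hS'ge, hS'⟩ := hEv S
    have hSS' : S ≤ S' := le_trans (le_max_left _ _) hS'ge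
    refine ⟨S', hSS', fun t ht => ?_⟩
    have hτtS : S ≤ τStar t := (hS' t ht).2
    have ht0t : t0 ≤ t := by linarith [le_trans (le_trans ht0S hSS') ht]
    have hτle : τStar t ≤ t := hτStar_le t ht0t
    have hτt0 : t0 ≤ τStar t := by linarith [hτtS]
    have hcomp := hFanti (Set.mem_Ici.2 hτtS) (Set.mem_Ici.2 (le_trans hSS' ht)) hτle
    simp only at hcomp
    have hsplit : (∫ s in S..t, P s) = (∫ s in S..τStar t, P s) + ∫ s in τStar t..t, P s :=
      (intervalIntegral.integral_add_adjacent_intervals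
        (hPint S (τStar t) ht0S' hτt0) (hPint (τStar t) t hτt0 ht0t)).symm
    have hIc : c ≤ ∫ s in τStar t..t, P s := hT4c t (le_trans (le_trans hS hSS') ht)
    have hkey : x t * Real.exp (A * ∫ s in τStar t..t, P s) ≤ x (τStar t) := by
      have hEτ : (0:ℝ) < Real.exp (A * ∫ s in S..τStar t, P s) := exp_pos _
      have h1 : (x t * Real.exp (A * ∫ s in τStar t..t, P s)) *
          Real.exp (A * ∫ s in S..τStar t, P s)
          ≤ x (τStar t) * Real.exp (A * ∫ s in S..τStar t, P s) := by
        calc (x t * Real.exp (A * ∫ s in τStar t..t, P s)) *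
            Real.exp (A * ∫ s in S..τStar t, P s)
            = x t * Real.exp (A * ∫ s in S..t, P s) := by
              rw [hsplit, mul_add, Real.exp_add]; ring
          _ ≤ x (τStar t) * Real.exp (A * ∫ s in S..τStar t, P s) := hcomp
      exact le_of_mul_le_mul_right h1 hEτ
    have hexp : Real.exp (A * c) ≤ Real.exp (A * ∫ s in τStar t..t, P s) :=
      Real.exp_le_exp.2 (mul_le_mul_of_nonneg_left hIc (by linarith))
    calc Real.exp (A * c) * x t ≤ Real.exp (A * ∫ s in τStar t..t, P s) * x t :=
          mul_le_mul_of_nonneg_right hexp (hpos t (le_trans hT1S (le_trans hSS' ht))).le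
      _ = x t * Real.exp (A * ∫ s in τStar t..t, P s) := mul_comm _ _
      _ ≤ x (τStar t) := hkey
  -- exp y ≥ e y
  have hey : ∀ y : ℝ, Real.exp 1 * y ≤ Real.exp y := by
    intro y
    have h := Real.add_one_le_exp (y - 1)
    calc Real.exp 1 * y = Real.exp 1 * ((y - 1) + 1) := by ring
      _ ≤ Real.exp 1 * Real.exp (y - 1) :=
          mul_le_mul_of_nonneg_left (by linarith) (exp_pos 1).le
      _ = Real.exp y := by rw [← Real.exp_add]; ring_nf
  -- iteration
  have hiter : ∀ n : ℕ, ∃ S, T4 ≤ S ∧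
      ∀ t, S ≤ t → (Real.exp 1 * c) ^ n * x t ≤ x (τStar t) := by
    intro n
    induction n with
    | zero =>
      refine ⟨T4, le_refl _, fun t ht => ?_⟩
      rw [pow_zero, one_mul]
      have ht3 : T3 ≤ t := le_trans hT3T4 ht
      have ht0 : t0 ≤ t := le_trans hT3t0 ht3
      exact hanti (Set.mem_Ici.2 (hT3 t ht3).2)
        (Set.mem_Ici.2 (le_trans hT2T3 ht3))
        (hτStar_le t ht0)
    | succ n ih =>
      obtain ⟨S, hS, hratio⟩ := ih
      have hA1 : 1 ≤ (Real.exp 1 * c) ^ n := one_le_pow₀ hec1.le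
      obtain ⟨S', hS', hratio'⟩ := hstep _ hA1 S hS hratio
      refine ⟨S', le_trans hS hS', fun t ht => ?_⟩
      refine le_trans ?_ (hratio' t ht)
      refine mul_le_mul_of_nonneg_right ?_
        (hpos t (le_trans hT1T3 (le_trans hT3T4 (le_trans (le_trans hS hS') ht)))).le
      calc (Real.exp 1 * c) ^ (n + 1) = Real.exp 1 * ((Real.exp 1 * c) ^ n * c) := by ring
        _ ≤ Real.exp ((Real.exp 1 * c) ^ n * c) := hey _
  -- choose n with (e c)^n > 4 / c^2
  obtain ⟨n, hn⟩ : ∃ n : ℕ, 4 / c ^ 2 < (Real.exp 1 * c) ^ n :=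
    pow_unbounded_of_one_lt _ hec1
  obtain ⟨S, hSge, hratio⟩ := hiter n
  -- the final time T5
  obtain ⟨T5, hT5ge, hT5⟩ := hEv (max S T4)
  have hST5 : S ≤ τStar T5 := le_trans (le_max_left _ _) ((hT5 T5 le_rfl).2)
  have hT4T5τ : T4 ≤ τStar T5 := le_trans (le_max_right _ _) ((hT5 T5 le_rfl).2)
  have hT4S : T4 ≤ S := hSge
  have hT3a : T3 ≤ τStar T5 := le_trans hT3T4 hT4T5τ
  have ht0a : t0 ≤ τStar T5 := le_trans hT3t0 hT3a
  have ht0T5 : t0 ≤ T5 := by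
    have := le_trans (le_max_right _ _) hT5ge; linarith
  have haT5 : τStar T5 ≤ T5 := hτStar_le T5 ht0T5
  have hT4T5 : T4 ≤ T5 := le_trans hT4T5τ haT5
  -- the intermediate point ξ
  have hg_cont : ContinuousOn (fun v => ∫ s in τStar T5..v, P s)
      (Set.Icc (τStar T5) T5) := by
    intro u hu
    have : t0 < u := by
      have : t0 + 1 ≤ τStar T5 := le_trans ht0T4 hT4T5τ
      linarith [hu.1]
    exact (hFTC (τStar T5) u ht0a this).continuousAt.continuousWithinAt
  have hgmem : c / 2 ∈ Set.Icc ((fun v => ∫ s in τStar T5..v, P s) (τStar T5))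
      ((fun v => ∫ s in τStar T5..v, P s) T5) := by
    simp only [intervalIntegral.integral_same]
    constructor
    · linarith
    · have := hT4c T5 hT4T5
      linarith
  obtain ⟨ξ, hξmem, hξval⟩ := intermediate_value_Icc haT5 hg_cont hgmem
  simp only at hξval
  have hξ1 : τStar T5 ≤ ξ := hξmem.1
  have hξ2 : ξ ≤ T5 := hξmem.2
  have ht0ξ : t0 ≤ ξ := le_trans ht0a hξ1
  have hT3ξ : T3 ≤ ξ := le_trans hT3a hξ1
  have hT1ξ : T1 ≤ ξ := le_trans hT1T3 hT3ξ
  -- estimate machine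
  have hest : ∀ a' b' z : ℝ, T3 ≤ a' → a' ≤ b' →
      (∀ s, s ∈ Set.Icc a' b' → x z ≤ x (τStar s)) →
      c / 2 ≤ (∫ s in a'..b', P s) → 0 ≤ x z → c / 2 * x z ≤ x a' := by
    intro a' b' z ha' hab hz hintc hxz
    have ht0a' : t0 ≤ a' := le_trans hT3t0 ha'
    have ht0b' : t0 ≤ b' := le_trans ht0a' hab
    have hsubI : Set.uIcc a' b' ⊆ Set.Ici t0 := hsub a' b' ht0a' ht0b'
    have h1 : (∫ s in a'..b', -(∑ i : Fin m, p i s * x (τ i s))) = x b' - x a' := by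
      refine intervalIntegral.integral_eq_sub_of_hasDerivAt (fun s hs => ?_)
        ((hxd_cont.mono hsubI).intervalIntegrable)
      rw [Set.uIcc_of_le hab] at hs
      exact hderiv s (le_trans (le_trans hT1T3 ha') hs.1)
    have h2 : (∫ s in a'..b', -(∑ i : Fin m, p i s * x (τ i s)))
        ≤ ∫ s in a'..b', -(P s * x z) := by
      refine intervalIntegral.integral_mono_on hab
        ((hxd_cont.mono hsubI).intervalIntegrable)
        ((((hP_cont.mul continuousOn_const).neg).mono hsubI).intervalIntegrable)
        (fun s hs => ?_)
      have hsT3 : T3 ≤ s := le_trans ha' hs.1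
      have hst0 : t0 ≤ s := le_trans hT3t0 hsT3
      refine le_trans (hdineq s hsT3) ?_
      exact neg_le_neg (mul_le_mul_of_nonneg_left (hz s hs) (hP_nonneg s hst0))
    have h3 : (∫ s in a'..b', -(P s * x z)) = -x z * ∫ s in a'..b', P s := by
      have heq : (fun s => -(P s * x z)) = fun s => -x z * P s := by
        funext s; ring
      rw [heq, intervalIntegral.integral_const_mul]
    have h4 : x z * (c / 2) ≤ x z * ∫ s in a'..b', P s :=
      mul_le_mul_of_nonneg_left hintc hxz
    have hxb : 0 < x b' := hpos b' (le_trans (le_trans hT1T3 ha') hab)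
    nlinarith [h1, h2, h3, h4]
  -- first estimate : c/2 * x (τStar T5) ≤ x ξ
  have hIξT5 : c / 2 ≤ ∫ s in ξ..T5, P s := by
    have hadd : (∫ s in τStar T5..ξ, P s) + (∫ s in ξ..T5, P s)
        = ∫ s in τStar T5..T5, P s :=
      intervalIntegral.integral_add_adjacent_intervals
        (hPint _ _ ht0a ht0ξ) (hPint _ _ ht0ξ ht0T5)
    have := hT4c T5 hT4T5
    rw [hξval] at hadd
    linarith
  have he1 : c / 2 * x (τStar T5) ≤ x ξ := by
    refine hest ξ T5 (τStar T5) hT3ξ hξ2 (fun s hs => ?_) hIξT5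
      (hpos _ (le_trans hT1T3 hT3a)).le
    · -- x (τStar T5) ≤ x (τStar s) for ξ ≤ s ≤ T5
      have hst0 : t0 ≤ s := le_trans ht0ξ hs.1
      have hτs : τStar s ≤ τStar T5 := hτStar_mono (Set.mem_Ici.2 hst0)
        (Set.mem_Ici.2 ht0T5) hs.2
      have hτsT2 : T2 ≤ τStar s := (hT3 s (le_trans hT3ξ hs.1)).2
      exact hanti (Set.mem_Ici.2 hτsT2)
        (Set.mem_Ici.2 (le_trans hT2T3 hT3a)) hτs
  -- second estimate : c/2 * x (τStar ξ) ≤ x (τStar T5)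
  have he2 : c / 2 * x (τStar ξ) ≤ x (τStar T5) := by
    refine hest (τStar T5) ξ (τStar ξ) hT3a hξ1 (fun s hs => ?_) (le_of_eq hξval.symm)
      (hpos _ (le_trans hT1T2 (hT3 ξ hT3ξ).2)).le
    · have hst0 : t0 ≤ s := le_trans ht0a hs.1
      have hτs : τStar s ≤ τStar ξ := hτStar_mono (Set.mem_Ici.2 hst0)
        (Set.mem_Ici.2 ht0ξ) hs.2
      have hτsT2 : T2 ≤ τStar s := by
        rcases lt_or_ge s T3 with h | h
        · -- s ≥ τStar T5 ≥ T3, so this case is impossible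
          exact absurd (le_trans hT3a hs.1) (not_le.2 h)
        · exact (hT3 s h).2
      exact hanti (Set.mem_Ici.2 hτsT2) (Set.mem_Ici.2 (hT3 ξ hT3ξ).2) hτs
  -- ratio estimate at ξ
  have he3 : (Real.exp 1 * c) ^ n * x ξ ≤ x (τStar ξ) :=
    hratio ξ (le_trans hST5 hξ1)
  have hxξ : 0 < x ξ := hpos ξ hT1ξ
  -- combine
  have k1 : 4 / c ^ 2 * x ξ < x (τStar ξ) :=
    lt_of_lt_of_le (mul_lt_mul_of_pos_right hn hxξ) he3
  have k2 : c / 2 * (4 / c ^ 2 * x ξ) < x (τStar T5) :=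
    lt_of_lt_of_le (mul_lt_mul_of_pos_left k1 (by linarith)) he2
  have k3 : c / 2 * (c / 2 * (4 / c ^ 2 * x ξ)) < x ξ :=
    lt_of_lt_of_le (mul_lt_mul_of_pos_left k2 (by linarith)) he1
  have keq : c / 2 * (c / 2 * (4 / c ^ 2 * x ξ)) = x ξ := by
    field_simp
    ring
  rw [keq] at k3
  exact lt_irrefl _ k3

/-- **(Fukagai–Kusano, 1984, oscillation part.)** Suppose there exists a continuous
non-decreasing function `τ⋆` with `τ i t ≤ τ⋆ t ≤ t` for all `i` and
`liminf_{t→∞} ∫_{τ⋆ t}^{t} ∑ i, p i > 1/e`. Then every solution of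
`x'(t) + ∑ i, p i t * x (τ i t) = 0` is oscillatory. -/
theorem oscillation_fukagai_kusano
    (m : ℕ) (hm : 1 ≤ m) (t0 : ℝ)
    (p τ : Fin m → ℝ → ℝ)
    (hp_cont : ∀ i, ContinuousOn (p i) (Set.Ici t0))
    (hp_nonneg : ∀ i t, t0 ≤ t → 0 ≤ p i t)
    (hτ_cont : ∀ i, ContinuousOn (τ i) (Set.Ici t0))
    (hτ_nonneg : ∀ i t, t0 ≤ t → 0 ≤ τ i t)
    (hτ_le : ∀ i t, t0 ≤ t → τ i t ≤ t)
    (hτ_tendsto : ∀ i, Tendsto (τ i) atTop atTop)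
    (τStar : ℝ → ℝ)
    (hτStar_cont : ContinuousOn τStar (Set.Ici t0))
    (hτStar_mono : MonotoneOn τStar (Set.Ici t0))
    (hτStar_ge : ∀ i t, t0 ≤ t → τ i t ≤ τStar t)
    (hτStar_le : ∀ t, t0 ≤ t → τStar t ≤ t)
    (hliminf : Filter.liminf
      (fun t : ℝ => ∫ s in τStar t..t, ∑ i : Fin m, p i s) atTop >
      1 / Real.exp 1)
    (x : ℝ → ℝ) (hx_cont : Continuous x)
    (hx_sol : ∃ T, t0 ≤ T ∧ ∀ t, T ≤ t →
      HasDerivAt x (-(∑ i : Fin m, p i t * x (τ i t))) t) :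
    ∀ T : ℝ, ∃ t, T ≤ t ∧ x t = 0 := by
  intro T
  by_contra hcon
  push_neg at hcon
  obtain ⟨Ts, hTs0, hsol⟩ := hx_sol
  set T1 := max T Ts with hT1def
  have hT1t0 : t0 ≤ T1 := le_trans hTs0 (le_max_right _ _)
  have hne : ∀ t, T1 ≤ t → x t ≠ 0 :=
    fun t ht => hcon t (le_trans (le_max_left _ _) ht)
  have hsol' : ∀ t, T1 ≤ t → HasDerivAt x (-(∑ i : Fin m, p i t * x (τ i t))) t :=
    fun t ht => hsol t (le_trans (le_max_right _ _) ht)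
  have hsign : (∀ t, T1 ≤ t → 0 < x t) ∨ (∀ t, T1 ≤ t → x t < 0) := by
    rcases lt_trichotomy (x T1) 0 with h | h | h
    · right
      intro t ht
      by_contra hge
      push_neg at hge
      have hxt : 0 < x t := lt_of_le_of_ne hge (Ne.symm (hne t ht))
      have hmem : (0:ℝ) ∈ Set.Icc (x T1) (x t) := ⟨h.le, hxt.le⟩
      obtain ⟨s, hs, hxs⟩ := intermediate_value_Icc ht hx_cont.continuousOn hmem
      exact hne s hs.1 hxs
    · exact absurd h (hne T1 le_rfl)
    · left
      intro t ht
      by_contra hge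
      push_neg at hge
      have hxt : x t < 0 := lt_of_le_of_ne hge (hne t ht)
      have hmem : (0:ℝ) ∈ Set.Icc (x t) (x T1) := ⟨hxt.le, h.le⟩
      obtain ⟨s, hs, hxs⟩ := intermediate_value_Icc' ht hx_cont.continuousOn hmem
      exact hne s hs.1 hxs
  rcases hsign with hp | hn
  · exact fk_core m hm t0 p τ hp_cont hp_nonneg hτ_cont hτ_tendsto τStar hτStar_cont
      hτStar_mono hτStar_ge hτStar_le hliminf x hx_cont T1 hT1t0 hsol' hp
  · refine fk_core m hm t0 p τ hp_cont hp_nonneg hτ_cont hτ_tendsto τStar hτStar_cont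
      hτStar_mono hτStar_ge hτStar_le hliminf (fun u => -x u) hx_cont.neg T1 hT1t0
      (fun t ht => ?_) (fun t ht => by simpa using neg_pos.2 (hn t ht))
    have h := (hsol' t ht).neg
    exact h.congr_deriv (by simp [mul_neg, Finset.sum_neg_distrib])
end

section
/- Suppose there exists a continuous non-decreasing function τ_* : [t_0,∞) → ℝ such that τ_*(t) ≤ τ_i(t) for all t ≥ t_0 and each i = 1,…,m, τ_*(t) → ∞ as t → ∞, and ∫_{τ_*(t)}^{t} ∑_{i=1}^m p_i(s) ds ≤ 1/e for all sufficiently large t. Then the equation x'(t) + ∑_{i=1}^m p_i(t) x(τ_i(t)) = 0 has a nonoscillatory solution. -/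
open Real Filter MeasureTheory

open Set Topology

private lemma FK_cover (x y Teq : ℝ) :
    Set.Ioc x y = Set.Ioc x (min y Teq) ∪ Set.Ioc (max x Teq) y := by
  rw [← Set.Ioc_inter_Iic, ← Set.Ioc_inter_Ioi, ← Set.inter_union_distrib_left,
    Set.Iic_union_Ioi, Set.inter_univ]

private lemma FK_aesm {Teq : ℝ} {f : ℝ → ℝ}
    (hzero : ∀ t, t ≤ Teq → f t = 0)
    (hcont : ContinuousOn f (Set.Ioi Teq)) :
    ∀ x y : ℝ, AEStronglyMeasurable f (MeasureTheory.volume.restrict (Set.Ioc x y)) := by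
  intro x y
  rw [FK_cover x y Teq, aestronglyMeasurable_union_iff]
  constructor
  · refine (aestronglyMeasurable_const (b := (0:ℝ))).congr ?_
    refine ae_restrict_of_forall_mem measurableSet_Ioc fun z hz => ?_
    exact (hzero z (hz.2.trans (min_le_right _ _))).symm
  · exact (hcont.mono (fun z hz => lt_of_le_of_lt (le_max_right x Teq) hz.1)).aestronglyMeasurable
      measurableSet_Ioc

private lemma FK_integrable {Teq E : ℝ} {P f : ℝ → ℝ}
    (hPc : ContinuousOn P (Set.Ici Teq))
    (hmeas : ∀ x y : ℝ, AEStronglyMeasurable f (MeasureTheory.volume.restrict (Set.Ioc x y)))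
    (hzero : ∀ t, t ≤ Teq → f t = 0)
    (hnn : ∀ t, 0 ≤ f t)
    (hub : ∀ t, Teq ≤ t → f t ≤ E * P t) :
    ∀ a b : ℝ, IntervalIntegrable f MeasureTheory.volume a b := by
  have key : ∀ x y : ℝ, IntegrableOn f (Set.Ioc x y) MeasureTheory.volume := by
    intro x y
    rw [FK_cover x y Teq]
    apply MeasureTheory.IntegrableOn.union
    · refine (integrableOn_zero (ε' := ℝ)).congr_fun
        (fun z hz => (hzero z (hz.2.trans (min_le_right _ _))).symm) measurableSet_Ioc
    · obtain ⟨C, hC⟩ := (isCompact_Icc (a := Teq) (b := max y Teq)).exists_bound_of_continuousOn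
        (continuousOn_const.mul (hPc.mono (fun z hz => hz.1)) : ContinuousOn (fun t => E * P t) _)
      have hconst : MeasureTheory.Integrable (fun _ : ℝ => C)
          (MeasureTheory.volume.restrict (Set.Ioc (max x Teq) y)) :=
        MeasureTheory.integrableOn_const measure_Ioc_lt_top.ne
      refine hconst.mono' (hmeas _ _) ?_
      refine ae_restrict_of_forall_mem measurableSet_Ioc fun z hz => ?_
      have hz1 : Teq ≤ z := le_of_lt (lt_of_le_of_lt (le_max_right x Teq) hz.1)
      have hz2 : z ∈ Set.Icc Teq (max y Teq) := ⟨hz1, le_trans hz.2 (le_max_left _ _)⟩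
      rw [Real.norm_eq_abs, abs_of_nonneg (hnn z)]
      calc f z ≤ E * P z := hub z hz1
        _ ≤ ‖E * P z‖ := le_abs_self _
        _ ≤ C := hC z hz2
  exact fun a b => ⟨key a b, key b a⟩

/-- **(Fukagai–Kusano, 1984, nonoscillation part.)** Suppose there exists a
continuous non-decreasing function `τ⁎` with `τ⁎ t ≤ τ i t` for all `i`,
`τ⁎ t → ∞`, and `∫_{τ⁎ t}^{t} ∑ i, p i ≤ 1/e` for all sufficiently large `t`.
Then `x'(t) + ∑ i, p i t * x (τ i t) = 0` has a nonoscillatory solution. -/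
theorem nonoscillatory_solution_fukagai_kusano
    (m : ℕ) (hm : 1 ≤ m) (t0 : ℝ)
    (p τ : Fin m → ℝ → ℝ)
    (hp_cont : ∀ i, ContinuousOn (p i) (Set.Ici t0))
    (hp_nonneg : ∀ i t, t0 ≤ t → 0 ≤ p i t)
    (hτ_cont : ∀ i, ContinuousOn (τ i) (Set.Ici t0))
    (hτ_nonneg : ∀ i t, t0 ≤ t → 0 ≤ τ i t)
    (hτ_le : ∀ i t, t0 ≤ t → τ i t ≤ t)
    (hτ_tendsto : ∀ i, Tendsto (τ i) atTop atTop)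
    (τLow : ℝ → ℝ)
    (hτLow_cont : ContinuousOn τLow (Set.Ici t0))
    (hτLow_mono : MonotoneOn τLow (Set.Ici t0))
    (hτLow_le : ∀ i t, t0 ≤ t → τLow t ≤ τ i t)
    (hτLow_tendsto : Tendsto τLow atTop atTop)
    (hbound : ∃ T, t0 ≤ T ∧ ∀ t, T ≤ t →
      (∫ s in τLow t..t, ∑ i : Fin m, p i s) ≤ 1 / Real.exp 1) :
    ∃ x : ℝ → ℝ, Continuous x ∧
      (∃ T, t0 ≤ T ∧ ∀ t, T ≤ t →
        HasDerivAt x (-(∑ i : Fin m, p i t * x (τ i t))) t) ∧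
      (∃ T, ∀ t, T ≤ t → x t ≠ 0) := by
  classical
  obtain ⟨T, hT0, hTb⟩ := hbound
  obtain ⟨T2, hT2⟩ := eventually_atTop.1 (hτLow_tendsto.eventually_ge_atTop t0)
  set Teq : ℝ := max (max T t0) T2 with hTeqdef
  have hTeqT : T ≤ Teq := (le_max_left T t0).trans (le_max_left _ _)
  have hTeq0 : t0 ≤ Teq := (le_max_right T t0).trans (le_max_left _ _)
  have hTeq2 : T2 ≤ Teq := le_max_right _ _
  set E : ℝ := Real.exp 1 with hEdef
  have hE0 : 0 < E := Real.exp_pos 1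
  set P : ℝ → ℝ := fun t => ∑ i, p i t with hPdef
  have hPc : ContinuousOn P (Set.Ici t0) := continuousOn_finset_sum _ fun i _ => hp_cont i
  have hPcTeq : ContinuousOn P (Set.Ici Teq) := hPc.mono (Set.Ici_subset_Ici.2 hTeq0)
  have hPnn : ∀ t, t0 ≤ t → 0 ≤ P t := fun t ht => Finset.sum_nonneg fun i _ => hp_nonneg i t ht
  have hsub0 : Set.Ioi Teq ⊆ Set.Ici t0 := fun z hz => hTeq0.trans (le_of_lt hz)
  have hPint : ∀ a b, t0 ≤ a → t0 ≤ b → IntervalIntegrable P MeasureTheory.volume a b := by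
    intro a b ha hb
    exact (hPc.mono (fun z hz => le_trans (le_min ha hb) hz.1)).intervalIntegrable
  have hTb' : ∀ t, T ≤ t → (∫ s in τLow t..t, P s) ≤ 1 / E := fun t ht => hTb t ht
  -- notation: c i t := max (τ i t) Teq
  have hc_ge : ∀ (i : Fin m) t, Teq ≤ max (τ i t) Teq := fun i t => le_max_right _ _
  have hc_ge0 : ∀ (i : Fin m) t, t0 ≤ max (τ i t) Teq := fun i t => hTeq0.trans (hc_ge i t)
  have hc_le : ∀ (i : Fin m) t, Teq ≤ t → max (τ i t) Teq ≤ t :=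
    fun i t ht => max_le (hτ_le i t (hTeq0.trans ht)) ht
  -- the crucial bound on the integral of P
  have hIb : ∀ (i : Fin m) t, Teq ≤ t → (∫ s in max (τ i t) Teq..t, P s) ≤ 1 / E := by
    intro i t ht
    have ht0 : t0 ≤ t := hTeq0.trans ht
    have hτl : t0 ≤ τLow t := hT2 t (hTeq2.trans ht)
    have h1 : τLow t ≤ max (τ i t) Teq := le_trans (hτLow_le i t ht0) (le_max_left _ _)
    have hsplit : (∫ s in τLow t..max (τ i t) Teq, P s) + (∫ s in max (τ i t) Teq..t, P s)
        = ∫ s in τLow t..t, P s :=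
      intervalIntegral.integral_add_adjacent_intervals (hPint _ _ hτl (hc_ge0 i t))
        (hPint _ _ (hc_ge0 i t) ht0)
    have hpos : 0 ≤ ∫ s in τLow t..max (τ i t) Teq, P s :=
      intervalIntegral.integral_nonneg h1 (fun s hs => hPnn s (hτl.trans hs.1))
    have := hTb' t (hTeqT.trans ht)
    linarith
  -- the iteration map and sequence
  set F : (ℝ → ℝ) → ℝ → ℝ := fun f t => if t ≤ Teq then 0 else
    ∑ i, p i t * Real.exp (∫ s in max (τ i t) Teq..t, f s) with hFdef
  set g : ℕ → ℝ → ℝ := fun n => F^[n] (fun _ => 0) with hgdef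
  have hg0 : ∀ t, g 0 t = 0 := fun t => rfl
  have hgs : ∀ n, g (n + 1) = F (g n) := fun n => Function.iterate_succ_apply' F n _
  -- the invariant
  have Inv : ∀ n, (∀ t, t ≤ Teq → g n t = 0) ∧ ContinuousOn (g n) (Set.Ioi Teq) ∧
      (∀ t, 0 ≤ g n t) ∧ (∀ t, Teq ≤ t → g n t ≤ E * P t) := by
    intro n
    induction n with
    | zero =>
      exact ⟨fun _ _ => rfl, continuousOn_const, fun _ => le_rfl,
        fun t ht => mul_nonneg hE0.le (hPnn t (hTeq0.trans ht))⟩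
    | succ n ih =>
      obtain ⟨hz, hcont, hnn, hub⟩ := ih
      have hint : ∀ a b, IntervalIntegrable (g n) MeasureTheory.volume a b :=
        FK_integrable hPcTeq (FK_aesm hz hcont) hz hnn hub
      rw [hgs n]
      have hFz : ∀ t, t ≤ Teq → F (g n) t = 0 := by
        intro t ht; simp only [hFdef]; rw [if_pos ht]
      have hFval : ∀ t, Teq < t →
          F (g n) t = ∑ i, p i t * Real.exp (∫ s in max (τ i t) Teq..t, g n s) := by
        intro t ht; simp only [hFdef]; rw [if_neg (not_le.2 ht)]
      have hFnn : ∀ t, 0 ≤ F (g n) t := by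
        intro t
        rcases le_or_gt t Teq with h | h
        · rw [hFz t h]
        · rw [hFval t h]
          exact Finset.sum_nonneg fun i _ =>
            mul_nonneg (hp_nonneg i t (hTeq0.trans h.le)) (Real.exp_pos _).le
      refine ⟨hFz, ?_, hFnn, ?_⟩
      · -- continuity on Ioi Teq
        have hGc : Continuous fun u => ∫ s in Teq..u, g n s :=
          intervalIntegral.continuous_primitive hint Teq
        have hkey : ∀ i : Fin m,
            ContinuousOn (fun t => ∫ s in max (τ i t) Teq..t, g n s) (Set.Ioi Teq) := by
          intro i
          have hτi : ContinuousOn (fun t => max (τ i t) Teq) (Set.Ioi Teq) :=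
            ((hτ_cont i).mono hsub0).sup continuousOn_const
          have h1 : ContinuousOn
              (fun t => (∫ s in Teq..t, g n s) - ∫ s in Teq..max (τ i t) Teq, g n s)
              (Set.Ioi Teq) :=
            hGc.continuousOn.sub (hGc.comp_continuousOn hτi)
          exact h1.congr fun t _ =>
            (intervalIntegral.integral_interval_sub_left (hint Teq t) (hint Teq _)).symm
        have h2 : ContinuousOn
            (fun t => ∑ i, p i t * Real.exp (∫ s in max (τ i t) Teq..t, g n s))
            (Set.Ioi Teq) :=
          continuousOn_finset_sum _ fun i _ =>
            ((hp_cont i).mono hsub0).mul (Real.continuous_exp.comp_continuousOn (hkey i))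
        exact h2.congr fun t ht => hFval t ht
      · -- upper bound
        intro t ht
        rcases eq_or_lt_of_le ht with h | h
        · rw [hFz t h.symm.le]
          exact mul_nonneg hE0.le (hPnn t (hTeq0.trans ht))
        · have hexp : ∀ i : Fin m, (∫ s in max (τ i t) Teq..t, g n s) ≤ 1 := by
            intro i
            have hct : max (τ i t) Teq ≤ t := hc_le i t ht
            calc (∫ s in max (τ i t) Teq..t, g n s)
                ≤ ∫ s in max (τ i t) Teq..t, E * P s :=
                  intervalIntegral.integral_mono_on hct (hint _ _)
                    ((hPint _ _ (hc_ge0 i t) (hTeq0.trans ht)).const_mul E)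
                    (fun s hs => hub s (le_trans (hc_ge i t) hs.1))
              _ = E * ∫ s in max (τ i t) Teq..t, P s := intervalIntegral.integral_const_mul _ _
              _ ≤ E * (1 / E) := mul_le_mul_of_nonneg_left (hIb i t ht) hE0.le
              _ = 1 := by field_simp
          rw [hFval t h]
          calc (∑ i, p i t * Real.exp (∫ s in max (τ i t) Teq..t, g n s))
              ≤ ∑ i, p i t * E := Finset.sum_le_sum fun i _ =>
                mul_le_mul_of_nonneg_left
                  (by simpa only [hEdef] using Real.exp_le_exp.2 (hexp i))
                  (hp_nonneg i t (hTeq0.trans ht))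
            _ = E * P t := by simp only [hPdef]; rw [← Finset.sum_mul, mul_comm]
  have hint : ∀ n, ∀ a b, IntervalIntegrable (g n) MeasureTheory.volume a b := fun n =>
    FK_integrable hPcTeq (FK_aesm (Inv n).1 (Inv n).2.1) (Inv n).1 (Inv n).2.2.1 (Inv n).2.2.2
  -- monotonicity in n
  have hmono : ∀ n t, g n t ≤ g (n + 1) t := by
    intro n
    induction n with
    | zero =>
      intro t
      calc g 0 t = 0 := hg0 t
        _ ≤ g (0 + 1) t := (Inv 1).2.2.1 t
    | succ n ih =>
      intro t
      rcases le_or_gt t Teq with h | h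
      · rw [(Inv (n+1)).1 t h, (Inv (n+1+1)).1 t h]
      · rw [hgs n, hgs (n+1)]
        simp only [hFdef]
        rw [if_neg (not_le.2 h), if_neg (not_le.2 h)]
        refine Finset.sum_le_sum fun i _ => mul_le_mul_of_nonneg_left
          (Real.exp_le_exp.2 ?_) (hp_nonneg i t (hTeq0.trans h.le))
        exact intervalIntegral.integral_mono_on (hc_le i t h.le) (hint n _ _)
          (hint (n+1) _ _) (fun s _ => ih s)
  have hmono' : ∀ t, Monotone fun n => g n t := fun t =>
    monotone_nat_of_le_succ fun n => hmono n t
  -- the limit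
  set lam : ℝ → ℝ := fun t => ⨆ n, g n t with hlamdef
  have hbdd : ∀ t, BddAbove (Set.range fun n => g n t) := by
    intro t
    refine ⟨max 0 (E * P t), ?_⟩
    rintro v ⟨n, rfl⟩
    show g n t ≤ max 0 (E * P t)
    rcases le_or_gt t Teq with h | h
    · rw [(Inv n).1 t h]; exact le_max_left _ _
    · exact le_trans ((Inv n).2.2.2 t h.le) (le_max_right _ _)
  have htend : ∀ t, Tendsto (fun n => g n t) atTop (𝓝 (lam t)) := fun t =>
    tendsto_atTop_ciSup (hmono' t) (hbdd t)
  have hlam_zero : ∀ t, t ≤ Teq → lam t = 0 := by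
    intro t ht
    have h : (fun n : ℕ => g n t) = fun _ => (0:ℝ) := funext fun n => (Inv n).1 t ht
    rw [hlamdef]; simp only []
    rw [show (⨆ n, g n t) = ⨆ _ : ℕ, (0:ℝ) from by rw [h]]
    exact ciSup_const
  have hlam_nn : ∀ t, 0 ≤ lam t := by
    intro t
    have := le_ciSup (hbdd t) 0
    rwa [hg0 t] at this
  have hlam_ub : ∀ t, Teq ≤ t → lam t ≤ E * P t := fun t ht =>
    ciSup_le fun n => (Inv n).2.2.2 t ht
  have hlam_meas : ∀ x y : ℝ,
      AEStronglyMeasurable lam (MeasureTheory.volume.restrict (Set.Ioc x y)) := fun x y =>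
    aestronglyMeasurable_of_tendsto_ae atTop (fun n => FK_aesm (Inv n).1 (Inv n).2.1 x y)
      (Eventually.of_forall fun t => htend t)
  have hlam_int : ∀ a b, IntervalIntegrable lam MeasureTheory.volume a b :=
    FK_integrable hPcTeq hlam_meas hlam_zero hlam_nn hlam_ub
  -- fixed point equation
  have hfix : ∀ t, Teq < t →
      lam t = ∑ i, p i t * Real.exp (∫ s in max (τ i t) Teq..t, lam s) := by
    intro t ht
    have ht0 : t0 ≤ t := hTeq0.trans ht.le
    have h1 : Tendsto (fun n => g (n + 1) t) atTop (𝓝 (lam t)) :=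
      (htend t).comp (tendsto_add_atTop_nat 1)
    have h2 : Tendsto (fun n => ∑ i, p i t * Real.exp (∫ s in max (τ i t) Teq..t, g n s))
        atTop (𝓝 (∑ i, p i t * Real.exp (∫ s in max (τ i t) Teq..t, lam s))) := by
      refine tendsto_finset_sum _ fun i _ => Tendsto.const_mul _ ?_
      refine Filter.Tendsto.rexp ?_
      refine intervalIntegral.tendsto_integral_filter_of_dominated_convergence
        (fun s => E * P s) ?_ ?_ ?_ ?_
      · exact Eventually.of_forall fun n => by
          have := FK_aesm (Inv n).1 (Inv n).2.1 (min (max (τ i t) Teq) t) (max (max (τ i t) Teq) t)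
          rwa [show Set.Ioc (min (max (τ i t) Teq) t) (max (max (τ i t) Teq) t)
            = Set.uIoc (max (τ i t) Teq) t from rfl] at this
      · refine Eventually.of_forall fun n => Eventually.of_forall fun s hs => ?_
        have hs' : Teq < s := by
          have h1 : min (max (τ i t) Teq) t = max (τ i t) Teq :=
            min_eq_left (hc_le i t ht.le)
          have := hs.1
          rw [Set.uIoc, h1] at hs
          exact lt_of_le_of_lt (hc_ge i t) hs.1
        rw [Real.norm_eq_abs, abs_of_nonneg ((Inv n).2.2.1 s)]
        exact (Inv n).2.2.2 s hs'.le
      · exact (hPint _ _ (hc_ge0 i t) ht0).const_mul E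
      · exact Eventually.of_forall fun s _ => htend s
    have heq : (fun n => g (n + 1) t)
        = fun n => ∑ i, p i t * Real.exp (∫ s in max (τ i t) Teq..t, g n s) := by
      funext n
      rw [hgs n]
      simp only [hFdef]
      rw [if_neg (not_le.2 ht)]
    rw [heq] at h1
    exact tendsto_nhds_unique h1 h2
  -- continuity of lam on (Teq, ∞)
  have hGc : Continuous fun u => ∫ s in Teq..u, lam s :=
    intervalIntegral.continuous_primitive hlam_int Teq
  have hlam_cont : ContinuousOn lam (Set.Ioi Teq) := by
    have hkey : ∀ i : Fin m,
        ContinuousOn (fun t => ∫ s in max (τ i t) Teq..t, lam s) (Set.Ioi Teq) := by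
      intro i
      have hτi : ContinuousOn (fun t => max (τ i t) Teq) (Set.Ioi Teq) :=
        ((hτ_cont i).mono hsub0).sup continuousOn_const
      have h1 : ContinuousOn
          (fun t => (∫ s in Teq..t, lam s) - ∫ s in Teq..max (τ i t) Teq, lam s)
          (Set.Ioi Teq) :=
        hGc.continuousOn.sub (hGc.comp_continuousOn hτi)
      exact h1.congr fun t _ =>
        (intervalIntegral.integral_interval_sub_left (hlam_int Teq t) (hlam_int Teq _)).symm
    have h2 : ContinuousOn
        (fun t => ∑ i, p i t * Real.exp (∫ s in max (τ i t) Teq..t, lam s)) (Set.Ioi Teq) :=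
      continuousOn_finset_sum _ fun i _ =>
        ((hp_cont i).mono hsub0).mul (Real.continuous_exp.comp_continuousOn (hkey i))
    exact h2.congr fun t ht => hfix t ht
  -- the solution
  set G : ℝ → ℝ := fun u => ∫ s in Teq..u, lam s with hGdef
  refine ⟨fun u => Real.exp (-(G u)), Real.continuous_exp.comp hGc.neg,
    ⟨Teq + 1, hTeq0.trans (by linarith), ?_⟩, ⟨0, fun t _ => Real.exp_ne_zero _⟩⟩
  intro t ht
  have ht' : Teq < t := by linarith
  have hsm : StronglyMeasurableAtFilter lam (𝓝 t) MeasureTheory.volume := by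
    refine ⟨Set.Ioo Teq (t + 1), Ioo_mem_nhds ht' (lt_add_one t), ?_⟩
    exact (hlam_meas Teq (t + 1)).mono_measure
      (Measure.restrict_mono Set.Ioo_subset_Ioc_self le_rfl)
  have hca : ContinuousAt lam t := hlam_cont.continuousAt (Ioi_mem_nhds ht')
  have hd1 : HasDerivAt G (lam t) t :=
    intervalIntegral.integral_hasDerivAt_right (hlam_int Teq t) hsm hca
  have hd2 : HasDerivAt (fun u => Real.exp (-(G u))) (Real.exp (-(G t)) * -(lam t)) t :=
    hd1.neg.exp
  have hGsplit : ∀ i : Fin m,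
      G (max (τ i t) Teq) + (∫ s in max (τ i t) Teq..t, lam s) = G t := fun i =>
    intervalIntegral.integral_add_adjacent_intervals (hlam_int _ _) (hlam_int _ _)
  have hGtau : ∀ i : Fin m, G (τ i t) = G (max (τ i t) Teq) := by
    intro i
    rcases le_or_gt Teq (τ i t) with h | h
    · rw [max_eq_left h]
    · rw [max_eq_right h.le]
      have h0 : G (τ i t) = 0 := by
        have he : Set.EqOn lam 0 (Set.uIcc Teq (τ i t)) := by
          intro s hs
          refine hlam_zero s ?_
          have := hs.2
          calc s ≤ max Teq (τ i t) := hs.2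
            _ = Teq := max_eq_left h.le
        rw [hGdef]
        simp only []
        rw [intervalIntegral.integral_congr he]
        simp
      have h0' : G Teq = 0 := intervalIntegral.integral_same
      rw [h0, h0']
  have hfinal : -(∑ i, p i t * Real.exp (-(G (τ i t)))) = Real.exp (-(G t)) * -(lam t) := by
    have hstep : ∀ i : Fin m, p i t * Real.exp (-(G (τ i t)))
        = (p i t * Real.exp (∫ s in max (τ i t) Teq..t, lam s)) * Real.exp (-(G t)) := by
      intro i
      rw [hGtau i, mul_assoc, ← Real.exp_add]
      have h := hGsplit i
      have : -(G (max (τ i t) Teq)) = (∫ s in max (τ i t) Teq..t, lam s) + -(G t) := by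
        linarith
      rw [this]
    calc -(∑ i, p i t * Real.exp (-(G (τ i t))))
        = -(∑ i, (p i t * Real.exp (∫ s in max (τ i t) Teq..t, lam s)) * Real.exp (-(G t))) := by
          rw [Finset.sum_congr rfl fun i _ => hstep i]
      _ = -((∑ i, p i t * Real.exp (∫ s in max (τ i t) Teq..t, lam s)) * Real.exp (-(G t))) := by
          rw [Finset.sum_mul]
      _ = -(lam t * Real.exp (-(G t))) := by rw [← hfix t ht']
      _ = Real.exp (-(G t)) * -(lam t) := by ring
  simpa only [hfinal] using hd2
end

section
/- Suppose each τ_i is non-decreasing, ∫_{t_0}^{∞} |p_i(t) − p_j(t)| dt < ∞ for all i, j = 1,…,m, and liminf_{t→∞} ∫_{τ_i(t)}^{t} p_i(s) ds = β_i > 0 for each i = 1,…,m. If ∑_{i=1}^m ( liminf_{t→∞} ∫_{τ_i(t)}^{t} p_i(s) ds ) > 1/e, then every solution of the equation x'(t) + ∑_{i=1}^m p_i(t) x(τ_i(t)) = 0 is oscillatory. -/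
open Real Filter MeasureTheory Set

noncomputable def gksRho {m : ℕ} (b : Fin m → ℝ) : ℕ → Fin m → ℝ
  | 0 => fun _ => 1
  | k+1 => fun i => Real.exp (b i * ∑ j, gksRho b k j)

lemma exp_ge_e_mul (u : ℝ) : Real.exp 1 * u ≤ Real.exp u := by
  have h := Real.add_one_le_exp (u - 1)
  have h2 : Real.exp 1 * ((u-1)+1) ≤ Real.exp 1 * Real.exp (u-1) :=
    mul_le_mul_of_nonneg_left h (Real.exp_pos 1).le
  calc Real.exp 1 * u = Real.exp 1 * ((u-1)+1) := by ring_nf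
    _ ≤ Real.exp 1 * Real.exp (u-1) := h2
    _ = Real.exp u := by rw [← Real.exp_add]; ring_nf

set_option maxHeartbeats 2000000 in
theorem gks_key
    (m : ℕ) (hm : 1 ≤ m) (t0 : ℝ)
    (p τ : Fin m → ℝ → ℝ)
    (hp_cont : ∀ i, ContinuousOn (p i) (Set.Ici t0))
    (hp_nonneg : ∀ i t, t0 ≤ t → 0 ≤ p i t)
    (hτ_cont : ∀ i, ContinuousOn (τ i) (Set.Ici t0))
    (hτ_le : ∀ i t, t0 ≤ t → τ i t ≤ t)
    (hτ_tendsto : ∀ i, Tendsto (τ i) atTop atTop)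
    (hτ_mono : ∀ i, MonotoneOn (τ i) (Set.Ici t0))
    (hdiff_int : ∀ i j, IntegrableOn (fun t => |p i t - p j t|) (Set.Ici t0))
    (β : Fin m → ℝ) (hβ_pos : ∀ i, 0 < β i)
    (hβ : ∀ i, Filter.liminf (fun t : ℝ => ∫ s in τ i t..t, p i s) atTop = β i)
    (hβsum : 1 / Real.exp 1 < ∑ i, β i)
    (x : ℝ → ℝ) (hx_cont : Continuous x)
    (T₁ : ℝ) (hT₁ : t0 ≤ T₁)
    (hpos : ∀ t, T₁ ≤ t → 0 < x t)
    (hder : ∀ t, T₁ ≤ t → HasDerivAt x (-(∑ i : Fin m, p i t * x (τ i t))) t) :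
    False := by
  haveI : Nonempty (Fin m) := ⟨⟨0, Nat.lt_of_lt_of_le Nat.zero_lt_one hm⟩⟩
  have hm0 : 0 < m := Nat.lt_of_lt_of_le Nat.zero_lt_one hm
  -- ε and b
  set βm := Finset.univ.inf' Finset.univ_nonempty β with hβm_def
  have hβm_pos : 0 < βm := (Finset.lt_inf'_iff _).2 fun i _ => hβ_pos i
  set ε := (1/2) * min βm ((∑ i, β i - 1/Real.exp 1) / m) with hε_def
  have hε_pos : 0 < ε := by
    have h1 : 0 < (∑ i, β i - 1/Real.exp 1) / m := by
      apply div_pos (by linarith) (by exact_mod_cast hm0)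
    positivity
  have hεβ : ∀ i, ε < β i := by
    intro i
    have h1 : ε ≤ (1/2) * βm := by
      have := min_le_left βm ((∑ i, β i - 1/Real.exp 1) / m)
      rw [hε_def]; nlinarith
    have h2 : βm ≤ β i := Finset.inf'_le _ (Finset.mem_univ i)
    nlinarith
  set b : Fin m → ℝ := fun i => β i - ε with hb_def
  have hb_pos : ∀ i, 0 < b i := fun i => by simp [hb_def]; linarith [hεβ i]
  set B := ∑ i, b i with hB_def
  have hB : 1/Real.exp 1 < B := by
    have h1 : B = (∑ i, β i) - m * ε := by
      rw [hB_def, hb_def, Finset.sum_sub_distrib]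
      simp [Finset.sum_const, Finset.card_univ, nsmul_eq_mul]
    have h2 : (m:ℝ) * ε ≤ (∑ i, β i - 1/Real.exp 1) / 2 := by
      have h3 : ε ≤ (1/2) * ((∑ i, β i - 1/Real.exp 1) / m) := by
        have := min_le_right βm ((∑ i, β i - 1/Real.exp 1) / m)
        rw [hε_def]; nlinarith
      have hmpos : (0:ℝ) < m := by exact_mod_cast hm0
      have h4 : (1/2) * ((∑ i, β i - 1/Real.exp 1) / m) * m = (∑ i, β i - 1/Real.exp 1)/2 := by
        field_simp
      nlinarith
    linarith
  have heB : 1 < Real.exp 1 * B := by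
    rw [div_lt_iff₀ (Real.exp_pos 1)] at hB; linarith [hB]
  -- continuity facts
  have hxτ_cont : ∀ i, ContinuousOn (fun s => x (τ i s)) (Ici t0) := fun i =>
    hx_cont.comp_continuousOn (hτ_cont i)
  set F : ℝ → ℝ := fun s => ∑ i, p i s * x (τ i s) with hF_def
  have hF_cont : ContinuousOn F (Ici t0) := by
    apply continuousOn_finset_sum
    intro i _
    exact (hp_cont i).mul (hxτ_cont i)
  -- integral identity
  have hIden : ∀ a c, T₁ ≤ a → a ≤ c → x a - x c = ∫ s in a..c, F s := by
    intro a c ha hac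
    have hsub : uIcc a c ⊆ Ici t0 := by
      rw [uIcc_of_le hac]
      exact fun s hs => le_trans (le_trans hT₁ ha) hs.1
    have hint : IntervalIntegrable F volume a c := (hF_cont.mono hsub).intervalIntegrable
    have h := intervalIntegral.integral_eq_sub_of_hasDerivAt (f := x) (f' := fun s => -F s)
      (fun s hs => hder s (le_trans ha ((uIcc_of_le hac ▸ hs).1))) hint.neg
    rw [intervalIntegral.integral_neg] at h
    linarith
  -- log identity
  have hlog : ∀ a c, T₁ ≤ a → a ≤ c →
      Real.log (x a) - Real.log (x c) = ∫ s in a..c, F s / x s := by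
    intro a c ha hac
    have hsub : uIcc a c ⊆ Ici t0 := by
      rw [uIcc_of_le hac]; exact fun s hs => le_trans (le_trans hT₁ ha) hs.1
    have hsub1 : uIcc a c ⊆ Ici T₁ := by
      rw [uIcc_of_le hac]; exact fun s hs => le_trans ha hs.1
    have hcont : ContinuousOn (fun s => -(F s / x s)) (uIcc a c) := by
      apply ContinuousOn.neg
      exact (hF_cont.mono hsub).div hx_cont.continuousOn
        (fun s hs => (hpos s (hsub1 hs)).ne')
    have h := intervalIntegral.integral_eq_sub_of_hasDerivAt
      (f := fun s => Real.log (x s)) (f' := fun s => -(F s / x s))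
      (fun s hs => by
        have hs1 : T₁ ≤ s := hsub1 hs
        have h2 := (hder s hs1).log (hpos s hs1).ne'
        have h3 : (-(∑ i, p i s * x (τ i s))) / x s = -(F s / x s) := by
          rw [neg_div]
        rwa [h3] at h2)
      hcont.intervalIntegrable
    rw [intervalIntegral.integral_neg] at h
    linarith
  -- eventual integral lower bounds
  have hA : ∀ i j : Fin m, ∀ᶠ t in atTop, β i - ε ≤ ∫ s in τ i t..t, p j s := by
    intro i j
    have habs_cont : ContinuousOn (fun s => |p i s - p j s|) (Ici t0) :=
      ((hp_cont i).sub (hp_cont j)).abs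
    have hIoi : IntegrableOn (fun s => |p i s - p j s|) (Ioi t0) :=
      (hdiff_int i j).mono_set Ioi_subset_Ici_self
    have hprim : Tendsto (fun u : ℝ => ∫ s in t0..u, |p i s - p j s|) atTop
        (nhds (∫ s in Ioi t0, |p i s - p j s|)) :=
      intervalIntegral_tendsto_integral_Ioi t0 hIoi tendsto_id
    have hcomp : Tendsto (fun t : ℝ => ∫ s in t0..(τ i t), |p i s - p j s|) atTop
        (nhds (∫ s in Ioi t0, |p i s - p j s|)) := hprim.comp (hτ_tendsto i)
    have hdiff0 : Tendsto (fun t : ℝ => (∫ s in t0..t, |p i s - p j s|)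
        - ∫ s in t0..(τ i t), |p i s - p j s|) atTop (nhds 0) := by
      simpa using hprim.sub hcomp
    have h1 : ∀ᶠ t : ℝ in atTop, (∫ s in t0..t, |p i s - p j s|)
        - (∫ s in t0..(τ i t), |p i s - p j s|) ≤ ε/2 :=
      hdiff0.eventually (eventually_le_nhds (by linarith))
    have hbdd : IsBoundedUnder (· ≥ ·) atTop (fun t : ℝ => ∫ s in τ i t..t, p i s) := by
      refine ⟨0, eventually_map.2 ?_⟩
      filter_upwards [(hτ_tendsto i).eventually_ge_atTop t0, eventually_ge_atTop t0]
        with t ha1 ha2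
      exact intervalIntegral.integral_nonneg (hτ_le i t ha2)
        (fun s hs => hp_nonneg i s (le_trans ha1 hs.1))
    have h2 : ∀ᶠ t : ℝ in atTop, β i - ε/2 < ∫ s in τ i t..t, p i s :=
      eventually_lt_of_lt_liminf (by rw [hβ i]; linarith) hbdd
    filter_upwards [h1, h2, (hτ_tendsto i).eventually_ge_atTop t0, eventually_ge_atTop t0]
      with t ht1 ht2 ht3 ht4
    have htt : τ i t ≤ t := hτ_le i t ht4
    have hsub : uIcc (τ i t) t ⊆ Ici t0 := by
      rw [uIcc_of_le htt]; exact fun s hs => le_trans ht3 hs.1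
    have hsub' : uIcc t0 (τ i t) ⊆ Ici t0 := by
      rw [uIcc_of_le ht3]; exact fun s hs => hs.1
    have hint_abs : IntervalIntegrable (fun s => |p i s - p j s|) volume (τ i t) t :=
      (habs_cont.mono hsub).intervalIntegrable
    have hint_abs' : IntervalIntegrable (fun s => |p i s - p j s|) volume t0 (τ i t) :=
      (habs_cont.mono hsub').intervalIntegrable
    have hint_i : IntervalIntegrable (p i) volume (τ i t) t :=
      ((hp_cont i).mono hsub).intervalIntegrable
    have hint_j : IntervalIntegrable (p j) volume (τ i t) t :=
      ((hp_cont j).mono hsub).intervalIntegrable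
    have h3 : (∫ s in τ i t..t, |p i s - p j s|)
        = (∫ s in t0..t, |p i s - p j s|) - ∫ s in t0..(τ i t), |p i s - p j s| := by
      rw [← intervalIntegral.integral_add_adjacent_intervals hint_abs' hint_abs]
      ring
    have h4 : (∫ s in τ i t..t, (p i s - |p i s - p j s|)) ≤ ∫ s in τ i t..t, p j s := by
      apply intervalIntegral.integral_mono_on htt (hint_i.sub hint_abs) hint_j
      intro s _
      have := le_abs_self (p i s - p j s)
      linarith
    have h5 : (∫ s in τ i t..t, (p i s - |p i s - p j s|))
        = (∫ s in τ i t..t, p i s) - ∫ s in τ i t..t, |p i s - p j s| :=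
      intervalIntegral.integral_sub hint_i hint_abs
    rw [h5, h3] at h4
    linarith
  have hGood : ∀ᶠ t in atTop, (T₁ ≤ t ∧ (∀ i, T₁ ≤ τ i t) ∧
      ∀ i, ∀ j, β i - ε ≤ ∫ s in τ i t..t, p j s) := by
    refine (eventually_ge_atTop T₁).and (Filter.Eventually.and ?_ ?_)
    · exact eventually_all.2 fun i => (hτ_tendsto i).eventually_ge_atTop T₁
    · exact eventually_all.2 fun i => eventually_all.2 fun j => hA i j
  obtain ⟨S₀', hS₀'⟩ := eventually_atTop.1 hGood
  set S₀ := max S₀' T₁ with hS₀_def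
  have hS₀T₁ : T₁ ≤ S₀ := le_max_right _ _
  have hGoodS : ∀ t, S₀ ≤ t → (T₁ ≤ t ∧ (∀ i, T₁ ≤ τ i t) ∧
      ∀ i, ∀ j, β i - ε ≤ ∫ s in τ i t..t, p j s) :=
    fun t ht => hS₀' t (le_trans (le_max_left _ _) ht)
  -- monotonicity
  have hFnn : ∀ s, S₀ ≤ s → 0 ≤ F s := by
    intro s hs
    obtain ⟨h1, h2, _⟩ := hGoodS s hs
    exact Finset.sum_nonneg fun i _ =>
      mul_nonneg (hp_nonneg i s (le_trans hT₁ h1)) (hpos _ (h2 i)).le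
  have hmono : ∀ a c, S₀ ≤ a → a ≤ c → x c ≤ x a := by
    intro a c ha hac
    have h := hIden a c (le_trans hS₀T₁ ha) hac
    have h0 : 0 ≤ ∫ s in a..c, F s :=
      intervalIntegral.integral_nonneg hac (fun s hs => hFnn s (le_trans ha hs.1))
    linarith
  obtain ⟨S₁', hS₁'⟩ := eventually_atTop.1
    (eventually_all.2 fun i => (hτ_tendsto i).eventually_ge_atTop S₀)
  set S₁ := max S₁' S₀ with hS₁_def
  have hS₁S₀ : S₀ ≤ S₁ := le_max_right _ _
  have hS₁τ : ∀ t, S₁ ≤ t → ∀ i, S₀ ≤ τ i t :=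
    fun t ht => hS₁' t (le_trans (le_max_left _ _) ht)
  -- rho sequence facts
  have hρ_pos : ∀ k (i : Fin m), 0 < gksRho b k i := by
    intro k i
    cases k with
    | zero => norm_num [gksRho]
    | succ n => exact Real.exp_pos _
  have hR_pos : ∀ k, 0 < ∑ j, gksRho b k j := fun k =>
    Finset.sum_pos (fun i _ => hρ_pos k i) Finset.univ_nonempty
  have hRk : ∀ k, (m:ℝ) * (Real.exp 1 * B)^k ≤ ∑ j, gksRho b k j := by
    intro k
    induction k with
    | zero => simp [gksRho]
    | succ k ih =>
      have h1 : ∀ i : Fin m, Real.exp 1 * (b i * ∑ j, gksRho b k j) ≤ gksRho b (k+1) i :=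
        fun i => exp_ge_e_mul _
      have h2 : ∑ i, Real.exp 1 * (b i * ∑ j, gksRho b k j) ≤ ∑ i, gksRho b (k+1) i :=
        Finset.sum_le_sum (fun i _ => h1 i)
      have h3 : ∑ i, Real.exp 1 * (b i * ∑ j, gksRho b k j)
          = Real.exp 1 * B * ∑ j, gksRho b k j := by
        rw [← Finset.mul_sum, ← Finset.sum_mul, ← hB_def]; ring
      have h4 : (Real.exp 1 * B) * ((m:ℝ) * (Real.exp 1 * B)^k)
          ≤ (Real.exp 1 * B) * ∑ j, gksRho b k j :=
        mul_le_mul_of_nonneg_left ih (by positivity)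
      calc (m:ℝ) * (Real.exp 1 * B)^(k+1)
          = (Real.exp 1 * B) * ((m:ℝ) * (Real.exp 1 * B)^k) := by ring
        _ ≤ (Real.exp 1 * B) * ∑ j, gksRho b k j := h4
        _ = ∑ i, Real.exp 1 * (b i * ∑ j, gksRho b k j) := h3.symm
        _ ≤ ∑ i, gksRho b (k+1) i := h2
  -- eventual ratio lower bounds
  have hEv : ∀ k, ∀ᶠ t in atTop, ∀ i, gksRho b k i * x t ≤ x (τ i t) := by
    intro k
    induction k with
    | zero =>
      filter_upwards [eventually_ge_atTop S₁] with t ht i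
      have h1 : S₀ ≤ τ i t := hS₁τ t ht i
      have h2 : τ i t ≤ t :=
        hτ_le i t (le_trans hT₁ (le_trans hS₀T₁ (le_trans hS₁S₀ ht)))
      simpa [gksRho] using hmono (τ i t) t h1 h2
    | succ k ih =>
      obtain ⟨S, hS⟩ := eventually_atTop.1 ih
      filter_upwards [eventually_ge_atTop S₁,
        eventually_all.2 fun i => (hτ_tendsto i).eventually_ge_atTop (max S S₁)] with t ht1 ht3
      intro i
      have ht0 : t0 ≤ t := le_trans hT₁ (le_trans hS₀T₁ (le_trans hS₁S₀ ht1))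
      have hτt : τ i t ≤ t := hτ_le i t ht0
      have hτS₁ : S₁ ≤ τ i t := le_trans (le_max_right S S₁) (ht3 i)
      have hτT₁ : T₁ ≤ τ i t := le_trans hS₀T₁ (le_trans hS₁S₀ hτS₁)
      set R := ∑ j, gksRho b k j with hR_def
      have hpt : ∀ s ∈ Icc (τ i t) t, (∑ j, gksRho b k j * p j s) ≤ F s / x s := by
        intro s hs
        have hsS₀ : S₀ ≤ s := le_trans (le_trans hS₁S₀ hτS₁) hs.1
        have hsT₁ : T₁ ≤ s := le_trans hS₀T₁ hsS₀
        have hxs : 0 < x s := hpos s hsT₁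
        have hsS : S ≤ s := le_trans (le_trans (le_max_left S S₁) (ht3 i)) hs.1
        have hratio := hS s hsS
        rw [le_div_iff₀ hxs, Finset.sum_mul]
        show ∑ j, gksRho b k j * p j s * x s ≤ ∑ j, p j s * x (τ j s)
        apply Finset.sum_le_sum
        intro j _
        have hps : 0 ≤ p j s := hp_nonneg j s (le_trans hT₁ hsT₁)
        calc gksRho b k j * p j s * x s = p j s * (gksRho b k j * x s) := by ring
          _ ≤ p j s * x (τ j s) := mul_le_mul_of_nonneg_left (hratio j) hps
      have hsub : uIcc (τ i t) t ⊆ Ici t0 := by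
        rw [uIcc_of_le hτt]; exact fun s hs => le_trans (le_trans hT₁ hτT₁) hs.1
      have hsubT : uIcc (τ i t) t ⊆ Ici T₁ := by
        rw [uIcc_of_le hτt]; exact fun s hs => le_trans hτT₁ hs.1
      have hint1 : IntervalIntegrable (fun s => ∑ j, gksRho b k j * p j s) volume (τ i t) t := by
        apply ContinuousOn.intervalIntegrable
        apply continuousOn_finset_sum
        intro j _
        exact continuousOn_const.mul ((hp_cont j).mono hsub)
      have hint2 : IntervalIntegrable (fun s => F s / x s) volume (τ i t) t := by
        apply ContinuousOn.intervalIntegrable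
        exact (hF_cont.mono hsub).div hx_cont.continuousOn
          (fun s hs => (hpos s (hsubT hs)).ne')
      have hIle : (∫ s in τ i t..t, ∑ j, gksRho b k j * p j s) ≤ ∫ s in τ i t..t, F s / x s :=
        intervalIntegral.integral_mono_on hτt hint1 hint2 hpt
      have hIsum : (∫ s in τ i t..t, ∑ j, gksRho b k j * p j s)
          = ∑ j, gksRho b k j * ∫ s in τ i t..t, p j s := by
        rw [intervalIntegral.integral_finset_sum (fun j _ =>
          (ContinuousOn.intervalIntegrable (continuousOn_const.mul ((hp_cont j).mono hsub)) :
            IntervalIntegrable (fun s => gksRho b k j * p j s) volume (τ i t) t))]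
        exact Finset.sum_congr rfl fun j _ => intervalIntegral.integral_const_mul _ _
      have hlow : b i * R ≤ ∑ j, gksRho b k j * ∫ s in τ i t..t, p j s := by
        have hterm : ∀ j : Fin m, gksRho b k j * b i ≤ gksRho b k j * ∫ s in τ i t..t, p j s :=
          fun j => mul_le_mul_of_nonneg_left
            ((hGoodS t (le_trans hS₁S₀ ht1)).2.2 i j) (hρ_pos k j).le
        have heq : b i * R = ∑ j, gksRho b k j * b i := by
          rw [hR_def, Finset.mul_sum]
          exact Finset.sum_congr rfl fun j _ => mul_comm _ _
        rw [heq]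
        exact Finset.sum_le_sum fun j _ => hterm j
      have hlogle : b i * R ≤ Real.log (x (τ i t)) - Real.log (x t) := by
        rw [hlog (τ i t) t hτT₁ hτt]
        calc b i * R ≤ ∑ j, gksRho b k j * ∫ s in τ i t..t, p j s := hlow
          _ = ∫ s in τ i t..t, ∑ j, gksRho b k j * p j s := hIsum.symm
          _ ≤ ∫ s in τ i t..t, F s / x s := hIle
      have hxτ : 0 < x (τ i t) := hpos _ hτT₁
      have hxt : 0 < x t := hpos t (le_trans hS₀T₁ (le_trans hS₁S₀ ht1))
      have hexp := Real.exp_le_exp.2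
        (show b i * R + Real.log (x t) ≤ Real.log (x (τ i t)) by linarith)
      rw [Real.exp_add, Real.exp_log hxt, Real.exp_log hxτ] at hexp
      show gksRho b (k+1) i * x t ≤ x (τ i t)
      simp only [gksRho, ← hR_def]
      exact hexp
  -- choose k₀ with large rho at index 0
  set i0 : Fin m := ⟨0, hm0⟩ with hi0
  set d := b i0 with hd_def
  clear_value d
  have hd : 0 < d := by rw [hd_def]; exact hb_pos i0
  have htend : Tendsto (fun k => (Real.exp 1 * B)^k) atTop atTop :=
    tendsto_pow_atTop_atTop_of_one_lt heB
  obtain ⟨k₀, hk₀⟩ := (htend.eventually_gt_atTop ((4/d^2) / (d * m))).exists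
  have hρk₀ : 4/d^2 < gksRho b (k₀+1) i0 := by
    have h1 : d * ((m:ℝ) * (Real.exp 1 * B)^k₀) ≤ d * ∑ j, gksRho b k₀ j :=
      mul_le_mul_of_nonneg_left (hRk k₀) hd.le
    have h3 : (4/d^2) < d * ((m:ℝ) * (Real.exp 1 * B)^k₀) := by
      rw [div_lt_iff₀ (mul_pos hd (by exact_mod_cast hm0 : (0:ℝ) < m))] at hk₀
      calc (4/d^2) < (Real.exp 1 * B)^k₀ * (d * m) := hk₀
        _ = d * ((m:ℝ) * (Real.exp 1 * B)^k₀) := by ring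
    have h4 : d * ∑ j, gksRho b k₀ j ≤ Real.exp (d * ∑ j, gksRho b k₀ j) := by
      linarith [Real.add_one_le_exp (d * ∑ j, gksRho b k₀ j)]
    show (4:ℝ)/d^2 < gksRho b (k₀+1) i0
    simp only [gksRho]
    rw [← hd_def]
    linarith
  obtain ⟨S₂, hS₂⟩ := eventually_atTop.1 (hEv (k₀+1))
  set M := max S₂ S₁ with hM_def
  have hMS₁ : S₁ ≤ M := le_max_right _ _
  have hMS₂ : S₂ ≤ M := le_max_left _ _
  have hMS₀ : S₀ ≤ M := le_trans hS₁S₀ hMS₁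
  have hMT₁ : T₁ ≤ M := le_trans hS₀T₁ hMS₀
  have hMt0 : t0 ≤ M := le_trans hT₁ hMT₁
  obtain ⟨t₂, ht₂M, ht₂τ⟩ :=
    ((eventually_ge_atTop M).and ((hτ_tendsto i0).eventually_ge_atTop M)).exists
  set a₂ := τ i0 t₂ with ha₂_def
  have ht₂t0 : t0 ≤ t₂ := le_trans hMt0 ht₂M
  have ha₂M : M ≤ a₂ := ht₂τ
  have ha₂t₂ : a₂ ≤ t₂ := hτ_le i0 t₂ ht₂t0
  have hdInt : d ≤ ∫ s in a₂..t₂, p i0 s := by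
    rw [hd_def]
    exact (hGoodS t₂ (le_trans hMS₀ ht₂M)).2.2 i0 i0
  -- IVT to find t₁
  have hIcc_sub : Icc a₂ t₂ ⊆ Ici t0 := fun s hs => le_trans (le_trans hMt0 ha₂M) hs.1
  have hprim_cont : ContinuousOn (fun u => ∫ s in a₂..u, p i0 s) (Icc a₂ t₂) := by
    have h := intervalIntegral.continuousOn_primitive_interval (μ := volume) (f := p i0)
      (a := a₂) (b := t₂) ?_
    · rwa [uIcc_of_le ha₂t₂] at h
    · rw [uIcc_of_le ha₂t₂]
      exact ((hp_cont i0).mono hIcc_sub).integrableOn_Icc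
  have hf_cont : ContinuousOn (fun u => ∫ s in u..t₂, p i0 s) (Icc a₂ t₂) := by
    apply ContinuousOn.congr (continuousOn_const.sub hprim_cont)
    intro u hu
    have hsub1 : uIcc a₂ u ⊆ Ici t0 := by
      rw [uIcc_of_le hu.1]; exact fun s hs => le_trans (le_trans hMt0 ha₂M) hs.1
    have hsub2 : uIcc u t₂ ⊆ Ici t0 := by
      rw [uIcc_of_le hu.2]
      exact fun s hs => le_trans (le_trans (le_trans hMt0 ha₂M) hu.1) hs.1
    have hint1 : IntervalIntegrable (p i0) volume a₂ u :=
      ((hp_cont i0).mono hsub1).intervalIntegrable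
    have hint2 : IntervalIntegrable (p i0) volume u t₂ :=
      ((hp_cont i0).mono hsub2).intervalIntegrable
    have hadd := intervalIntegral.integral_add_adjacent_intervals hint1 hint2
    show (∫ s in u..t₂, p i0 s) = (∫ s in a₂..t₂, p i0 s) - ∫ s in a₂..u, p i0 s
    linarith
  have hmem : d/2 ∈ Icc ((fun u => ∫ s in u..t₂, p i0 s) t₂)
      ((fun u => ∫ s in u..t₂, p i0 s) a₂) := by
    constructor
    · show (∫ s in t₂..t₂, p i0 s) ≤ d/2
      rw [intervalIntegral.integral_same]; linarith
    · show d/2 ≤ ∫ s in a₂..t₂, p i0 s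
      linarith
  obtain ⟨t₁, ht₁mem, hft₁⟩ := intermediate_value_Icc' ha₂t₂ hf_cont hmem
  have ht₁a₂ : a₂ ≤ t₁ := ht₁mem.1
  have ht₁t₂ : t₁ ≤ t₂ := ht₁mem.2
  have ht₁M : M ≤ t₁ := le_trans ha₂M ht₁a₂
  have ht₁T₁ : T₁ ≤ t₁ := le_trans hMT₁ ht₁M
  have hxt₁ : 0 < x t₁ := hpos t₁ ht₁T₁
  have hxa₂ : 0 < x a₂ := hpos a₂ (le_trans hMT₁ ha₂M)
  have hxt₂ : 0 < x t₂ := hpos t₂ (le_trans hMT₁ ht₂M)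
  have hft₁' : (∫ s in t₁..t₂, p i0 s) = d/2 := hft₁
  -- (i) : (d/2) * x a₂ ≤ x t₁
  have hptw1 : ∀ s ∈ Icc t₁ t₂, p i0 s * x a₂ ≤ F s := by
    intro s hs
    have hsM : M ≤ s := le_trans ht₁M hs.1
    have hsS₀ : S₀ ≤ s := le_trans hMS₀ hsM
    have hst0 : t0 ≤ s := le_trans hMt0 hsM
    have hτs_le : τ i0 s ≤ a₂ := hτ_mono i0 (mem_Ici.2 hst0) (mem_Ici.2 ht₂t0) hs.2
    have hτsS₀ : S₀ ≤ τ i0 s := hS₁τ s (le_trans hMS₁ hsM) i0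
    have h1 : x a₂ ≤ x (τ i0 s) := hmono (τ i0 s) a₂ hτsS₀ hτs_le
    have h2 : p i0 s * x a₂ ≤ p i0 s * x (τ i0 s) :=
      mul_le_mul_of_nonneg_left h1 (hp_nonneg i0 s hst0)
    refine le_trans h2 ?_
    show p i0 s * x (τ i0 s) ≤ ∑ j, p j s * x (τ j s)
    apply Finset.single_le_sum (f := fun j => p j s * x (τ j s)) ?_ (Finset.mem_univ i0)
    intro j _
    exact mul_nonneg (hp_nonneg j s hst0)
      (hpos _ ((hGoodS s hsS₀).2.1 j)).le
  have hsubt₁t₂ : uIcc t₁ t₂ ⊆ Ici t0 := by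
    rw [uIcc_of_le ht₁t₂]; exact fun s hs => le_trans (le_trans hMt0 ht₁M) hs.1
  have hi : (d/2) * x a₂ ≤ x t₁ := by
    have hid := hIden t₁ t₂ ht₁T₁ ht₁t₂
    have hintp : IntervalIntegrable (fun s => p i0 s * x a₂) volume t₁ t₂ :=
      (((hp_cont i0).mono hsubt₁t₂).mul continuousOn_const).intervalIntegrable
    have hintF : IntervalIntegrable F volume t₁ t₂ :=
      (hF_cont.mono hsubt₁t₂).intervalIntegrable
    have h1 : (∫ s in t₁..t₂, p i0 s * x a₂) ≤ ∫ s in t₁..t₂, F s :=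
      intervalIntegral.integral_mono_on ht₁t₂ hintp hintF hptw1
    have h2 : (∫ s in t₁..t₂, p i0 s * x a₂) = (d/2) * x a₂ := by
      rw [intervalIntegral.integral_mul_const, hft₁']
    linarith
  -- (ii) : (d/2) * x (τ i0 t₁) ≤ x a₂
  have hτt₁T₁ : T₁ ≤ τ i0 t₁ :=
    le_trans hS₀T₁ (hS₁τ t₁ (le_trans hMS₁ ht₁M) i0)
  have hxτt₁ : 0 < x (τ i0 t₁) := hpos _ hτt₁T₁
  have hsuba₂t₁ : uIcc a₂ t₁ ⊆ Ici t0 := by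
    rw [uIcc_of_le ht₁a₂]; exact fun s hs => le_trans (le_trans hMt0 ha₂M) hs.1
  have hint_a₂t₁half : d/2 ≤ ∫ s in a₂..t₁, p i0 s := by
    have hint1 : IntervalIntegrable (p i0) volume a₂ t₁ :=
      ((hp_cont i0).mono hsuba₂t₁).intervalIntegrable
    have hint2 : IntervalIntegrable (p i0) volume t₁ t₂ :=
      ((hp_cont i0).mono hsubt₁t₂).intervalIntegrable
    have hadd := intervalIntegral.integral_add_adjacent_intervals hint1 hint2
    rw [hft₁'] at hadd
    linarith
  have hptw2 : ∀ s ∈ Icc a₂ t₁, p i0 s * x (τ i0 t₁) ≤ F s := by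
    intro s hs
    have hsM : M ≤ s := le_trans ha₂M hs.1
    have hsS₀ : S₀ ≤ s := le_trans hMS₀ hsM
    have hst0 : t0 ≤ s := le_trans hMt0 hsM
    have hτs_le : τ i0 s ≤ τ i0 t₁ :=
      hτ_mono i0 (mem_Ici.2 hst0) (mem_Ici.2 (le_trans hMt0 ht₁M)) hs.2
    have hτsS₀ : S₀ ≤ τ i0 s := hS₁τ s (le_trans hMS₁ hsM) i0
    have h1 : x (τ i0 t₁) ≤ x (τ i0 s) := hmono (τ i0 s) (τ i0 t₁) hτsS₀ hτs_le
    have h2 : p i0 s * x (τ i0 t₁) ≤ p i0 s * x (τ i0 s) :=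
      mul_le_mul_of_nonneg_left h1 (hp_nonneg i0 s hst0)
    refine le_trans h2 ?_
    show p i0 s * x (τ i0 s) ≤ ∑ j, p j s * x (τ j s)
    apply Finset.single_le_sum (f := fun j => p j s * x (τ j s)) ?_ (Finset.mem_univ i0)
    intro j _
    exact mul_nonneg (hp_nonneg j s hst0) (hpos _ ((hGoodS s hsS₀).2.1 j)).le
  have hii : (d/2) * x (τ i0 t₁) ≤ x a₂ := by
    have hid := hIden a₂ t₁ (le_trans hMT₁ ha₂M) ht₁a₂
    have hintp : IntervalIntegrable (fun s => p i0 s * x (τ i0 t₁)) volume a₂ t₁ :=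
      (((hp_cont i0).mono hsuba₂t₁).mul continuousOn_const).intervalIntegrable
    have hintF : IntervalIntegrable F volume a₂ t₁ :=
      (hF_cont.mono hsuba₂t₁).intervalIntegrable
    have h1 : (∫ s in a₂..t₁, p i0 s * x (τ i0 t₁)) ≤ ∫ s in a₂..t₁, F s :=
      intervalIntegral.integral_mono_on ht₁a₂ hintp hintF hptw2
    have h2 : (∫ s in a₂..t₁, p i0 s * x (τ i0 t₁))
        = (∫ s in a₂..t₁, p i0 s) * x (τ i0 t₁) :=
      intervalIntegral.integral_mul_const _ _
    have h3 : (d/2) * x (τ i0 t₁) ≤ (∫ s in a₂..t₁, p i0 s) * x (τ i0 t₁) :=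
      mul_le_mul_of_nonneg_right hint_a₂t₁half hxτt₁.le
    linarith
  -- final contradiction
  have hlow := hS₂ t₁ (le_trans hMS₂ ht₁M) i0
  have hρ' : 4 < gksRho b (k₀+1) i0 * d^2 := by
    rw [div_lt_iff₀ (pow_pos hd 2)] at hρk₀
    linarith
  have c1 : (d/2) * ((d/2) * x (τ i0 t₁)) ≤ (d/2) * x a₂ :=
    mul_le_mul_of_nonneg_left hii (by linarith : (0:ℝ) ≤ d/2)
  have c2 : (d/2) * ((d/2) * x (τ i0 t₁)) ≤ x t₁ := le_trans c1 hi
  nlinarith [mul_le_mul_of_nonneg_left hlow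
    (by positivity : (0:ℝ) ≤ d^2/4), c2, hxt₁, hρ', hd]


/-- **(Grammatikopoulos–Koplatadze–Stavroulakis, 2000.)** Suppose each `τ i` is
non-decreasing, `∫_{t₀}^{∞} |p i − p j| < ∞` for all `i, j`, and
`liminf_{t→∞} ∫_{τ i t}^{t} p i = β i > 0` for each `i`. If
`∑ i, liminf_{t→∞} ∫_{τ i t}^{t} p i > 1/e`, then every solution of
`x'(t) + ∑ i, p i t * x (τ i t) = 0` is oscillatory. -/
theorem oscillation_gks
    (m : ℕ) (hm : 1 ≤ m) (t0 : ℝ)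
    (p τ : Fin m → ℝ → ℝ)
    (hp_cont : ∀ i, ContinuousOn (p i) (Set.Ici t0))
    (hp_nonneg : ∀ i t, t0 ≤ t → 0 ≤ p i t)
    (hτ_cont : ∀ i, ContinuousOn (τ i) (Set.Ici t0))
    (hτ_nonneg : ∀ i t, t0 ≤ t → 0 ≤ τ i t)
    (hτ_le : ∀ i t, t0 ≤ t → τ i t ≤ t)
    (hτ_tendsto : ∀ i, Tendsto (τ i) atTop atTop)
    (hτ_mono : ∀ i, MonotoneOn (τ i) (Set.Ici t0))
    (hdiff_int : ∀ i j, IntegrableOn (fun t => |p i t - p j t|) (Set.Ici t0))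
    (β : Fin m → ℝ) (hβ_pos : ∀ i, 0 < β i)
    (hβ : ∀ i, Filter.liminf (fun t : ℝ => ∫ s in τ i t..t, p i s) atTop = β i)
    (hsum : (∑ i : Fin m,
      Filter.liminf (fun t : ℝ => ∫ s in τ i t..t, p i s) atTop) >
      1 / Real.exp 1)
    (x : ℝ → ℝ) (hx_cont : Continuous x)
    (hx_sol : ∃ T, t0 ≤ T ∧ ∀ t, T ≤ t →
      HasDerivAt x (-(∑ i : Fin m, p i t * x (τ i t))) t) :
    ∀ T : ℝ, ∃ t, T ≤ t ∧ x t = 0 := by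
  by_contra hcon
  push_neg at hcon
  obtain ⟨T', hT'⟩ := hcon
  obtain ⟨Ts, hTs0, hsol⟩ := hx_sol
  set T₁ := max T' Ts with hT₁def
  have hT₁t0 : t0 ≤ T₁ := le_trans hTs0 (le_max_right _ _)
  have hder : ∀ t, T₁ ≤ t → HasDerivAt x (-(∑ i, p i t * x (τ i t))) t :=
    fun t ht => hsol t (le_trans (le_max_right _ _) ht)
  have hne : ∀ t, T₁ ≤ t → x t ≠ 0 := fun t ht => hT' t (le_trans (le_max_left _ _) ht)
  have hβsum : 1 / Real.exp 1 < ∑ i, β i := by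
    rwa [Finset.sum_congr rfl (fun i _ => hβ i)] at hsum
  rcases lt_or_gt_of_ne (hne T₁ le_rfl) with hneg | hposT
  · -- eventually negative case: use y = -x
    have hposy : ∀ t, T₁ ≤ t → 0 < -x t := by
      intro t ht
      rcases lt_or_gt_of_ne (hne t ht) with h | h
      · linarith
      · exfalso
        obtain ⟨c, hcmem, hc0⟩ := intermediate_value_Icc ht hx_cont.continuousOn
          (show (0:ℝ) ∈ Icc (x T₁) (x t) from ⟨hneg.le, h.le⟩)
        exact hne c hcmem.1 hc0
    exact gks_key m hm t0 p τ hp_cont hp_nonneg hτ_cont hτ_le hτ_tendsto hτ_mono hdiff_int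
      β hβ_pos hβ hβsum (fun t => -x t) hx_cont.neg T₁ hT₁t0 hposy
      (fun t ht => by simpa [mul_neg, Finset.sum_neg_distrib] using (hder t ht).fun_neg)
  · -- eventually positive case
    have hposx : ∀ t, T₁ ≤ t → 0 < x t := by
      intro t ht
      rcases lt_or_gt_of_ne (hne t ht) with h | h
      · exfalso
        obtain ⟨c, hcmem, hc0⟩ := intermediate_value_Icc' ht hx_cont.continuousOn
          (show (0:ℝ) ∈ Icc (x t) (x T₁) from ⟨h.le, hposT.le⟩)
        exact hne c hcmem.1 hc0
      · exact h
    exact gks_key m hm t0 p τ hp_cont hp_nonneg hτ_cont hτ_le hτ_tendsto hτ_mono hdiff_int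
      β hβ_pos hβ hβsum x hx_cont T₁ hT₁t0 hposx hder
end
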